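/- arXiv:1909.05545 — 5 statements merged into one kernel-verified Lean document; each statement's English description precedes it below -/
import Mathlib

section
/- Assume the decomposition satisfies, for every n: either D̃ₙ ⊂ D_{n+1}, or (I ∩ D_{n+1} ≠ ∅ for every I ∈ ℱₙ and D̃ₙ ⊂ D̃_{n+1}). Then T_w is nowhere differentiable on [0,1] if and only if (wₙ) does not converge to 0. -/
open Filter Topology

/-- The (viscosity/Fréchet) subdifferential of `f : ℝ → ℝ`, relative to the domain `s`,
at the point `x`: the set of `c` with
`liminf_{h → 0, x + h ∈ s} (f (x + h) - f x - c * h) / |h| ≥ 0`. -/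
def subdifferentialWithin (f : ℝ → ℝ) (s : Set ℝ) (x : ℝ) : Set ℝ :=
  {c | ∀ ε > (0 : ℝ), ∀ᶠ h in 𝓝[≠] (0 : ℝ), x + h ∈ s → -ε ≤ (f (x + h) - f x - c * h) / |h|}

/-- The superdifferential `∂⁺f(x) = -∂(-f)(x)`. -/
def superdifferentialWithin (f : ℝ → ℝ) (s : Set ℝ) (x : ℝ) : Set ℝ :=
  {c | -c ∈ subdifferentialWithin (fun y => -f y) s x}

/-- The set of midpoints of the connected components of the complement of `s` (the
bounded components being the open intervals between consecutive points of `s`). -/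
def midpoints (s : Set ℝ) : Set ℝ :=
  {m | ∃ a ∈ s, ∃ b ∈ s, a < b ∧ Set.Ioo a b ∩ s = ∅ ∧ m = (a + b) / 2}

open Set Metric

noncomputable section

structure TCtx : Type where
  D : ℕ → Set ℝ
  α : ℕ → ℝ
  ρ : ℝ
  w : ℕ → ℝ
  hD0 : (0 : ℝ) ∈ D 0
  hD1 : (1 : ℝ) ∈ D 0
  hDsub : ∀ n, D n ⊆ Set.Icc 0 1
  hDfin : ∀ n, (D n).Finite
  hDmono : ∀ n, D n ⊆ D (n + 1)
  hρ0 : 0 < ρ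
  hρ1 : ρ ≤ 1
  hα : Summable α
  hgapU : ∀ n, ∀ a ∈ D n, ∀ b ∈ D n, a < b → Set.Ioo a b ∩ D n = ∅ → b - a ≤ α n
  hgapL : ∀ n, ∀ a ∈ D n, ∀ b ∈ D n, a < b → ρ * α n ≤ b - a
  hwα : Summable (fun n => |w n * α n|)
  hdec : ∀ n, midpoints (D n) ⊆ D (n + 1) ∨
      ((∀ a ∈ D n, ∀ b ∈ D n, a < b → Set.Ioo a b ∩ D n = ∅ →
          (Set.Ioo a b ∩ D (n + 1)).Nonempty) ∧
        midpoints (D n) ⊆ midpoints (D (n + 1)))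

namespace TCtx
variable (c : TCtx)

lemma mono : ∀ {m n : ℕ}, m ≤ n → c.D m ⊆ c.D n := by
  intro m n h
  induction h with
  | refl => exact fun _ h => h
  | step _ ih => exact fun z hz => c.hDmono _ (ih hz)
  
lemma zero_mem (n : ℕ) : (0:ℝ) ∈ c.D n := c.mono (Nat.zero_le n) c.hD0

lemma one_mem (n : ℕ) : (1:ℝ) ∈ c.D n := c.mono (Nat.zero_le n) c.hD1

/-- gaps -/
def IsGap (n : ℕ) (a b : ℝ) : Prop :=
  a ∈ c.D n ∧ b ∈ c.D n ∧ a < b ∧ Set.Ioo a b ∩ c.D n = ∅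

lemma IsGap.le_alpha {c : TCtx} {n a b} (h : c.IsGap n a b) : b - a ≤ c.α n :=
  c.hgapU n a h.1 b h.2.1 h.2.2.1 h.2.2.2

lemma IsGap.rho_le {c : TCtx} {n a b} (h : c.IsGap n a b) : c.ρ * c.α n ≤ b - a :=
  c.hgapL n a h.1 b h.2.1 h.2.2.1

lemma IsGap.mid_mem {c : TCtx} {n a b} (h : c.IsGap n a b) :
    (a + b) / 2 ∈ midpoints (c.D n) :=
  ⟨a, h.1, b, h.2.1, h.2.2.1, h.2.2.2, rfl⟩

/-- the gap of `D n` immediately to the right of `u`, inside `(u, v]`. -/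
lemma gap_right {n : ℕ} {u v : ℝ} (hu : u ∈ c.D n) (hv : v ∈ c.D n) (huv : u < v) :
    ∃ b', b' ≤ v ∧ c.IsGap n u b' := by
  classical
  set s : Set ℝ := c.D n ∩ Set.Ioc u v with hs
  have hsne : s.Nonempty := ⟨v, hv, huv, le_refl v⟩
  have hsf : s.Finite := (c.hDfin n).subset (inter_subset_left)
  refine ⟨sInf s, ?_, hu, ?_, ?_, ?_⟩
  · exact (hsne.csInf_mem hsf).2.2
  · exact (hsne.csInf_mem hsf).1
  · exact (hsne.csInf_mem hsf).2.1
  · ext z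
    simp only [Set.mem_inter_iff, Set.mem_Ioo, Set.mem_empty_iff_false, iff_false, not_and]
    intro hz hzD
    have : z ∈ s := ⟨hzD, hz.1, le_trans hz.2.le (hsne.csInf_mem hsf).2.2⟩
    exact absurd (csInf_le hsf.bddBelow this) (not_le.2 hz.2)

lemma gap_left {n : ℕ} {u v : ℝ} (hu : u ∈ c.D n) (hv : v ∈ c.D n) (huv : u < v) :
    ∃ a', u ≤ a' ∧ c.IsGap n a' v := by
  classical
  set s : Set ℝ := c.D n ∩ Set.Ico u v with hs
  have hsne : s.Nonempty := ⟨u, hu, le_refl u, huv⟩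
  have hsf : s.Finite := (c.hDfin n).subset (inter_subset_left)
  refine ⟨sSup s, ?_, ?_, hv, ?_, ?_⟩
  · exact (hsne.csSup_mem hsf).2.1
  · exact (hsne.csSup_mem hsf).1
  · exact (hsne.csSup_mem hsf).2.2
  · ext z
    simp only [Set.mem_inter_iff, Set.mem_Ioo, Set.mem_empty_iff_false, iff_false, not_and]
    intro hz hzD
    have : z ∈ s := ⟨hzD, le_trans (hsne.csSup_mem hsf).2.1 hz.1.le, hz.2⟩
    exact absurd (le_csSup hsf.bddAbove this) (not_le.2 hz.1)

lemma alpha_pos (n : ℕ) : 0 < c.α n := by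
  obtain ⟨b', _, hg⟩ := c.gap_right (c.zero_mem n) (c.one_mem n) one_pos
  have := hg.le_alpha
  linarith [hg.2.2.1]

/-- every gap of `D n` contains an interior point of `D (n+1)`. -/
lemma gap_split {n : ℕ} {a b : ℝ} (h : c.IsGap n a b) :
    ∃ z ∈ Set.Ioo a b, z ∈ c.D (n + 1) := by
  rcases c.hdec n with hA | hB
  · exact ⟨(a + b) / 2, ⟨by linarith [h.2.2.1], by linarith [h.2.2.1]⟩, hA h.mid_mem⟩
  · obtain ⟨z, hz1, hz2⟩ := hB.1 a h.1 b h.2.1 h.2.2.1 h.2.2.2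
    exact ⟨z, hz1, hz2⟩

lemma midpoint_persist : ∀ {k n : ℕ}, k ≤ n →
    midpoints (c.D k) ⊆ c.D n ∪ midpoints (c.D n) := by
  intro k n h
  induction h with
  | refl => exact fun q hq => Or.inr hq
  | @step m _ ih =>
    intro q hq
    rcases ih hq with hD | hM
    · exact Or.inl (c.hDmono m hD)
    · rcases c.hdec m with hA | hB
      · exact Or.inl (hA hM)
      · exact Or.inr (hB.2 hM)

lemma gap_unique {n : ℕ} {a b u v z : ℝ} (h1 : c.IsGap n a b) (h2 : c.IsGap n u v)
    (hz1 : z ∈ Set.Ioo a b) (hz2 : z ∈ Set.Ioo u v) : a = u ∧ b = v := by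
  have hau : a ≤ u ∨ u ≤ a → True := fun _ => trivial
  have h₁ : ¬ a < u ∨ ¬ u < a := by
    by_contra hcon
    push_neg at hcon
    exact absurd hcon.2 (not_lt.2 hcon.1.le)
  have hua : u ≤ a ∨ a ≤ u := by
    rcases le_total u a with h | h
    · exact Or.inl h
    · exact Or.inr h
  have key : ∀ p q r s : ℝ, c.IsGap n p q → c.IsGap n r s → z ∈ Set.Ioo p q →
      z ∈ Set.Ioo r s → p ≤ r → p = r := by
    intro p q r s hpq hrs hzpq hzrs hpr
    by_contra hne
    have hplt : p < r := lt_of_le_of_ne hpr hne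
    have : r ∈ Set.Ioo p q ∩ c.D n := ⟨⟨hplt, lt_trans hzrs.1 hzpq.2⟩, hrs.1⟩
    rw [hpq.2.2.2] at this
    exact this
  have hau' : a = u := by
    rcases le_total a u with h | h
    · exact key a b u v h1 h2 hz1 hz2 h
    · exact (key u v a b h2 h1 hz2 hz1 h).symm
  subst hau'
  have hbv : b = v := by
    have key2 : ∀ q s : ℝ, c.IsGap n a q → c.IsGap n a s → z ∈ Set.Ioo a q →
        z ∈ Set.Ioo a s → q ≤ s → q = s := by
      intro q s hpq hrs hzpq hzrs hqs
      by_contra hne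
      have hlt : q < s := lt_of_le_of_ne hqs hne
      have : q ∈ Set.Ioo a s ∩ c.D n := ⟨⟨lt_trans hzpq.1 hzpq.2, hlt⟩, hpq.2.1⟩
      rw [hrs.2.2.2] at this
      exact this
    rcases le_total b v with h | h
    · exact key2 b v h1 h2 hz1 hz2 h
    · exact (key2 v b h2 h1 hz2 hz1 h).symm
  exact ⟨rfl, hbv⟩

lemma mid_in_gap {n : ℕ} {a b q : ℝ} (hg : c.IsGap n a b) (hq : q ∈ midpoints (c.D n))
    (hmem : q ∈ Set.Ioo a b) : q = (a + b) / 2 := by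
  obtain ⟨u, hu, v, hv, huv, hgap, rfl⟩ := hq
  have hg2 : c.IsGap n u v := ⟨hu, hv, huv, hgap⟩
  have hz2 : (u + v)/2 ∈ Set.Ioo u v := ⟨by linarith, by linarith⟩
  obtain ⟨h1, h2⟩ := c.gap_unique hg hg2 hmem hz2
  rw [h1, h2]

lemma key_claim {n k : ℕ} {a b ak bk : ℝ} (hk : k ≤ n) (hg : c.IsGap n a b)
    (hgk : c.IsGap k ak bk) (hmem : (ak + bk)/2 ∈ Set.Ioo a b) :
    (ak + bk)/2 = (a + b)/2 := by
  rcases c.midpoint_persist hk hgk.mid_mem with hD | hM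
  · exfalso
    have : (ak + bk)/2 ∈ Set.Ioo a b ∩ c.D n := ⟨hmem, hD⟩
    rw [hg.2.2.2] at this
    exact this
  · exact c.mid_in_gap hg hM hmem

variable (c : TCtx)

/-- the set of gap lengths -/
def gapLen (n : ℕ) : Set ℝ := (fun p : ℝ × ℝ => p.2 - p.1) '' {p | c.IsGap n p.1 p.2}

lemma gapLen_fin (n : ℕ) : (c.gapLen n).Finite := by
  apply Set.Finite.image
  apply Set.Finite.subset (Set.Finite.prod (c.hDfin n) (c.hDfin n))
  intro p hp
  exact ⟨hp.1, hp.2.1⟩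

lemma gapLen_ne (n : ℕ) : (c.gapLen n).Nonempty := by
  obtain ⟨b', _, hg⟩ := c.gap_right (c.zero_mem n) (c.one_mem n) one_pos
  exact ⟨b' - 0, ⟨(0, b'), hg, rfl⟩⟩

def mingap (n : ℕ) : ℝ := sInf (c.gapLen n)

lemma mingap_le {n a b} (h : c.IsGap n a b) : c.mingap n ≤ b - a :=
  csInf_le (c.gapLen_fin n).bddBelow ⟨(a, b), h, rfl⟩

lemma exists_mingap (n : ℕ) : ∃ a b, c.IsGap n a b ∧ b - a = c.mingap n := by
  obtain ⟨⟨a, b⟩, h, he⟩ := (c.gapLen_ne n).csInf_mem (c.gapLen_fin n)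
  exact ⟨a, b, h, he⟩

lemma rho_alpha_le_mingap (n : ℕ) : c.ρ * c.α n ≤ c.mingap n := by
  obtain ⟨a, b, h, he⟩ := c.exists_mingap n
  rw [← he]; exact h.rho_le

lemma mingap_pos (n : ℕ) : 0 < c.mingap n :=
  lt_of_lt_of_le (mul_pos c.hρ0 (c.alpha_pos n)) (c.rho_alpha_le_mingap n)

lemma mingap_halve (n : ℕ) : c.mingap (n + 1) ≤ c.mingap n / 2 := by
  obtain ⟨a, b, h, he⟩ := c.exists_mingap n
  obtain ⟨z, hz, hzD⟩ := c.gap_split h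
  have ha' : a ∈ c.D (n+1) := c.hDmono n h.1
  have hb' : b ∈ c.D (n+1) := c.hDmono n h.2.1
  obtain ⟨b1, hb1, hg1⟩ := c.gap_right ha' hzD hz.1
  obtain ⟨a2, ha2, hg2⟩ := c.gap_left hzD hb' hz.2
  have h1 : c.mingap (n+1) ≤ b1 - a := c.mingap_le hg1
  have h2 : c.mingap (n+1) ≤ b - a2 := c.mingap_le hg2
  rw [← he]
  rcases le_total (b1 - a) (b - a2) with hc | hc
  · linarith
  · linarith

lemma mingap_decay (n k : ℕ) : c.mingap (n + k) ≤ c.mingap n / 2 ^ k := by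
  induction k with
  | zero => simp
  | succ k ih =>
    have := c.mingap_halve (n + k)
    have h2 : (0:ℝ) < 2 ^ k := by positivity
    calc c.mingap (n + (k+1)) = c.mingap ((n + k) + 1) := by ring_nf
    _ ≤ c.mingap (n + k) / 2 := this
    _ ≤ (c.mingap n / 2 ^ k) / 2 := by linarith
    _ = c.mingap n / 2 ^ (k + 1) := by ring

lemma alpha_le_mingap_div (n : ℕ) : c.α n ≤ c.mingap n / c.ρ := by
  rw [le_div_iff₀ c.hρ0, mul_comm]
  exact c.rho_alpha_le_mingap n

lemma alpha_decay (n k : ℕ) : c.α (n + k) ≤ c.α n / (c.ρ * 2 ^ k) := by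
  have h1 : c.α (n + k) ≤ c.mingap (n + k) / c.ρ := c.alpha_le_mingap_div _
  have h2 : c.mingap (n + k) ≤ c.mingap n / 2 ^ k := c.mingap_decay n k
  have h3 : c.mingap n ≤ c.α n := by
    obtain ⟨a, b, h, he⟩ := c.exists_mingap n
    rw [← he]; exact h.le_alpha
  have hρ := c.hρ0
  have h2k : (0:ℝ) < 2 ^ k := by positivity
  rw [le_div_iff₀ (by positivity)]
  rw [le_div_iff₀ hρ] at h1
  have h2' : c.mingap (n + k) * 2 ^ k ≤ c.mingap n := by
    rw [← le_div_iff₀ h2k]; exact h2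
  nlinarith
  
lemma alpha_succ_le (n : ℕ) : c.α (n + 1) ≤ c.α n / (c.ρ * 2) := by
  have := c.alpha_decay n 1
  rw [pow_one] at this
  exact this

lemma summable_alpha_shift (n : ℕ) : Summable (fun k => c.α (n + k)) := by
  have := (summable_nat_add_iff n).2 c.hα
  apply this.congr
  intro k; simp [Nat.add_comm]

lemma tail_alpha (n : ℕ) : (∑' k, c.α (n + k)) ≤ 2 * c.α n / c.ρ := by
  have hs : Summable (fun k => c.α (n + k)) := c.summable_alpha_shift n
  have hg : Summable (fun k : ℕ => (c.α n / c.ρ) * (1/2) ^ k) :=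
    (summable_geometric_two).mul_left _
  have hle : ∀ k, c.α (n + k) ≤ (c.α n / c.ρ) * (1/2) ^ k := by
    intro k
    have := c.alpha_decay n k
    have h2k : (0:ℝ) < 2 ^ k := by positivity
    have hρ' : c.ρ ≠ 0 := ne_of_gt c.hρ0
    have h2k' : (2:ℝ) ^ k ≠ 0 := ne_of_gt h2k
    have he : (c.α n / c.ρ) * (1/2:ℝ)^k = c.α n / (c.ρ * 2^k) := by
      field_simp
      rw [mul_assoc, ← mul_pow]; norm_num
    rw [he]
    exact this
  calc (∑' k, c.α (n + k)) ≤ ∑' k, (c.α n / c.ρ) * (1/2) ^ k :=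
        Summable.tsum_le_tsum hle hs hg
  _ = (c.α n / c.ρ) * ∑' k : ℕ, (1/2 : ℝ) ^ k := tsum_mul_left
  _ = (c.α n / c.ρ) * 2 := by rw [tsum_geometric_two]
  _ = 2 * c.α n / c.ρ := by ring

/-- infDist on a gap -/
lemma infDist_gap {n a b} (h : c.IsGap n a b) {y : ℝ} (hy : y ∈ Set.Icc a b) :
    infDist y (c.D n) = min (y - a) (b - y) := by
  have hne : (c.D n).Nonempty := ⟨0, c.zero_mem n⟩
  apply le_antisymm
  · apply le_min
    · calc infDist y (c.D n) ≤ dist y a := infDist_le_dist_of_mem h.1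
      _ = y - a := by rw [Real.dist_eq, abs_of_nonneg (by linarith [hy.1])]
    · calc infDist y (c.D n) ≤ dist y b := infDist_le_dist_of_mem h.2.1
      _ = b - y := by rw [Real.dist_eq, abs_of_nonpos (by linarith [hy.2])]; ring
  · by_contra hlt
    push_neg at hlt
    obtain ⟨z, hz, hdz⟩ := (infDist_lt_iff hne).1 hlt
    have hz' : z ∉ Set.Ioo a b := by
      intro hmem
      have : z ∈ Set.Ioo a b ∩ c.D n := ⟨hmem, hz⟩
      rw [h.2.2.2] at this
      exact this
    rw [Real.dist_eq] at hdz
    rw [Set.mem_Ioo] at hz'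
    rcases not_and_or.1 hz' with h1 | h2
    · push_neg at h1
      have hza : y - a ≤ |y - z| := by
        rw [abs_of_nonneg (by linarith [hy.1])]
        linarith
      exact absurd (lt_of_le_of_lt hza hdz) (not_lt.2 (min_le_left _ _))
    · push_neg at h2
      have hzb : b - y ≤ |y - z| := by
        rw [abs_of_nonpos (by linarith [hy.2])]
        linarith
      exact absurd (lt_of_le_of_lt hzb hdz) (not_lt.2 (min_le_right _ _))

/-- membership bound: for `z ∈ [0,1]`, `infDist z (D n) ≤ α n / 2`. -/
lemma infDist_le_alpha {n : ℕ} {z : ℝ} (hz : z ∈ Set.Icc (0:ℝ) 1) :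
    infDist z (c.D n) ≤ c.α n / 2 := by
  by_cases hzD : z ∈ c.D n
  · rw [infDist_zero_of_mem hzD]; linarith [c.alpha_pos n]
  · -- find the gap around z
    classical
    set s1 : Set ℝ := c.D n ∩ Set.Iic z with hs1
    set s2 : Set ℝ := c.D n ∩ Set.Ici z with hs2
    have h1ne : s1.Nonempty := ⟨0, c.zero_mem n, hz.1⟩
    have h2ne : s2.Nonempty := ⟨1, c.one_mem n, hz.2⟩
    have h1f : s1.Finite := (c.hDfin n).subset inter_subset_left
    have h2f : s2.Finite := (c.hDfin n).subset inter_subset_left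
    set u := sSup s1
    set v := sInf s2
    have hu := h1ne.csSup_mem h1f
    have hv := h2ne.csInf_mem h2f
    have huz : u < z := lt_of_le_of_ne hu.2 (fun h => hzD (h ▸ hu.1))
    have hzv : z < v := lt_of_le_of_ne hv.2 (fun h => hzD (h ▸ hv.1))
    have hgap : c.IsGap n u v := by
      refine ⟨hu.1, hv.1, lt_trans huz hzv, ?_⟩
      ext t
      simp only [Set.mem_inter_iff, Set.mem_Ioo, Set.mem_empty_iff_false, iff_false, not_and]
      intro ht htD
      rcases le_or_gt t z with h | h
      · exact absurd (le_csSup h1f.bddAbove ⟨htD, h⟩) (not_le.2 ht.1)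
      · exact absurd (csInf_le h2f.bddBelow ⟨htD, h.le⟩) (not_le.2 ht.2)
    have := c.infDist_gap hgap (Set.mem_Icc.2 ⟨huz.le, hzv.le⟩)
    rw [this]
    have hva := hgap.le_alpha
    rcases le_total (z - u) (v - z) with h | h
    · rw [min_eq_left h]; linarith
    · rw [min_eq_right h]; linarith

lemma summable_term {z : ℝ} (hz : z ∈ Set.Icc (0:ℝ) 1) :
    Summable (fun n => c.w n * infDist z (c.D n)) := by
  apply Summable.of_norm
  apply Summable.of_nonneg_of_le (fun n => norm_nonneg _) _ c.hwα
  intro n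
  rw [Real.norm_eq_abs, abs_mul, abs_mul]
  apply mul_le_mul_of_nonneg_left _ (abs_nonneg _)
  rw [abs_of_nonneg infDist_nonneg, abs_of_nonneg (c.alpha_pos n).le]
  linarith [c.infDist_le_alpha (n := n) hz, c.alpha_pos n]


section Chain

variable (x : ℝ)

def SA (n : ℕ) : Set ℝ := c.D n ∩ Set.Iic x ∩ Set.Iio 1

def A (n : ℕ) : ℝ := sSup (c.SA x n)

def B (n : ℕ) : ℝ := sInf (c.D n ∩ Set.Ioi (c.A x n))

def P (n : ℕ) : ℝ := (c.A x n + c.B x n) / 2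

variable {x}

variable (hx : x ∈ Set.Icc (0:ℝ) 1)

include hx

lemma SA_ne (n : ℕ) : (c.SA x n).Nonempty := ⟨0, ⟨c.zero_mem n, hx.1⟩, Set.mem_Iio.2 one_pos⟩

omit hx in
lemma SA_fin (n : ℕ) : (c.SA x n).Finite :=
  (c.hDfin n).subset (fun z hz => hz.1.1)

lemma A_spec (n : ℕ) : c.A x n ∈ c.D n ∧ c.A x n ≤ x ∧ c.A x n < 1 := by
  have := (c.SA_ne hx n).csSup_mem (c.SA_fin n)
  exact ⟨this.1.1, this.1.2, this.2⟩

lemma SB_ne (n : ℕ) : (c.D n ∩ Set.Ioi (c.A x n)).Nonempty :=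
  ⟨1, c.one_mem n, (c.A_spec hx n).2.2⟩

omit hx in
lemma SB_fin (n : ℕ) : (c.D n ∩ Set.Ioi (c.A x n)).Finite :=
  (c.hDfin n).subset (fun z hz => hz.1)

lemma B_spec (n : ℕ) : c.B x n ∈ c.D n ∧ c.A x n < c.B x n := by
  have := (c.SB_ne hx n).csInf_mem (c.SB_fin n)
  exact ⟨this.1, this.2⟩

lemma x_le_B (n : ℕ) : x ≤ c.B x n := by
  by_contra h
  push_neg at h
  have hmem : c.B x n ∈ c.SA x n :=
    ⟨⟨(c.B_spec hx n).1, h.le⟩, lt_of_lt_of_le h hx.2⟩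
  exact absurd (le_csSup (c.SA_fin n).bddAbove hmem) (not_le.2 (c.B_spec hx n).2)

lemma gapAB (n : ℕ) : c.IsGap n (c.A x n) (c.B x n) := by
  refine ⟨(c.A_spec hx n).1, (c.B_spec hx n).1, (c.B_spec hx n).2, ?_⟩
  ext z
  simp only [Set.mem_inter_iff, Set.mem_Ioo, Set.mem_empty_iff_false, iff_false, not_and]
  intro hz hzD
  exact absurd (csInf_le (c.SB_fin n).bddBelow ⟨hzD, hz.1⟩) (not_le.2 hz.2)

lemma A_le_x (n : ℕ) : c.A x n ≤ x := (c.A_spec hx n).2.1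

lemma A_mono (n : ℕ) : c.A x n ≤ c.A x (n + 1) := by
  apply le_csSup (c.SA_fin (n+1)).bddAbove
  have h := (c.SA_ne hx n).csSup_mem (c.SA_fin n)
  exact ⟨⟨c.hDmono n h.1.1, h.1.2⟩, h.2⟩

lemma B_gt_x_or (n : ℕ) : x < 1 → x < c.B x n ∨ (x ∈ c.D n → c.A x n = x) := by
  intro hx1
  right
  intro hxD
  apply le_antisymm (c.A_le_x hx n)
  exact le_csSup (c.SA_fin n).bddAbove ⟨⟨hxD, le_refl x⟩, hx1⟩

lemma B_anti (n : ℕ) : c.B x (n + 1) ≤ c.B x n := by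
  apply csInf_le (c.SB_fin (n+1)).bddBelow
  refine ⟨c.hDmono n (c.B_spec hx n).1, ?_⟩
  -- need A x (n+1) < B x n
  rcases lt_or_ge (c.A x (n+1)) (c.B x n) with h | h
  · exact h
  · exfalso
    -- A x (n+1) ≤ x ≤ B x n ≤ A x (n+1), so all equal; x = B x n = A x (n+1)
    have h1 : c.A x (n+1) ≤ x := c.A_le_x hx (n+1)
    have h2 : x ≤ c.B x n := c.x_le_B hx n
    have hxA : c.A x (n+1) = x := le_antisymm h1 (le_trans h2 h)
    have hxB : c.B x n = x := le_antisymm (le_trans h (le_of_eq hxA)) h2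
    -- then x < 1 (since A < 1), and x ∈ D n, so A x n = x = B x n, contradiction
    have hx1 : x < 1 := hxA ▸ (c.A_spec hx (n+1)).2.2
    have hxDn : x ∈ c.D n := hxB ▸ (c.B_spec hx n).1
    have hAx : c.A x n = x :=
      le_antisymm (c.A_le_x hx n) (le_csSup (c.SA_fin n).bddAbove ⟨⟨hxDn, le_refl x⟩, hx1⟩)
    have hlt := (c.B_spec hx n).2
    rw [hAx, hxB] at hlt
    exact lt_irrefl x hlt

lemma A_mono_le {m n : ℕ} (h : m ≤ n) : c.A x m ≤ c.A x n := by
  induction h with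
  | refl => exact le_refl _
  | step h ih => exact le_trans ih (c.A_mono hx _)

lemma B_anti_le {m n : ℕ} (h : m ≤ n) : c.B x n ≤ c.B x m := by
  induction h with
  | refl => exact le_refl _
  | step h ih => exact le_trans (c.B_anti hx _) ih

end Chain

section Formula

open scoped Classical in
noncomputable def CC (x : ℝ) (n : ℕ) : Finset ℕ :=
  (Finset.range (n+1)).filter (fun m => c.P x m = c.P x n)

noncomputable def W (x : ℝ) (n : ℕ) : ℝ := ∑ m ∈ c.CC x n, c.w m

noncomputable def eps (x : ℝ) (m n : ℕ) : ℝ := if c.B x n ≤ c.P x m then 1 else -1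

open scoped Classical in
noncomputable def E (x : ℝ) (n : ℕ) : ℝ :=
  ∑ m ∈ (Finset.range (n+1)).filter (fun m => ¬ (c.P x m = c.P x n)), c.w m * c.eps x m n

noncomputable def phi (x : ℝ) (n : ℕ) (z : ℝ) : ℝ := min (z - c.A x n) (c.B x n - z)

variable {x : ℝ} (hx : x ∈ Set.Icc (0:ℝ) 1)
include hx

lemma g_central {m n : ℕ} (hm : m ≤ n) (hP : c.P x m = c.P x n) {y : ℝ}
    (hy : y ∈ Set.Icc (c.A x n) (c.B x n)) :
    infDist y (c.D m) = (c.A x n - c.A x m) + c.phi x n y := by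
  have hAm := c.A_mono_le hx hm
  have hBm := c.B_anti_le hx hm
  have hy' : y ∈ Set.Icc (c.A x m) (c.B x m) :=
    ⟨le_trans hAm hy.1, le_trans hy.2 hBm⟩
  rw [c.infDist_gap (c.gapAB hx m) hy']
  have hsum : c.A x m + c.B x m = c.A x n + c.B x n := by
    unfold P at hP; linarith
  have e1 : y - c.A x m = (y - c.A x n) + (c.A x n - c.A x m) := by ring
  have e2 : c.B x m - y = (c.B x n - y) + (c.A x n - c.A x m) := by linarith
  rw [e1, e2, min_add_add_right, add_comm]
  rfl

lemma P_dichotomy {m n : ℕ} (hm : m ≤ n) (hP : ¬ (c.P x m = c.P x n)) :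
    c.B x n ≤ c.P x m ∨ c.P x m ≤ c.A x n := by
  by_contra h
  push_neg at h
  have hmem : c.P x m ∈ Set.Ioo (c.A x n) (c.B x n) := ⟨h.2, h.1⟩
  exact hP (c.key_claim hm (c.gapAB hx n) (c.gapAB hx m) hmem)

lemma g_affine_right {m n : ℕ} (hBP : c.B x n ≤ c.P x m) {y : ℝ}
    (hy : y ∈ Set.Icc (c.A x n) (c.B x n)) (hm : m ≤ n) :
    infDist y (c.D m) = y - c.A x m := by
  have hAm := c.A_mono_le hx hm
  have hBm := c.B_anti_le hx hm
  have hy' : y ∈ Set.Icc (c.A x m) (c.B x m) :=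
    ⟨le_trans hAm hy.1, le_trans hy.2 hBm⟩
  rw [c.infDist_gap (c.gapAB hx m) hy']
  apply min_eq_left
  unfold P at hBP
  have := hy.2
  linarith

lemma g_affine_left {m n : ℕ} (hBP : c.P x m ≤ c.A x n) {y : ℝ}
    (hy : y ∈ Set.Icc (c.A x n) (c.B x n)) (hm : m ≤ n) :
    infDist y (c.D m) = c.B x m - y := by
  have hAm := c.A_mono_le hx hm
  have hBm := c.B_anti_le hx hm
  have hy' : y ∈ Set.Icc (c.A x m) (c.B x m) :=
    ⟨le_trans hAm hy.1, le_trans hy.2 hBm⟩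
  rw [c.infDist_gap (c.gapAB hx m) hy']
  apply min_eq_right
  unfold P at hBP
  have := hy.1
  linarith

end Formula

def Tfun : ℝ → ℝ := fun z => ∑' n, c.w n * infDist z (c.D n)

section Formula2
variable {x : ℝ} (hx : x ∈ Set.Icc (0:ℝ) 1)
include hx

lemma fdiff (n : ℕ) {u v : ℝ} (hu : u ∈ c.D (n+1)) (hv : v ∈ c.D (n+1))
    (huI : u ∈ Set.Icc (c.A x n) (c.B x n)) (hvI : v ∈ Set.Icc (c.A x n) (c.B x n)) :
    c.Tfun v - c.Tfun u = c.E x n * (v - u) + c.W x n * (c.phi x n v - c.phi x n u) := by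
  classical
  have hu01 : u ∈ Set.Icc (0:ℝ) 1 := c.hDsub _ hu
  have hv01 : v ∈ Set.Icc (0:ℝ) 1 := c.hDsub _ hv
  have hsu := c.summable_term hu01
  have hsv := c.summable_term hv01
  have key : c.Tfun v - c.Tfun u =
      ∑ m ∈ Finset.range (n+1),
        (c.w m * infDist v (c.D m) - c.w m * infDist u (c.D m)) := by
    unfold Tfun
    rw [← Summable.tsum_sub hsv hsu]
    apply tsum_eq_sum
    intro m hm
    have hmge : n + 1 ≤ m := by
      by_contra hcon
      exact hm (Finset.mem_range.2 (not_le.1 hcon))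
    rw [infDist_zero_of_mem (c.mono hmge hv), infDist_zero_of_mem (c.mono hmge hu)]
    ring
  rw [key, ← Finset.sum_filter_add_sum_filter_not (Finset.range (n+1))
    (fun m => c.P x m = c.P x n)]
  have h1 : ∑ m ∈ (Finset.range (n+1)).filter (fun m => c.P x m = c.P x n),
      (c.w m * infDist v (c.D m) - c.w m * infDist u (c.D m))
      = c.W x n * (c.phi x n v - c.phi x n u) := by
    rw [Finset.sum_congr rfl (g := fun m => c.w m * (c.phi x n v - c.phi x n u)) ?_]
    · rw [← Finset.sum_mul]
      rfl
    · intro m hm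
      rw [Finset.mem_filter, Finset.mem_range, Nat.lt_succ_iff] at hm
      rw [c.g_central hx hm.1 hm.2 hvI, c.g_central hx hm.1 hm.2 huI]
      ring
  have h2 : ∑ m ∈ (Finset.range (n+1)).filter (fun m => ¬ (c.P x m = c.P x n)),
      (c.w m * infDist v (c.D m) - c.w m * infDist u (c.D m))
      = c.E x n * (v - u) := by
    unfold E
    rw [Finset.sum_mul]
    apply Finset.sum_congr rfl
    intro m hm
    rw [Finset.mem_filter, Finset.mem_range, Nat.lt_succ_iff] at hm
    rcases c.P_dichotomy hx hm.1 hm.2 with hc | hc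
    · rw [c.g_affine_right hx hc hvI hm.1, c.g_affine_right hx hc huI hm.1]
      unfold eps
      rw [if_pos hc]
      ring
    · have hc' : ¬ (c.B x n ≤ c.P x m) := by
        have h1 := (c.B_spec hx n).2
        push_neg
        exact lt_of_le_of_lt hc h1
      rw [c.g_affine_left hx hc hvI hm.1, c.g_affine_left hx hc huI hm.1]
      unfold eps
      rw [if_neg hc']
      ring
  rw [h1, h2]
  ring

end Formula2

section Dir1

variable {x : ℝ} (hx : x ∈ Set.Icc (0:ℝ) 1)
include hx

lemma probe_control {L : ℝ}
    (hd : HasDerivWithinAt c.Tfun L (Set.Icc 0 1) x) {ε : ℝ} (hε : 0 < ε) :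
    ∃ δ > 0, ∀ u v : ℝ, u ∈ Set.Icc (0:ℝ) 1 → v ∈ Set.Icc (0:ℝ) 1 → u ≤ x → x ≤ v →
      u < v → v - u < δ → |(c.Tfun v - c.Tfun u) - L * (v - u)| ≤ ε * (v - u) := by
  have hlo := hasDerivWithinAt_iff_isLittleO.1 hd
  have hev := (Asymptotics.isLittleO_iff.1 hlo) (c := ε/2) (by linarith)
  rw [Filter.eventually_iff, mem_nhdsWithin_iff] at hev
  obtain ⟨δ, hδ, hball⟩ := hev
  refine ⟨δ, hδ, ?_⟩
  intro u v hu01 hv01 hux hxv huv hlen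
  have hu' : u ∈ Metric.ball x δ := by
    rw [Metric.mem_ball, Real.dist_eq, abs_of_nonpos (by linarith)]
    linarith
  have hv' : v ∈ Metric.ball x δ := by
    rw [Metric.mem_ball, Real.dist_eq, abs_of_nonneg (by linarith)]
    linarith
  have h1 := hball ⟨hu', hu01⟩
  have h2 := hball ⟨hv', hv01⟩
  simp only [Set.mem_setOf_eq, Real.norm_eq_abs, smul_eq_mul] at h1 h2
  have e1 : |v - x| = v - x := abs_of_nonneg (by linarith)
  have e2 : |u - x| = x - u := by rw [abs_of_nonpos (by linarith)]; ring
  rw [e1] at h2; rw [e2] at h1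
  have hrw : (c.Tfun v - c.Tfun u) - L * (v - u)
      = (c.Tfun v - c.Tfun x - (v - x) * L) - (c.Tfun u - c.Tfun x - (u - x) * L) := by
    ring
  rw [hrw]
  calc |(c.Tfun v - c.Tfun x - (v - x) * L) - (c.Tfun u - c.Tfun x - (u - x) * L)|
      ≤ |c.Tfun v - c.Tfun x - (v - x) * L| + |c.Tfun u - c.Tfun x - (u - x) * L| :=
        abs_sub _ _
  _ ≤ ε/2 * (v - x) + ε/2 * (x - u) := add_le_add h2 h1
  _ = ε/2 * (v - u) := by ring
  _ ≤ ε * (v - u) := by nlinarith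

lemma phi_A (n : ℕ) : c.phi x n (c.A x n) = 0 := by
  unfold phi
  rw [min_eq_left (by linarith [(c.B_spec hx n).2])]
  ring

lemma phi_B (n : ℕ) : c.phi x n (c.B x n) = 0 := by
  unfold phi
  rw [min_eq_right (by linarith [(c.B_spec hx n).2])]
  ring

lemma W_bound {L : ℝ} (hd : HasDerivWithinAt c.Tfun L (Set.Icc 0 1) x)
    {ε : ℝ} (hε : 0 < ε) :
    ∃ N : ℕ, ∀ n ≥ N, |c.W x n| ≤ (2 + 2/c.ρ) * ε := by
  obtain ⟨δ, hδ, hprobe⟩ := c.probe_control hx hd hε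
  have hαlim : Tendsto c.α atTop (𝓝 0) := c.hα.tendsto_atTop_zero
  have hev : ∀ᶠ n in atTop, c.α n < δ := hαlim.eventually (gt_mem_nhds hδ)
  obtain ⟨N, hN⟩ := Filter.eventually_atTop.1 hev
  refine ⟨N, ?_⟩
  intro n hn
  have hαδ : c.α n < δ := hN n hn
  set An := c.A x n with hAn
  set Bn := c.B x n with hBn
  have hAB : An < Bn := (c.B_spec hx n).2
  have hlen : Bn - An ≤ c.α n := (c.gapAB hx n).le_alpha
  have hAx : An ≤ x := c.A_le_x hx n
  have hxB : x ≤ Bn := c.x_le_B hx n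
  have hAD : An ∈ c.D (n+1) := c.hDmono n (c.A_spec hx n).1
  have hBD : Bn ∈ c.D (n+1) := c.hDmono n (c.B_spec hx n).1
  -- all probes
  have probeQ : ∀ u v : ℝ, u ∈ c.D (n+1) → v ∈ c.D (n+1) →
      u ∈ Set.Icc An Bn → v ∈ Set.Icc An Bn → u ≤ x → x ≤ v → u < v →
      |c.E x n * (v - u) + c.W x n * (c.phi x n v - c.phi x n u) - L * (v - u)|
        ≤ ε * (v - u) := by
    intro u v hu hv huI hvI hux hxv huv
    have hform := c.fdiff hx n hu hv huI hvI
    have hpr := hprobe u v (c.hDsub _ hu) (c.hDsub _ hv) hux hxv huv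
      (by linarith [huI.1, hvI.2])
    rw [hform] at hpr
    exact hpr
  have habs : ∀ Y : ℝ, |Y * (Bn - An)| ≤ ε * (Bn - An) → |Y| ≤ ε := by
    intro Y h
    have hpos : (0:ℝ) < Bn - An := by linarith
    rw [abs_mul, abs_of_pos hpos] at h
    exact le_of_mul_le_mul_right h hpos
  -- full probe : |E - L| ≤ ε
  have hfull : |c.E x n - L| ≤ ε := by
    have hpr := probeQ An Bn hAD hBD ⟨le_refl _, hAB.le⟩ ⟨hAB.le, le_refl _⟩ hAx hxB hAB
    rw [c.phi_A hx n, c.phi_B hx n] at hpr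
    apply habs
    have : (c.E x n - L) * (Bn - An)
        = c.E x n * (Bn - An) + c.W x n * (0 - 0) - L * (Bn - An) := by ring
    rw [this]
    exact hpr
  have hρ0 := c.hρ0
  have hρ1 := c.hρ1
  have hKpos : (0:ℝ) < 2 + 2/c.ρ := by positivity
  -- case analysis
  have hPmid : c.P x n ∈ midpoints (c.D n) := (c.gapAB hx n).mid_mem
  rcases c.hdec n with hA | hB
  · -- midpoints go into D (n+1)
    have hPD : c.P x n ∈ c.D (n+1) := hA hPmid
    set Pn := c.P x n with hPn
    have hPA : Pn - An = Bn - Pn := by rw [hPn]; unfold P; rw [← hAn, ← hBn]; ring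
    have hAP : An < Pn := by
      have : Pn = (An + Bn)/2 := by rw [hPn]; unfold P; rw [← hAn, ← hBn]
      rw [this]; linarith
    have hPB : Pn < Bn := by linarith
    have hphiP : c.phi x n Pn = Pn - An := by
      unfold phi
      rw [← hAn, ← hBn, ← hPA, min_self]
    rcases le_total x Pn with hxP | hPx
    · have hpr := probeQ An Pn hAD hPD ⟨le_refl _, hAB.le⟩ ⟨hAP.le, hPB.le⟩ hAx hxP hAP
      rw [c.phi_A hx n, hphiP] at hpr
      have h2 : |c.E x n + c.W x n - L| ≤ ε := by
        have hpos : (0:ℝ) < Pn - An := by linarith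
        have hh : (c.E x n + c.W x n - L) * (Pn - An)
            = c.E x n * (Pn - An) + c.W x n * (Pn - An - 0) - L * (Pn - An) := by ring
        have := hpr
        rw [← hh] at this
        rw [abs_mul, abs_of_pos hpos] at this
        exact le_of_mul_le_mul_right this hpos
      calc |c.W x n| = |(c.E x n + c.W x n - L) - (c.E x n - L)| := by congr 1; ring
      _ ≤ |c.E x n + c.W x n - L| + |c.E x n - L| := abs_sub _ _
      _ ≤ ε + ε := add_le_add h2 hfull
      _ ≤ (2 + 2/c.ρ) * ε := by
          have h0 : 0 ≤ 2/c.ρ * ε := by positivity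
          linarith
    · have hpr := probeQ Pn Bn hPD hBD ⟨hAP.le, hPB.le⟩ ⟨hAB.le, le_refl _⟩ hPx hxB hPB
      rw [c.phi_B hx n, hphiP] at hpr
      have h2 : |c.E x n - c.W x n - L| ≤ ε := by
        have hpos : (0:ℝ) < Bn - Pn := by linarith
        have hh : (c.E x n - c.W x n - L) * (Bn - Pn)
            = c.E x n * (Bn - Pn) + c.W x n * (0 - (Pn - An)) - L * (Bn - Pn) := by
          rw [hPA]; ring
        have := hpr
        rw [← hh] at this
        rw [abs_mul, abs_of_pos hpos] at this
        exact le_of_mul_le_mul_right this hpos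
      calc |c.W x n| = |(c.E x n - L) - (c.E x n - c.W x n - L)| := by congr 1; ring
      _ ≤ |c.E x n - L| + |c.E x n - c.W x n - L| := abs_sub _ _
      _ ≤ ε + ε := add_le_add hfull h2
      _ ≤ (2 + 2/c.ρ) * ε := by
          have h0 : 0 ≤ 2/c.ρ * ε := by positivity
          linarith
  · -- midpoints stay midpoints
    have hPM : c.P x n ∈ midpoints (c.D (n+1)) := hB.2 hPmid
    obtain ⟨a', ha'D, b', hb'D, hab', hgap', hmid'⟩ := hPM
    have hgapab : c.IsGap (n+1) a' b' := ⟨ha'D, hb'D, hab', hgap'⟩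
    have hsum : a' + b' = An + Bn := by
      have : (An + Bn)/2 = (a' + b')/2 := by
        rw [hAn, hBn]
        exact hmid'
      linarith
    have hPa : a' < (An + Bn)/2 := by linarith
    have hPb : (An + Bn)/2 < b' := by linarith
    have hAa' : An ≤ a' := by
      by_contra hcon
      push_neg at hcon
      have : An ∈ Set.Ioo a' b' ∩ c.D (n+1) := ⟨⟨hcon, by linarith⟩, hAD⟩
      rw [hgap'] at this
      exact this
    have hb'B : b' ≤ Bn := by
      by_contra hcon
      push_neg at hcon
      have : Bn ∈ Set.Ioo a' b' ∩ c.D (n+1) := ⟨⟨by linarith, hcon⟩, hBD⟩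
      rw [hgap'] at this
      exact this
    have hAa : An < a' := by
      rcases lt_or_eq_of_le hAa' with h | h
      · exact h
      · exfalso
        obtain ⟨z, hz, hzD⟩ := c.gap_split (c.gapAB hx n)
        have hzab : z ∈ Set.Ioo a' b' ∩ c.D (n+1) := by
          refine ⟨?_, hzD⟩
          rw [← h]
          have : b' = Bn := by linarith
          rw [this]
          exact ⟨hz.1, hz.2⟩
        rw [hgap'] at hzab
        exact hzab
    have hbB : b' < Bn := by linarith
    have hphia : c.phi x n a' = a' - An := by
      unfold phi
      rw [← hAn, ← hBn]
      exact min_eq_left (by linarith)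
    have hphib : c.phi x n b' = Bn - b' := by
      unfold phi
      rw [← hAn, ← hBn]
      exact min_eq_right (by linarith)
    rcases le_total x a' with hxa | hax
    · -- x left of the central gap
      have hpr := probeQ An a' hAD ha'D ⟨le_refl _, by linarith⟩ ⟨hAa.le, by linarith⟩ hAx hxa hAa
      rw [c.phi_A hx n, hphia] at hpr
      have h2 : |c.E x n + c.W x n - L| ≤ ε := by
        have hpos : (0:ℝ) < a' - An := by linarith
        have hh : (c.E x n + c.W x n - L) * (a' - An)
            = c.E x n * (a' - An) + c.W x n * (a' - An - 0) - L * (a' - An) := by ring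
        rw [← hh] at hpr
        rw [abs_mul, abs_of_pos hpos] at hpr
        exact le_of_mul_le_mul_right hpr hpos
      calc |c.W x n| = |(c.E x n + c.W x n - L) - (c.E x n - L)| := by congr 1; ring
      _ ≤ |c.E x n + c.W x n - L| + |c.E x n - L| := abs_sub _ _
      _ ≤ ε + ε := add_le_add h2 hfull
      _ ≤ (2 + 2/c.ρ) * ε := by
          have h0 : 0 ≤ 2/c.ρ * ε := by positivity
          linarith
    · rcases le_total b' x with hbx | hxb
      · -- x right of the central gap
        have hpr := probeQ b' Bn hb'D hBD ⟨by linarith, hbB.le⟩ ⟨hAB.le, le_refl _⟩ hbx hxB hbB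
        rw [c.phi_B hx n, hphib] at hpr
        have h2 : |c.E x n - c.W x n - L| ≤ ε := by
          have hpos : (0:ℝ) < Bn - b' := by linarith
          have hh : (c.E x n - c.W x n - L) * (Bn - b')
              = c.E x n * (Bn - b') + c.W x n * (0 - (Bn - b')) - L * (Bn - b') := by ring
          rw [← hh] at hpr
          rw [abs_mul, abs_of_pos hpos] at hpr
          exact le_of_mul_le_mul_right hpr hpos
        calc |c.W x n| = |(c.E x n - L) - (c.E x n - c.W x n - L)| := by congr 1; ring
        _ ≤ |c.E x n - L| + |c.E x n - c.W x n - L| := abs_sub _ _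
        _ ≤ ε + ε := add_le_add hfull h2
        _ ≤ (2 + 2/c.ρ) * ε := by
            have h0 : 0 ≤ 2/c.ρ * ε := by positivity
            linarith
      · -- x inside the central gap : two overlapping probes
        have hpr1 := probeQ An b' hAD hb'D ⟨le_refl _, by linarith⟩
          ⟨by linarith, hbB.le⟩ hAx hxb (by linarith)
        rw [c.phi_A hx n, hphib] at hpr1
        have hpr2 := probeQ a' Bn ha'D hBD ⟨hAa.le, by linarith⟩
          ⟨hAB.le, le_refl _⟩ hax hxB (by linarith)
        rw [c.phi_B hx n, hphia] at hpr2
        have hs : Bn - b' = a' - An := by linarith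
        have ht : Bn - a' = b' - An := by linarith
        have hspos : (0:ℝ) < a' - An := by linarith
        have htpos : (0:ℝ) < b' - An := by linarith
        have hq1 : |(c.E x n - L) * (b' - An) + c.W x n * (a' - An)| ≤ ε * (b' - An) := by
          have hh : (c.E x n - L) * (b' - An) + c.W x n * (a' - An)
              = c.E x n * (b' - An) + c.W x n * (Bn - b' - 0) - L * (b' - An) := by
            linear_combination (- c.W x n) * hs
          rw [hh]
          exact hpr1
        have hq2 : |(c.E x n - L) * (b' - An) - c.W x n * (a' - An)| ≤ ε * (b' - An) := by
          have hh : (c.E x n - L) * (b' - An) - c.W x n * (a' - An)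
              = c.E x n * (Bn - a') + c.W x n * (0 - (a' - An)) - L * (Bn - a') := by
            linear_combination (L - c.E x n) * ht
          have he : ε * (Bn - a') = ε * (b' - An) := by rw [ht]
          rw [hh]
          calc |c.E x n * (Bn - a') + c.W x n * (0 - (a' - An)) - L * (Bn - a')|
              ≤ ε * (Bn - a') := hpr2
          _ = ε * (b' - An) := he
        have h2W : |c.W x n * (2 * (a' - An))| ≤ 2 * (ε * (b' - An)) := by
          have hexp : c.W x n * (2 * (a' - An))
              = ((c.E x n - L) * (b' - An) + c.W x n * (a' - An))
                - ((c.E x n - L) * (b' - An) - c.W x n * (a' - An)) := by ring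
          rw [hexp]
          calc |((c.E x n - L) * (b' - An) + c.W x n * (a' - An))
                - ((c.E x n - L) * (b' - An) - c.W x n * (a' - An))|
              ≤ |(c.E x n - L) * (b' - An) + c.W x n * (a' - An)|
                + |(c.E x n - L) * (b' - An) - c.W x n * (a' - An)| := abs_sub _ _
          _ ≤ ε * (b' - An) + ε * (b' - An) := add_le_add hq1 hq2
          _ = 2 * (ε * (b' - An)) := by ring
        have hWt : |c.W x n| * (a' - An) ≤ ε * (b' - An) := by
          rw [abs_mul, abs_of_pos (show (0:ℝ) < 2 * (a' - An) by linarith)] at h2W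
          linarith
        have hga : b' - a' ≤ c.α (n+1) := hgapab.le_alpha
        have hsa : c.ρ * c.α (n+1) ≤ a' - An := c.hgapL (n+1) An hAD a' ha'D hAa
        have hts : b' - An ≤ (a' - An) * (1 + 1/c.ρ) := by
          have hdiv : b' - a' ≤ (a' - An) / c.ρ := by
            rw [le_div_iff₀ hρ0]
            nlinarith [c.alpha_pos (n+1)]
          have hexp : (a' - An) * (1 + 1/c.ρ) = (a' - An) + (a' - An)/c.ρ := by ring
          linarith [hexp]
        have hfin : |c.W x n| * (a' - An) ≤ (ε * (1 + 1/c.ρ)) * (a' - An) := by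
          calc |c.W x n| * (a' - An) ≤ ε * (b' - An) := hWt
          _ ≤ ε * ((a' - An) * (1 + 1/c.ρ)) := mul_le_mul_of_nonneg_left hts hε.le
          _ = (ε * (1 + 1/c.ρ)) * (a' - An) := by ring
        have hW : |c.W x n| ≤ ε * (1 + 1/c.ρ) := le_of_mul_le_mul_right hfin hspos
        have h1 : ε * (1 + 1/c.ρ) = ε + 1/c.ρ * ε := by ring
        have h2 : (2 + 2/c.ρ) * ε = 2*ε + 2*(1/c.ρ*ε) := by ring
        have h3 : 0 ≤ 1/c.ρ * ε := by positivity
        linarith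

end Dir1

section Dir1b
variable {x : ℝ} (hx : x ∈ Set.Icc (0:ℝ) 1)
include hx

lemma P_in_Ioo (n : ℕ) : c.P x (n+1) ∈ Set.Ioo (c.A x n) (c.B x n) := by
  have h1 := (c.B_spec hx (n+1)).2
  have h2 := c.A_mono hx n
  have h3 := c.B_anti hx n
  constructor
  · show c.A x n < c.P x (n+1)
    unfold P
    linarith
  · show c.P x (n+1) < c.B x n
    unfold P
    linarith

lemma CC_rel (n : ℕ) : |c.w (n+1)| ≤ |c.W x (n+1)| + |c.W x n| := by
  classical
  by_cases hc : ∃ m, m ≤ n ∧ c.P x m = c.P x (n+1)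
  · obtain ⟨m, hm, hPm⟩ := hc
    have hPm' : c.P x m ∈ Set.Ioo (c.A x n) (c.B x n) := hPm ▸ c.P_in_Ioo hx n
    have hPn : c.P x m = c.P x n := c.key_claim hm (c.gapAB hx n) (c.gapAB hx m) hPm'
    have hPP : c.P x (n+1) = c.P x n := by rw [← hPm, hPn]
    have hCC : c.CC x (n+1) = insert (n+1) (c.CC x n) := by
      ext k
      simp only [CC, Finset.mem_filter, Finset.mem_range, Finset.mem_insert]
      constructor
      · rintro ⟨hk, hPk⟩
        rcases Nat.lt_succ_iff_lt_or_eq.1 hk with hk' | hk'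
        · exact Or.inr ⟨hk', by rw [hPk, hPP]⟩
        · exact Or.inl hk'
      · rintro (rfl | ⟨hk, hPk⟩)
        · exact ⟨Nat.lt_succ_self _, rfl⟩
        · exact ⟨Nat.lt_succ_of_lt hk, by rw [hPk, hPP]⟩
    have hnotmem : (n+1) ∉ c.CC x n := by
      simp only [CC, Finset.mem_filter, Finset.mem_range]
      intro h
      exact absurd h.1 (lt_irrefl _)
    have hW : c.W x (n+1) = c.w (n+1) + c.W x n := by
      unfold W
      rw [hCC, Finset.sum_insert hnotmem]
    calc |c.w (n+1)| = |c.W x (n+1) - c.W x n| := by rw [hW]; congr 1; ring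
    _ ≤ |c.W x (n+1)| + |c.W x n| := abs_sub _ _
  · push_neg at hc
    have hCC : c.CC x (n+1) = {n+1} := by
      ext k
      simp only [CC, Finset.mem_filter, Finset.mem_range, Finset.mem_singleton]
      constructor
      · rintro ⟨hk, hPk⟩
        rcases Nat.lt_succ_iff_lt_or_eq.1 hk with hk' | hk'
        · exact absurd hPk (hc k (Nat.lt_succ_iff.1 hk'))
        · exact hk'
      · rintro rfl
        exact ⟨Nat.lt_succ_self _, rfl⟩
    have hW : c.W x (n+1) = c.w (n+1) := by
      unfold W
      rw [hCC, Finset.sum_singleton]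
    rw [← hW]
    linarith [abs_nonneg (c.W x n)]

lemma dir1 (hd : DifferentiableWithinAt ℝ c.Tfun (Set.Icc 0 1) x) :
    Tendsto c.w atTop (𝓝 0) := by
  have hD := hd.hasDerivWithinAt
  rw [Metric.tendsto_atTop]
  intro ε hε
  have hρ0 := c.hρ0
  set K := 2 + 2/c.ρ with hK
  have hKpos : 0 < K := by positivity
  have hε' : 0 < ε / (4*K) := by positivity
  obtain ⟨N, hN⟩ := c.W_bound hx hD hε'
  refine ⟨N+1, ?_⟩
  intro n hn
  obtain ⟨m, rfl⟩ : ∃ m, n = m + 1 := ⟨n-1, by omega⟩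
  have hm : m ≥ N := by omega
  have h1 := hN m hm
  have h2 := hN (m+1) (by omega)
  have h3 := c.CC_rel hx m
  rw [Real.dist_eq, sub_zero]
  have hKK : K * (ε/(4*K)) = ε/4 := by field_simp
  calc |c.w (m+1)| ≤ |c.W x (m+1)| + |c.W x m| := h3
  _ ≤ K * (ε/(4*K)) + K * (ε/(4*K)) := add_le_add h2 h1
  _ = ε/4 + ε/4 := by rw [hKK]
  _ < ε := by linarith

end Dir1b

section Signs

def dseq (k : ℕ) : ℝ := c.w (2*k) - c.w (2*k+1)

noncomputable def Tseq : ℕ → ℝ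
  | 0 => 0
  | (k+1) => Tseq k +
      (if (0 ≤ Tseq k) ↔ (0 ≤ c.dseq k) then (-1:ℝ) else 1) * c.dseq k

noncomputable def eseq (k : ℕ) : ℝ :=
  if (0 ≤ c.Tseq k) ↔ (0 ≤ c.dseq k) then (-1:ℝ) else 1

lemma Tseq_succ (k : ℕ) : c.Tseq (k+1) = c.Tseq k + c.eseq k * c.dseq k := rfl

lemma eseq_one (k : ℕ) : c.eseq k = 1 ∨ c.eseq k = -1 := by
  unfold eseq
  split
  · exact Or.inr rfl
  · exact Or.inl rfl

lemma Tstep (k : ℕ) : |c.Tseq (k+1)| = abs (|c.Tseq k| - |c.dseq k|) := by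
  rw [c.Tseq_succ k]
  unfold eseq
  rcases le_or_gt 0 (c.Tseq k) with ht | ht <;> rcases le_or_gt 0 (c.dseq k) with hd | hd
  · rw [if_pos (iff_of_true ht hd), abs_of_nonneg ht, abs_of_nonneg hd]
    congr 1
    ring
  · rw [if_neg (fun hiff => absurd (hiff.1 ht) (not_le.2 hd)), abs_of_nonneg ht,
      abs_of_neg hd]
    congr 1
    ring
  · rw [if_neg (fun hiff => absurd (hiff.2 hd) (not_le.2 ht)), abs_of_neg ht,
      abs_of_nonneg hd]
    rw [show c.Tseq k + 1 * c.dseq k = -(-c.Tseq k - c.dseq k) by ring, abs_neg]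
  · rw [if_pos (iff_of_false (not_le.2 ht) (not_le.2 hd)), abs_of_neg ht, abs_of_neg hd]
    rw [show c.Tseq k + -1 * c.dseq k = -(-c.Tseq k - -c.dseq k) by ring, abs_neg]

lemma Tseq_sum (k : ℕ) : c.Tseq k = ∑ j ∈ Finset.range k, c.eseq j * c.dseq j := by
  induction k with
  | zero => rfl
  | succ k ih => rw [Finset.sum_range_succ, ← ih, c.Tseq_succ]

lemma Tseq_conv (hw : Tendsto c.w atTop (𝓝 0)) :
    ∃ L, Tendsto c.Tseq atTop (𝓝 L) := by
  by_cases hsum : Summable (fun k => |c.dseq k|)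
  · have hsum' : Summable (fun k => c.eseq k * c.dseq k) := by
      apply Summable.of_norm
      apply Summable.of_nonneg_of_le (fun k => norm_nonneg _) _ hsum
      intro k
      rw [Real.norm_eq_abs, abs_mul]
      rcases c.eseq_one k with h | h <;> rw [h] <;> simp
    refine ⟨∑' j, c.eseq j * c.dseq j, ?_⟩
    have := hsum'.hasSum.tendsto_sum_nat
    apply this.congr
    intro k
    exact (c.Tseq_sum k).symm
  · -- greedy: Tseq → 0
    refine ⟨0, ?_⟩
    have hd0 : Tendsto c.dseq atTop (𝓝 0) := by
      have h1 : Tendsto (fun k => c.w (2*k)) atTop (𝓝 0) :=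
        hw.comp (tendsto_atTop_mono (fun k => by simp only [id_eq]; omega) tendsto_id)
      have h2 : Tendsto (fun k => c.w (2*k+1)) atTop (𝓝 0) :=
        hw.comp (tendsto_atTop_mono (fun k => by simp only [id_eq]; omega) tendsto_id)
      have := h1.sub h2
      rw [sub_zero] at this; exact this
    rw [Metric.tendsto_atTop]
    intro ε hε
    -- K₀ : all |d k| < ε/2 beyond
    have hev : ∀ᶠ k in atTop, |c.dseq k| < ε/2 := by
      have := Metric.tendsto_atTop.1 hd0 (ε/2) (by linarith)
      obtain ⟨K, hK⟩ := this
      refine Filter.eventually_atTop.2 ⟨K, fun k hk => ?_⟩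
      have := hK k hk
      rwa [Real.dist_eq, sub_zero] at this
    obtain ⟨K₀, hK₀⟩ := Filter.eventually_atTop.1 hev
    -- (a) some k1 ≥ K₀ with |Tseq k1| ≤ ε/2
    have ha : ∃ k1, K₀ ≤ k1 ∧ |c.Tseq k1| ≤ ε/2 := by
      by_contra hcon
      push_neg at hcon
      -- |Tseq| decreases by |dseq| each step beyond K₀
      have hdec : ∀ j : ℕ, |c.Tseq (K₀ + j)| ≤ |c.Tseq K₀| - ∑ i ∈ Finset.range j, |c.dseq (K₀ + i)| := by
        intro j
        induction j with
        | zero => simp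
        | succ j ih =>
          have hgt : ε/2 < |c.Tseq (K₀ + j)| := hcon (K₀ + j) (by omega)
          have hlt : |c.dseq (K₀ + j)| < ε/2 := hK₀ (K₀ + j) (by omega)
          have hstep := c.Tstep (K₀ + j)
          have : |c.Tseq (K₀ + j + 1)| = |c.Tseq (K₀ + j)| - |c.dseq (K₀ + j)| := by
            rw [hstep, abs_of_nonneg (show (0:ℝ) ≤ |c.Tseq (K₀+j)| - |c.dseq (K₀+j)| by linarith)]
          rw [Finset.sum_range_succ]
          have he : K₀ + (j+1) = K₀ + j + 1 := by omega
          rw [he, this]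
          linarith
      -- partial sums of |dseq (K₀ + ·)| tend to infinity
      have hns : ¬ Summable (fun i => |c.dseq (K₀ + i)|) := by
        intro hcon2
        exact hsum ((summable_nat_add_iff K₀).1 (hcon2.congr (fun i => by rw [Nat.add_comm])))
      have htop := (not_summable_iff_tendsto_nat_atTop_of_nonneg
        (fun i => abs_nonneg (c.dseq (K₀ + i)))).1 hns
      obtain ⟨j, hj⟩ := (Filter.tendsto_atTop.1 htop (|c.Tseq K₀| + 1)).exists
      have := hdec j
      have habs := abs_nonneg (c.Tseq (K₀ + j))
      linarith
    obtain ⟨k1, hk1K, hk1⟩ := ha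
    -- (b) stability
    have hb : ∀ k, k1 ≤ k → |c.Tseq k| ≤ ε/2 := by
      intro k hk
      induction k with
      | zero =>
        have h0 : k1 = 0 := Nat.le_zero.1 hk
        rw [h0] at hk1
        exact hk1
      | succ k ih =>
        rcases Nat.lt_or_ge k1 (k+1) with h | h
        · have hk' : k1 ≤ k := by omega
          have ihk := ih hk'
          have hdk : |c.dseq k| < ε/2 := hK₀ k (by omega)
          rw [c.Tstep k, abs_le]
          constructor
          · linarith [abs_nonneg (c.Tseq k)]
          · linarith [abs_nonneg (c.dseq k)]
        · have h0 : k1 = k + 1 := by omega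
          rw [h0] at hk1
          exact hk1
    refine ⟨k1, fun n hn => ?_⟩
    rw [Real.dist_eq, sub_zero]
    exact lt_of_le_of_lt (hb n hn) (by linarith)

def sfun (m : ℕ) : ℝ := if Even m then c.eseq (m/2) else -(c.eseq (m/2))

lemma sfun_even (k : ℕ) : c.sfun (2*k) = c.eseq k := by
  unfold sfun
  rw [if_pos (even_two_mul k)]
  congr 1
  omega

lemma sfun_odd (k : ℕ) : c.sfun (2*k+1) = -(c.eseq k) := by
  unfold sfun
  rw [if_neg (by intro hcon; rw [Nat.even_add_one] at hcon; exact hcon (even_two_mul k))]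
  congr 2
  omega

lemma sfun_one (m : ℕ) : c.sfun m = 1 ∨ c.sfun m = -1 := by
  unfold sfun
  rcases c.eseq_one (m/2) with h | h <;> split <;> simp [h]

noncomputable def Sseq (n : ℕ) : ℝ := ∑ m ∈ Finset.range n, c.w m * c.sfun m

lemma Sseq_even (k : ℕ) : c.Sseq (2*k) = c.Tseq k := by
  induction k with
  | zero => rfl
  | succ k ih =>
    have h1 : 2*(k+1) = (2*k + 1) + 1 := by omega
    unfold Sseq
    rw [h1, Finset.sum_range_succ, Finset.sum_range_succ]
    have hs : (∑ m ∈ Finset.range (2*k), c.w m * c.sfun m) = c.Tseq k := ih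
    rw [hs, c.sfun_even k, c.sfun_odd k, c.Tseq_succ k]
    unfold dseq
    ring

lemma Sseq_conv (hw : Tendsto c.w atTop (𝓝 0)) :
    ∃ L, Tendsto c.Sseq atTop (𝓝 L) := by
  obtain ⟨L, hL⟩ := c.Tseq_conv hw
  refine ⟨L, ?_⟩
  rw [Metric.tendsto_atTop]
  intro ε hε
  obtain ⟨K1, hK1⟩ := Metric.tendsto_atTop.1 hL (ε/2) (by linarith)
  obtain ⟨K2, hK2⟩ := Metric.tendsto_atTop.1 hw (ε/2) (by linarith)
  refine ⟨2*K1 + K2 + 2, fun n hn => ?_⟩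
  rcases Nat.even_or_odd n with ⟨k, hk⟩ | ⟨k, hk⟩
  · have hkK : K1 ≤ k := by omega
    have := hK1 k hkK
    rw [Real.dist_eq] at this ⊢
    rw [hk, show k + k = 2*k by ring, c.Sseq_even k]
    linarith
  · -- n = 2k+1
    have hkK : K1 ≤ k := by omega
    have h2k : K2 ≤ 2*k := by omega
    have hT := hK1 k hkK
    have hwk := hK2 (2*k) h2k
    rw [Real.dist_eq] at hT hwk ⊢
    rw [sub_zero] at hwk
    have hS : c.Sseq n = c.Tseq k + c.w (2*k) * c.sfun (2*k) := by
      unfold Sseq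
      rw [hk, show 2*k+1 = (2*k)+1 from rfl, Finset.sum_range_succ]
      have : (∑ m ∈ Finset.range (2*k), c.w m * c.sfun m) = c.Tseq k := c.Sseq_even k
      rw [this]
    rw [hS]
    have habs : |c.w (2*k) * c.sfun (2*k)| = |c.w (2*k)| := by
      rw [abs_mul]
      rcases c.sfun_one (2*k) with h | h <;> rw [h] <;> simp
    calc |c.Tseq k + c.w (2*k) * c.sfun (2*k) - L|
        ≤ |c.Tseq k - L| + |c.w (2*k) * c.sfun (2*k)| := by
          rw [show c.Tseq k + c.w (2*k) * c.sfun (2*k) - L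
            = (c.Tseq k - L) + c.w (2*k) * c.sfun (2*k) by ring]
          exact abs_add_le _ _
    _ < ε/2 + ε/2 := by rw [habs]; exact add_lt_add hT hwk
    _ = ε := by ring

lemma exists_sign_window (n : ℕ) :
    (∃ j, n ≤ j ∧ j ≤ n + 2 ∧ c.sfun j = 1) ∧
    (∃ j, n ≤ j ∧ j ≤ n + 2 ∧ c.sfun j = -1) := by
  rcases Nat.even_or_odd n with ⟨k, hk⟩ | ⟨k, hk⟩
  · have h2k : n = 2*k := by omega
    have he := c.sfun_even k
    have ho := c.sfun_odd k
    rcases c.eseq_one k with h | h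
    · exact ⟨⟨n, le_refl _, by omega, by rw [h2k, he, h]⟩,
        ⟨n+1, by omega, by omega, by rw [h2k, show 2*k+1 = 2*k+1 from rfl, ho, h]⟩⟩
    · exact ⟨⟨n+1, by omega, by omega, by rw [h2k, ho, h]; norm_num⟩,
        ⟨n, le_refl _, by omega, by rw [h2k, he, h]⟩⟩
  · have h2k : n + 1 = 2*(k+1) := by omega
    have he := c.sfun_even (k+1)
    have ho := c.sfun_odd (k+1)
    rcases c.eseq_one (k+1) with h | h
    · exact ⟨⟨n+1, by omega, by omega, by rw [h2k, he, h]⟩,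
        ⟨n+2, by omega, by omega, by rw [show n+2 = 2*(k+1)+1 by omega, ho, h]⟩⟩
    · exact ⟨⟨n+2, by omega, by omega, by rw [show n+2 = 2*(k+1)+1 by omega, ho, h]; norm_num⟩,
        ⟨n+1, by omega, by omega, by rw [h2k, he, h]⟩⟩

end Signs

section Chain2

lemma central_gap {n : ℕ} {a b : ℝ} (h : c.IsGap n a b)
    (hpm : (a+b)/2 ∈ midpoints (c.D (n+1))) :
    ∃ a₀ b₀, c.IsGap (n+1) a₀ b₀ ∧ a₀ + b₀ = a + b ∧ a < a₀ ∧ b₀ < b := by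
  obtain ⟨a₀, ha₀, b₀, hb₀, hab₀, hgap₀, hmid₀⟩ := hpm
  have hg : c.IsGap (n+1) a₀ b₀ := ⟨ha₀, hb₀, hab₀, hgap₀⟩
  have hsum : a₀ + b₀ = a + b := by linarith
  have haD : a ∈ c.D (n+1) := c.hDmono n h.1
  have hbD : b ∈ c.D (n+1) := c.hDmono n h.2.1
  have hab := h.2.2.1
  have hle1 : a ≤ a₀ := by
    by_contra hcon
    push_neg at hcon
    have : a ∈ Set.Ioo a₀ b₀ ∩ c.D (n+1) := ⟨⟨hcon, by linarith⟩, haD⟩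
    rw [hgap₀] at this
    exact this
  have hle2 : b₀ ≤ b := by
    by_contra hcon
    push_neg at hcon
    have : b ∈ Set.Ioo a₀ b₀ ∩ c.D (n+1) := ⟨⟨by linarith, hcon⟩, hbD⟩
    rw [hgap₀] at this
    exact this
  have hstrict : a < a₀ := by
    rcases lt_or_eq_of_le hle1 with h1 | h1
    · exact h1
    · exfalso
      obtain ⟨z, hz, hzD⟩ := c.gap_split h
      have hb0b : b₀ = b := by linarith
      have : z ∈ Set.Ioo a₀ b₀ ∩ c.D (n+1) :=
        ⟨⟨by rw [← h1]; exact hz.1, by rw [hb0b]; exact hz.2⟩, hzD⟩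
      rw [hgap₀] at this
      exact this
  exact ⟨a₀, b₀, hg, hsum, hstrict, by linarith⟩

lemma step_ex' (n : ℕ) {a b : ℝ} (h : c.IsGap n a b) (σ : ℝ) :
    ∃ ab' : ℝ × ℝ, c.IsGap (n+1) ab'.1 ab'.2 ∧ a ≤ ab'.1 ∧ ab'.2 ≤ b ∧
      (σ = 1 → ab'.2 ≤ (a+b)/2) ∧ (σ ≠ 1 → (a+b)/2 ≤ ab'.1) := by
  have hmidm := h.mid_mem
  have haD : a ∈ c.D (n+1) := c.hDmono n h.1
  have hbD : b ∈ c.D (n+1) := c.hDmono n h.2.1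
  have hab := h.2.2.1
  rcases c.hdec n with hA | hB
  · have hpD : (a+b)/2 ∈ c.D (n+1) := hA hmidm
    by_cases hσ : σ = 1
    · obtain ⟨a'', ha'', hg⟩ := c.gap_left haD hpD (by linarith)
      exact ⟨(a'', (a+b)/2), hg, ha'', by linarith, fun _ => le_refl _,
        fun hne => absurd hσ hne⟩
    · obtain ⟨b'', hb'', hg⟩ := c.gap_right hpD hbD (by linarith)
      exact ⟨((a+b)/2, b''), hg, by linarith, hb'', fun h1 => absurd h1 hσ,
        fun _ => le_refl _⟩
  · have hpm : (a+b)/2 ∈ midpoints (c.D (n+1)) := hB.2 hmidm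
    obtain ⟨a₀, b₀, hg₀, hsum, hlt1, hlt2⟩ := c.central_gap h hpm
    have hab₀ := hg₀.2.2.1
    by_cases hσ : σ = 1
    · obtain ⟨a'', ha'', hg⟩ := c.gap_left haD hg₀.1 hlt1
      exact ⟨(a'', a₀), hg, ha'', by linarith, fun _ => by
        show a₀ ≤ (a+b)/2
        linarith, fun hne => absurd hσ hne⟩
    · obtain ⟨b'', hb'', hg⟩ := c.gap_right hg₀.2.1 hbD hlt2
      exact ⟨(b₀, b''), hg, by linarith, hb'', fun h1 => absurd h1 hσ, fun _ => by
        show (a+b)/2 ≤ b₀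
        linarith⟩

noncomputable def chain0 : {ab : ℝ × ℝ // c.IsGap 0 ab.1 ab.2} :=
  ⟨(0, Classical.choose (c.gap_right (c.zero_mem 0) (c.one_mem 0) one_pos)),
   (Classical.choose_spec (c.gap_right (c.zero_mem 0) (c.one_mem 0) one_pos)).2⟩

noncomputable def chainStep (n : ℕ) (p : {ab : ℝ × ℝ // c.IsGap n ab.1 ab.2}) :
    {ab : ℝ × ℝ // c.IsGap (n+1) ab.1 ab.2} :=
  ⟨Classical.choose (c.step_ex' n p.2 (c.sfun n)),
   (Classical.choose_spec (c.step_ex' n p.2 (c.sfun n))).1⟩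

noncomputable def chain (n : ℕ) : {ab : ℝ × ℝ // c.IsGap n ab.1 ab.2} :=
  Nat.rec c.chain0 c.chainStep n

noncomputable def ca (n : ℕ) : ℝ := (c.chain n).1.1

noncomputable def cb (n : ℕ) : ℝ := (c.chain n).1.2

lemma cgap (n : ℕ) : c.IsGap n (c.ca n) (c.cb n) := (c.chain n).2

lemma chain_rel (n : ℕ) :
    c.ca n ≤ c.ca (n+1) ∧ c.cb (n+1) ≤ c.cb n ∧
    (c.sfun n = 1 → c.cb (n+1) ≤ (c.ca n + c.cb n)/2) ∧
    (c.sfun n ≠ 1 → (c.ca n + c.cb n)/2 ≤ c.ca (n+1)) := by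
  have hspec := Classical.choose_spec (c.step_ex' n (c.chain n).2 (c.sfun n))
  exact ⟨hspec.2.1, hspec.2.2.1, hspec.2.2.2.1, hspec.2.2.2.2⟩

lemma ca_mono_le {m n : ℕ} (h : m ≤ n) : c.ca m ≤ c.ca n := by
  induction h with
  | refl => exact le_refl _
  | step h ih => exact le_trans ih (c.chain_rel _).1

lemma cb_anti_le {m n : ℕ} (h : m ≤ n) : c.cb n ≤ c.cb m := by
  induction h with
  | refl => exact le_refl _
  | step h ih => exact le_trans (c.chain_rel _).2.1 ih

lemma ca_lt_cb (n : ℕ) : c.ca n < c.cb n := (c.cgap n).2.2.1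

lemma ca_mem01 (n : ℕ) : c.ca n ∈ Set.Icc (0:ℝ) 1 := c.hDsub n (c.cgap n).1

lemma cb_mem01 (n : ℕ) : c.cb n ∈ Set.Icc (0:ℝ) 1 := c.hDsub n (c.cgap n).2.1

noncomputable def cx : ℝ := ⨆ n, c.ca n

lemma ca_bdd : BddAbove (Set.range c.ca) := by
  refine ⟨1, ?_⟩
  rintro z ⟨n, rfl⟩
  exact (c.ca_mem01 n).2

lemma ca_le_cx (n : ℕ) : c.ca n ≤ c.cx := le_ciSup c.ca_bdd n

lemma cx_le_cb (n : ℕ) : c.cx ≤ c.cb n := by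
  apply ciSup_le
  intro m
  rcases le_total m n with h | h
  · exact le_trans (c.ca_mono_le h) (c.ca_lt_cb n).le
  · exact le_trans (c.ca_lt_cb m).le (c.cb_anti_le h)

lemma cx_mem01 : c.cx ∈ Set.Icc (0:ℝ) 1 :=
  ⟨le_trans (c.ca_mem01 0).1 (c.ca_le_cx 0), le_trans (c.cx_le_cb 0) (c.cb_mem01 0).2⟩

lemma margin_left (n : ℕ) :
    ∃ j, n+1 ≤ j ∧ j ≤ n+3 ∧ c.ρ/2 * c.α j ≤ c.cx - c.ca (n+1) := by
  obtain ⟨j, hj1, hj2, hjs⟩ := (c.exists_sign_window (n+1)).2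
  refine ⟨j, hj1, by omega, ?_⟩
  have hs : c.sfun j ≠ 1 := by rw [hjs]; norm_num
  have hrel := (c.chain_rel j).2.2.2 hs
  have hrho := (c.cgap j).rho_le
  have h1 : c.ca (n+1) ≤ c.ca j := c.ca_mono_le hj1
  have h2 : c.ca (j+1) ≤ c.cx := c.ca_le_cx (j+1)
  linarith

lemma margin_right (n : ℕ) :
    ∃ j, n+1 ≤ j ∧ j ≤ n+3 ∧ c.ρ/2 * c.α j ≤ c.cb (n+1) - c.cx := by
  obtain ⟨j, hj1, hj2, hjs⟩ := (c.exists_sign_window (n+1)).1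
  refine ⟨j, hj1, by omega, ?_⟩
  have hrel := (c.chain_rel j).2.2.1 hjs
  have hrho := (c.cgap j).rho_le
  have h1 : c.cb j ≤ c.cb (n+1) := c.cb_anti_le hj1
  have h2 : c.cx ≤ c.cb (j+1) := c.cx_le_cb (j+1)
  linarith

lemma margin_left_pos (n : ℕ) : 0 < c.cx - c.ca (n+1) := by
  obtain ⟨j, _, _, hj⟩ := c.margin_left n
  have := c.alpha_pos j
  have := c.hρ0
  nlinarith

lemma margin_right_pos (n : ℕ) : 0 < c.cb (n+1) - c.cx := by
  obtain ⟨j, _, _, hj⟩ := c.margin_right n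
  have := c.alpha_pos j
  have := c.hρ0
  nlinarith

lemma chain_affine (m : ℕ) {y : ℝ} (hy : y ∈ Set.Icc (c.ca (m+1)) (c.cb (m+1))) :
    infDist y (c.D m) = if c.sfun m = 1 then y - c.ca m else c.cb m - y := by
  have hrel := c.chain_rel m
  have hy' : y ∈ Set.Icc (c.ca m) (c.cb m) := ⟨le_trans hrel.1 hy.1, le_trans hy.2 hrel.2.1⟩
  rw [c.infDist_gap (c.cgap m) hy']
  by_cases hs : c.sfun m = 1
  · rw [if_pos hs]
    exact min_eq_left (by linarith [hrel.2.2.1 hs, hy.2])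
  · rw [if_neg hs]
    exact min_eq_right (by linarith [hrel.2.2.2 hs, hy.1])

end Chain2

section Dir2

lemma lip_infDist (s : Set ℝ) (y z : ℝ) : |infDist y s - infDist z s| ≤ |y - z| := by
  rw [abs_sub_le_iff]
  constructor
  · have h := infDist_le_infDist_add_dist (x := y) (y := z) (s := s)
    rw [Real.dist_eq] at h
    linarith [le_abs_self (y - z), neg_abs_le (y - z)]
  · have h := infDist_le_infDist_add_dist (x := z) (y := y) (s := s)
    rw [Real.dist_eq, abs_sub_comm] at h
    linarith [le_abs_self (y - z), neg_abs_le (y - z)]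

lemma gdiff_le_alpha {m : ℕ} {y z : ℝ} (hy : y ∈ Set.Icc (0:ℝ) 1)
    (hz : z ∈ Set.Icc (0:ℝ) 1) :
    |infDist y (c.D m) - infDist z (c.D m)| ≤ c.α m := by
  have h1 := c.infDist_le_alpha (n := m) hy
  have h2 := c.infDist_le_alpha (n := m) hz
  have h3 : (0:ℝ) ≤ infDist y (c.D m) := infDist_nonneg
  have h4 : (0:ℝ) ≤ infDist z (c.D m) := infDist_nonneg
  rw [abs_sub_le_iff]
  constructor <;> linarith

theorem dir2 (hw : Tendsto c.w atTop (𝓝 0)) :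
    DifferentiableWithinAt ℝ c.Tfun (Set.Icc 0 1) c.cx := by
  classical
  obtain ⟨S, hS⟩ := c.Sseq_conv hw
  apply HasDerivWithinAt.differentiableWithinAt (f' := S)
  rw [hasDerivWithinAt_iff_isLittleO, Asymptotics.isLittleO_iff]
  intro C hC
  have hρ0 := c.hρ0
  set Kc : ℝ := 4 + 2/(c.ρ*c.ρ*c.ρ) with hKc
  have hKcpos : 0 < Kc := by positivity
  set εw : ℝ := C/(2*Kc) with hεwdef
  have hεw : 0 < εw := by positivity
  obtain ⟨N₁, hN₁⟩ := Metric.tendsto_atTop.1 hS (C/2) (by linarith)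
  obtain ⟨N₂, hN₂⟩ := Metric.tendsto_atTop.1 hw εw hεw
  set N := max N₁ N₂ with hNdef
  set δ := min (c.cx - c.ca (N+1)) (c.cb (N+1) - c.cx) with hδdef
  have hδpos : 0 < δ := lt_min (c.margin_left_pos N) (c.margin_right_pos N)
  rw [Filter.eventually_iff, mem_nhdsWithin_iff]
  refine ⟨δ, hδpos, ?_⟩
  rintro y ⟨hyball, hy01⟩
  simp only [Set.mem_setOf_eq, Real.norm_eq_abs, smul_eq_mul]
  by_cases hyx : y = c.cx
  · rw [hyx]
    simp
  -- main case
  have hdist : |y - c.cx| < δ := by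
    rw [Metric.mem_ball, Real.dist_eq] at hyball
    exact hyball
  have habs : 0 < |y - c.cx| := abs_pos.2 (sub_ne_zero.2 hyx)
  have habs' := abs_lt.1 hdist
  have hyN : y ∈ Set.Icc (c.ca (N+1)) (c.cb (N+1)) := by
    constructor
    · have := min_le_left (c.cx - c.ca (N+1)) (c.cb (N+1) - c.cx)
      rw [← hδdef] at this
      linarith [habs'.1]
    · have := min_le_right (c.cx - c.ca (N+1)) (c.cb (N+1) - c.cx)
      rw [← hδdef] at this
      linarith [habs'.2]
  -- the maximal level n with y ∈ [ca n, cb n]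
  set Sst : Set ℕ := {m : ℕ | y ∈ Set.Icc (c.ca m) (c.cb m)} with hSstdef
  have hN1mem : N+1 ∈ Sst := hyN
  obtain ⟨M, hM⟩ := Filter.eventually_atTop.1
    ((c.hα.tendsto_atTop_zero).eventually (gt_mem_nhds habs))
  have hbdd : ∀ m ∈ Sst, m ≤ M := by
    intro m hm
    by_contra hcon
    push_neg at hcon
    have hαm : c.α m < |y - c.cx| := hM m hcon.le
    have hy' : y ∈ Set.Icc (c.ca m) (c.cb m) := hm
    have hx' : c.cx ∈ Set.Icc (c.ca m) (c.cb m) := ⟨c.ca_le_cx m, c.cx_le_cb m⟩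
    have hlen := (c.cgap m).le_alpha
    have : |y - c.cx| ≤ c.cb m - c.ca m := by
      rw [abs_sub_le_iff]
      constructor <;> [linarith [hy'.1, hy'.2, hx'.1, hx'.2]; linarith [hy'.1, hy'.2, hx'.1, hx'.2]]
    linarith
  have hSbdd : BddAbove Sst := ⟨M, hbdd⟩
  set n := sSup Sst with hndef
  have hnmem : y ∈ Set.Icc (c.ca n) (c.cb n) := Nat.sSup_mem ⟨N+1, hN1mem⟩ hSbdd
  have hnN : N+1 ≤ n := le_csSup hSbdd hN1mem
  have hnot : y ∉ Set.Icc (c.ca (n+1)) (c.cb (n+1)) := by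
    intro hcon
    have : n+1 ≤ n := le_csSup hSbdd hcon
    omega
  -- decomposition
  set F : ℕ → ℝ := fun m => c.w m * infDist y (c.D m) - c.w m * infDist c.cx (c.D m)
    with hFdef
  have hsy := c.summable_term hy01
  have hsx := c.summable_term c.cx_mem01
  have hsF : Summable F := hsy.sub hsx
  have hTF : c.Tfun y - c.Tfun c.cx = ∑' m, F m := (Summable.tsum_sub hsy hsx).symm
  have hsplit := Summable.sum_add_tsum_nat_add (f := F) (n+4) hsF
  have hhead : ∑ m ∈ Finset.range n, F m = c.Sseq n * (y - c.cx) := by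
    unfold Sseq
    rw [Finset.sum_mul]
    apply Finset.sum_congr rfl
    intro m hm
    rw [Finset.mem_range] at hm
    have hmn : m + 1 ≤ n := hm
    have hymem : y ∈ Set.Icc (c.ca (m+1)) (c.cb (m+1)) :=
      ⟨le_trans (c.ca_mono_le hmn) hnmem.1, le_trans hnmem.2 (c.cb_anti_le hmn)⟩
    have hxmem : c.cx ∈ Set.Icc (c.ca (m+1)) (c.cb (m+1)) :=
      ⟨c.ca_le_cx (m+1), c.cx_le_cb (m+1)⟩
    rw [hFdef]
    simp only
    rw [c.chain_affine m hymem, c.chain_affine m hxmem]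
    by_cases hs : c.sfun m = 1
    · rw [if_pos hs, if_pos hs, hs]
      ring
    · have hs' : c.sfun m = -1 := (c.sfun_one m).resolve_left hs
      rw [if_neg hs, if_neg hs, hs']
      ring
  -- bounds for middle terms
  have hmid : ∀ m, N₂ ≤ m → |F m| ≤ εw * |y - c.cx| := by
    intro m hm
    have hwm : |c.w m| ≤ εw := by
      have := hN₂ m hm
      rw [Real.dist_eq, sub_zero] at this
      exact this.le
    rw [hFdef]
    simp only
    rw [← mul_sub, abs_mul]
    exact mul_le_mul hwm (lip_infDist _ _ _) (abs_nonneg _) hεw.le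
  -- tail bound
  have htail1 : ∀ i : ℕ, |F (i + (n+4))| ≤ εw * c.α ((n+4) + i) := by
    intro i
    have hwm : |c.w (i + (n+4))| ≤ εw := by
      have h1 : N₂ ≤ i + (n+4) := by
        have : N₂ ≤ N := le_max_right N₁ N₂
        omega
      have := hN₂ _ h1
      rw [Real.dist_eq, sub_zero] at this
      exact this.le
    rw [hFdef]
    simp only
    rw [← mul_sub, abs_mul]
    calc |c.w (i + (n+4))| * |infDist y (c.D (i + (n+4))) - infDist c.cx (c.D (i + (n+4)))|
        ≤ εw * c.α (i + (n+4)) :=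
          mul_le_mul hwm (c.gdiff_le_alpha hy01 c.cx_mem01) (abs_nonneg _) hεw.le
    _ = εw * c.α ((n+4) + i) := by rw [Nat.add_comm i (n+4)]
  have hsFt : Summable (fun i => F (i + (n+4))) := (summable_nat_add_iff (n+4)).2 hsF
  have hsαt : Summable (fun i => εw * c.α ((n+4) + i)) :=
    (c.summable_alpha_shift (n+4)).mul_left εw
  have htail : |∑' i, F (i + (n+4))| ≤ εw * (2 * c.α (n+4) / c.ρ) := by
    calc |∑' i, F (i + (n+4))| ≤ ∑' i, |F (i + (n+4))| := by
          have := norm_tsum_le_tsum_norm (f := fun i => F (i + (n+4))) (hsFt.abs.congr (by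
            intro i
            rw [Real.norm_eq_abs]))
          simpa [Real.norm_eq_abs] using this
    _ ≤ ∑' i, εw * c.α ((n+4) + i) := Summable.tsum_le_tsum htail1 (hsFt.abs.congr (by
          intro i
          rfl)) hsαt
    _ = εw * ∑' i, c.α ((n+4) + i) := tsum_mul_left
    _ ≤ εw * (2 * c.α (n+4) / c.ρ) :=
          mul_le_mul_of_nonneg_left (c.tail_alpha (n+4)) hεw.le
  -- scale bound : α (n+4) ≤ |y - cx| / ρ²
  have hscale : c.α (n+4) ≤ |y - c.cx| / (c.ρ * c.ρ) := by
    have hcase : (c.ρ/2 * c.α (n+4) ≤ |y - c.cx| → True) := fun _ => trivial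
    have key : ∃ j, n+1 ≤ j ∧ j ≤ n+3 ∧ c.ρ/2 * c.α j ≤ |y - c.cx| := by
      rw [Set.mem_Icc] at hnot
      rcases not_and_or.1 hnot with hl | hr
      · push_neg at hl
        obtain ⟨j, hj1, hj2, hj3⟩ := c.margin_left n
        refine ⟨j, hj1, hj2, ?_⟩
        have : c.ca (n+1) ≤ c.cx := le_trans (c.ca_mono_le (by omega)) (c.ca_le_cx (n+1))
        calc c.ρ/2 * c.α j ≤ c.cx - c.ca (n+1) := hj3
        _ ≤ c.cx - y := by linarith
        _ ≤ |y - c.cx| := by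
            rw [abs_sub_comm]
            exact le_abs_self _
      · push_neg at hr
        obtain ⟨j, hj1, hj2, hj3⟩ := c.margin_right n
        refine ⟨j, hj1, hj2, ?_⟩
        calc c.ρ/2 * c.α j ≤ c.cb (n+1) - c.cx := hj3
        _ ≤ y - c.cx := by linarith
        _ ≤ |y - c.cx| := le_abs_self _
    obtain ⟨j, hj1, hj2, hj3⟩ := key
    have hk : n+4 = j + (n+4-j) := by omega
    have hk1 : 1 ≤ n+4-j := by omega
    have hdecay := c.alpha_decay j (n+4-j)
    rw [← hk] at hdecay
    have h2k : (2:ℝ) ≤ 2^(n+4-j) := by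
      calc (2:ℝ) = 2^1 := by norm_num
      _ ≤ 2^(n+4-j) := by
          apply pow_le_pow_right₀ (by norm_num)
          exact hk1
    have e2 : c.α (n+4) * (c.ρ * 2^(n+4-j)) ≤ c.α j := by
      rw [← le_div_iff₀ (by positivity : (0:ℝ) < c.ρ * 2^(n+4-j))]
      exact hdecay
    have e1 : c.α (n+4) * (c.ρ * 2) ≤ c.α (n+4) * (c.ρ * 2^(n+4-j)) := by
      have hnn : 0 ≤ c.α (n+4) * c.ρ := mul_nonneg (c.alpha_pos (n+4)).le hρ0.le
      have := mul_le_mul_of_nonneg_left h2k hnn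
      calc c.α (n+4) * (c.ρ * 2) = c.α (n+4) * c.ρ * 2 := by ring
      _ ≤ c.α (n+4) * c.ρ * 2^(n+4-j) := this
      _ = c.α (n+4) * (c.ρ * 2^(n+4-j)) := by ring
    have e3 : c.α j * c.ρ ≤ 2 * |y - c.cx| := by nlinarith [hj3]
    have e4 : c.α (n+4) * (c.ρ * 2) * c.ρ ≤ c.α j * c.ρ :=
      mul_le_mul_of_nonneg_right (e1.trans e2) hρ0.le
    rw [le_div_iff₀ (by positivity : (0:ℝ) < c.ρ * c.ρ)]
    nlinarith [e4, e3]
  -- final assembly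
  have hdecomp : c.Tfun y - c.Tfun c.cx - (y - c.cx) * S
      = (c.Sseq n - S) * (y - c.cx) + (F n + F (n+1) + F (n+2) + F (n+3))
        + ∑' i, F (i + (n+4)) := by
    have hr : ∑ m ∈ Finset.range (n+4), F m
        = c.Sseq n * (y - c.cx) + (F n + F (n+1) + F (n+2) + F (n+3)) := by
      rw [Finset.sum_range_succ, Finset.sum_range_succ, Finset.sum_range_succ,
        Finset.sum_range_succ, hhead]
      ring
    rw [hTF, ← hsplit, hr]
    ring
  have hN₂N : N₂ ≤ N := le_max_right N₁ N₂
  have hN₁N : N₁ ≤ N := le_max_left N₁ N₂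
  have hb1 : |c.Sseq n - S| ≤ C/2 := by
    have := hN₁ n (by omega)
    rw [Real.dist_eq] at this
    exact this.le
  have hm0 : |F n| ≤ εw * |y - c.cx| := hmid n (by omega)
  have hm1 : |F (n+1)| ≤ εw * |y - c.cx| := hmid (n+1) (by omega)
  have hm2 : |F (n+2)| ≤ εw * |y - c.cx| := hmid (n+2) (by omega)
  have hm3 : |F (n+3)| ≤ εw * |y - c.cx| := hmid (n+3) (by omega)
  have htail2 : |∑' i, F (i + (n+4))| ≤ εw * (2 / (c.ρ*c.ρ*c.ρ)) * |y - c.cx| := by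
    calc |∑' i, F (i + (n+4))| ≤ εw * (2 * c.α (n+4) / c.ρ) := htail
    _ ≤ εw * (2 * (|y - c.cx| / (c.ρ*c.ρ)) / c.ρ) := by gcongr
    _ = εw * (2 / (c.ρ*c.ρ*c.ρ)) * |y - c.cx| := by field_simp
  have hKcε : εw * Kc = C/2 := by
    rw [hεwdef]
    field_simp
  calc |c.Tfun y - c.Tfun c.cx - (y - c.cx) * S|
      = |(c.Sseq n - S) * (y - c.cx) + (F n + F (n+1) + F (n+2) + F (n+3))
        + ∑' i, F (i + (n+4))| := by rw [hdecomp]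
  _ ≤ |(c.Sseq n - S) * (y - c.cx) + (F n + F (n+1) + F (n+2) + F (n+3))|
        + |∑' i, F (i + (n+4))| := abs_add_le _ _
  _ ≤ |(c.Sseq n - S) * (y - c.cx)| + |F n + F (n+1) + F (n+2) + F (n+3)|
        + |∑' i, F (i + (n+4))| := by gcongr ?_ + _; exact abs_add_le _ _
  _ ≤ |(c.Sseq n - S)| * |y - c.cx| + (|F n| + |F (n+1)| + |F (n+2)| + |F (n+3)|)
        + |∑' i, F (i + (n+4))| := by
        gcongr ?_ + ?_ + _
        · rw [abs_mul]
        · calc |F n + F (n+1) + F (n+2) + F (n+3)|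
              ≤ |F n + F (n+1) + F (n+2)| + |F (n+3)| := abs_add_le _ _
          _ ≤ |F n + F (n+1)| + |F (n+2)| + |F (n+3)| := by gcongr ?_ + _; exact abs_add_le _ _
          _ ≤ |F n| + |F (n+1)| + |F (n+2)| + |F (n+3)| := by
              gcongr ?_ + _ + _
              exact abs_add_le _ _
  _ ≤ (C/2) * |y - c.cx| + (εw * |y - c.cx| + εw * |y - c.cx| + εw * |y - c.cx|
        + εw * |y - c.cx|) + εw * (2 / (c.ρ*c.ρ*c.ρ)) * |y - c.cx| := by
        gcongr
  _ = (C/2 + εw * Kc) * |y - c.cx| := by rw [hKc]; ring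
  _ = C * |y - c.cx| := by rw [hKcε]; ring

end Dir2

end TCtx

end

theorem stmt13
(D : ℕ → Set ℝ) (α : ℕ → ℝ) (ρ : ℝ) (w : ℕ → ℝ)
    (hD0 : (0 : ℝ) ∈ D 0) (hD1 : (1 : ℝ) ∈ D 0)
    (hDsub : ∀ n, D n ⊆ Set.Icc 0 1)
    (hDfin : ∀ n, (D n).Finite)
    (hDmono : ∀ n, D n ⊆ D (n + 1))
    (hρ : ρ ∈ Set.Ioc (0 : ℝ) 1)
    (hα : Summable α)
    (hgapU : ∀ n, ∀ a ∈ D n, ∀ b ∈ D n, a < b → Set.Ioo a b ∩ D n = ∅ → b - a ≤ α n)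
    (hgapL : ∀ n, ∀ a ∈ D n, ∀ b ∈ D n, a < b → ρ * α n ≤ b - a)
    (hwα : Summable (fun n => |w n * α n|))
    (hdec : ∀ n, midpoints (D n) ⊆ D (n + 1) ∨
      ((∀ a ∈ D n, ∀ b ∈ D n, a < b → Set.Ioo a b ∩ D n = ∅ →
          (Set.Ioo a b ∩ D (n + 1)).Nonempty) ∧
        midpoints (D n) ⊆ midpoints (D (n + 1)))) :
    (∀ x ∈ Set.Icc (0 : ℝ) 1,
        ¬ DifferentiableWithinAt ℝ (fun z => ∑' n : ℕ, w n * Metric.infDist z (D n))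
          (Set.Icc 0 1) x) ↔ ¬ Tendsto w atTop (𝓝 0) := by
  let c : TCtx := ⟨D, α, ρ, w, hD0, hD1, hDsub, hDfin, hDmono, hρ.1, hρ.2, hα,
    hgapU, hgapL, hwα, hdec⟩
  constructor
  · intro hforall hTw
    exact hforall c.cx c.cx_mem01 (c.dir2 hTw)
  · intro hTw x hx hdiff
    exact hTw (c.dir1 hx hdiff)
end

section
/- Assume ρ > 1/2 and (wₙ) does not tend to 0. Let x ∈ D₁ with w₀ = 0, and for each n let yₙ be the point of Dₙ with (x, yₙ) a connected component of [0,1] \ Dₙ; assume y_{n+1} < yₙ for all n. Then T_w has no finite right derivative at x. -/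
open Filter Topology

set_option maxHeartbeats 1000000 in
theorem stmt14
(D : ℕ → Set ℝ) (α : ℕ → ℝ) (ρ : ℝ) (w : ℕ → ℝ)
    (hD0 : (0 : ℝ) ∈ D 0) (hD1 : (1 : ℝ) ∈ D 0)
    (hDsub : ∀ n, D n ⊆ Set.Icc 0 1)
    (hDfin : ∀ n, (D n).Finite)
    (hDmono : ∀ n, D n ⊆ D (n + 1))
    (hρ : ρ ∈ Set.Ioc (0 : ℝ) 1)
    (hα : Summable α)
    (hgapU : ∀ n, ∀ a ∈ D n, ∀ b ∈ D n, a < b → Set.Ioo a b ∩ D n = ∅ → b - a ≤ α n)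
    (hgapL : ∀ n, ∀ a ∈ D n, ∀ b ∈ D n, a < b → ρ * α n ≤ b - a)
    (hwα : Summable (fun n => |w n * α n|))
    (hρ2 : 1 / 2 < ρ) (hwc0 : ¬ Tendsto w atTop (𝓝 0)) (hw0 : w 0 = 0)
    (x : ℝ) (hx : x ∈ D 1) (hx01 : x ∈ Set.Ioo (0 : ℝ) 1)
    (y : ℕ → ℝ)
    (hy : ∀ n, 1 ≤ n → y n ∈ D n ∧ x < y n ∧ Set.Ioo x (y n) ∩ D n = ∅)
    (hydec : ∀ n, 1 ≤ n → y (n + 1) < y n) :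
    ¬ DifferentiableWithinAt ℝ (fun z => ∑' n : ℕ, w n * Metric.infDist z (D n))
        (Set.Icc x 1) x := by
  intro hdiff
  have hρ0 : 0 < ρ := hρ.1
  have hρ1 : ρ ≤ 1 := hρ.2
  have hmono : Monotone D := monotone_nat_of_le_succ hDmono
  have hxk : ∀ k, 1 ≤ k → x ∈ D k := fun k hk => hmono hk hx
  have hyD : ∀ n, 1 ≤ n → y n ∈ D n := fun n hn => (hy n hn).1
  have hxy : ∀ n, 1 ≤ n → x < y n := fun n hn => (hy n hn).2.1
  have hhle : ∀ n, 1 ≤ n → y n - x ≤ α n := fun n hn =>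
    hgapU n x (hxk n hn) (y n) (hyD n hn) (hxy n hn) (hy n hn).2.2
  have hhge : ∀ n, 1 ≤ n → ρ * α n ≤ y n - x := fun n hn =>
    hgapL n x (hxk n hn) (y n) (hyD n hn) (hxy n hn)
  have hpos : ∀ n, 1 ≤ n → 0 < y n - x := fun n hn => by linarith [hxy n hn]
  have hαpos : ∀ n, 1 ≤ n → 0 < α n := fun n hn => lt_of_lt_of_le (hpos n hn) (hhle n hn)
  have hyy : ∀ k n, 1 ≤ k → k < n → y n < y k := by
    intro k n hk hkn
    induction n with
    | zero => omega
    | succ n ih =>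
      rcases Nat.lt_or_ge k n with h | h
      · exact lt_trans (hydec n (by omega)) (ih h)
      · have : k = n := by omega
        subst this
        exact hydec k hk
  have hsep : ∀ k n, 1 ≤ k → k < n → ρ * α n ≤ y k - y n := fun k n hk hkn =>
    hgapL n (y n) (hyD n (by omega)) (y k) (hmono hkn.le (hyD k hk)) (hyy k n hk hkn)
  have hstep2 : ∀ n, 1 ≤ n → 2 * ρ * α (n + 1) ≤ α n := by
    intro n hn
    have h1 := hhge (n + 1) (by omega)
    have h2 : ρ * α (n + 1) ≤ y n - y (n + 1) := hsep n (n + 1) hn (by omega)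
    have h3 := hhle n hn
    linarith
  have hchain : ∀ k n, 1 ≤ k → k ≤ n → (2 * ρ) ^ (n - k) * α n ≤ α k := by
    intro k n hk hkn
    induction n with
    | zero => exact absurd hkn (by omega)
    | succ n ih =>
      rcases Nat.lt_or_ge n k with h | h
      · have : k = n + 1 := by omega
        subst this
        simp
      · have h1 : (2 * ρ) ^ (n - k) * α n ≤ α k := ih h
        have h2 : 2 * ρ * α (n + 1) ≤ α n := hstep2 n (by omega)
        have h3 : n + 1 - k = (n - k) + 1 := by omega
        have hp : (0:ℝ) ≤ (2 * ρ) ^ (n - k) := by positivity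
        rw [h3, pow_succ]
        calc (2 * ρ) ^ (n - k) * (2 * ρ) * α (n + 1)
            = (2 * ρ) ^ (n - k) * (2 * ρ * α (n + 1)) := by ring
          _ ≤ (2 * ρ) ^ (n - k) * α n := mul_le_mul_of_nonneg_left h2 hp
          _ ≤ α k := h1
  -- infDist computations
  have hg0 : ∀ k n, 1 ≤ n → n ≤ k → Metric.infDist (y n) (D k) = 0 :=
    fun k n hn hnk => Metric.infDist_zero_of_mem (hmono hnk (hyD n hn))
  have hgk : ∀ k n, 1 ≤ k → k < n →
      Metric.infDist (y n) (D k) = min (y n - x) (y k - y n) := by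
    intro k n hk hkn
    have hn1 : 1 ≤ n := by omega
    have hkx := hxk k hk
    refine le_antisymm (le_min ?_ ?_) ?_
    · have h := Metric.infDist_le_dist_of_mem (x := y n) hkx
      rwa [Real.dist_eq, abs_of_pos (hpos n hn1)] at h
    · have h := Metric.infDist_le_dist_of_mem (x := y n) (hyD k hk)
      rw [Real.dist_eq, abs_of_neg (by linarith [hyy k n hk hkn])] at h
      linarith
    · refine le_of_not_gt fun hlt => ?_
      obtain ⟨p, hp, hd⟩ := (Metric.infDist_lt_iff ⟨x, hkx⟩).1 hlt
      rw [Real.dist_eq] at hd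
      rcases le_or_gt p x with h | h
      · have : y n - p ≥ y n - x := by linarith
        have habs : |y n - p| = y n - p := abs_of_pos (by linarith [hpos n hn1])
        have := min_le_left (y n - x) (y k - y n)
        linarith [habs ▸ hd]
      · have hpk : y k ≤ p := by
          by_contra hc
          push_neg at hc
          have hmem : p ∈ Set.Ioo x (y k) ∩ D k := ⟨⟨h, hc⟩, hp⟩
          rw [(hy k hk).2.2] at hmem
          exact hmem
        have habs : |y n - p| = p - y n := by
          rw [abs_sub_comm]
          exact abs_of_nonneg (by linarith [hyy k n hk hkn])
        have := min_le_right (y n - x) (y k - y n)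
        linarith [habs ▸ hd]
  set T : ℝ → ℝ := fun z => ∑' n, w n * Metric.infDist z (D n) with hTdef
  have hTx : T x = 0 := by
    have h : ∀ k, w k * Metric.infDist x (D k) = 0 := by
      intro k
      rcases Nat.eq_zero_or_pos k with rfl | hk
      · simp [hw0]
      · rw [Metric.infDist_zero_of_mem (hxk k hk), mul_zero]
    simp only [hTdef]
    rw [tsum_eq_sum (s := ∅) (fun b _ => h b)]
    simp
  have hTy : ∀ n, 1 ≤ n →
      T (y n) = ∑ k ∈ Finset.Ico 1 n, w k * min (y n - x) (y k - y n) := by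
    intro n hn
    simp only [hTdef]
    rw [tsum_eq_sum (s := Finset.Ico 1 n) ?_]
    · exact Finset.sum_congr rfl fun k hk => by
        rw [Finset.mem_Ico] at hk
        rw [hgk k n hk.1 hk.2]
    · intro k hk
      rw [Finset.mem_Ico, not_and_or, not_le, not_lt] at hk
      rcases hk with hk | hk
      · have : k = 0 := by omega
        subst this
        simp [hw0]
      · rw [hg0 k n hn hk, mul_zero]
  -- r and Q
  set r : ℕ → ℕ → ℝ := fun n k => min (y n - x) (y k - y n) / (y n - x) with hrdef
  set Q : ℕ → ℝ := fun n => ∑ k ∈ Finset.Ico 1 n, w k * r n k with hQdef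
  have hrlb : ∀ k n, 1 ≤ k → k < n → ρ ≤ r n k := by
    intro k n hk hkn
    have hn1 : 1 ≤ n := by omega
    have h1 : ρ * (y n - x) ≤ ρ * α n :=
      mul_le_mul_of_nonneg_left (hhle n hn1) hρ0.le
    have h2 : ρ * α n ≤ min (y n - x) (y k - y n) :=
      le_min (hhge n hn1) (hsep k n hk hkn)
    simp only [hrdef]
    rw [le_div_iff₀ (hpos n hn1)]
    linarith
  have hrub : ∀ k n, 1 ≤ n → r n k ≤ 1 := by
    intro k n hn
    simp only [hrdef]
    exact div_le_one_of_le₀ (min_le_left _ _) (hpos n hn).le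
  -- slope tendsto
  set c := derivWithin T (Set.Icc x 1) x with hcdef
  have hder : HasDerivWithinAt T c (Set.Icc x 1) x := hdiff.hasDerivWithinAt
  have hslope := hasDerivWithinAt_iff_tendsto_slope.1 hder
  have hαt : Tendsto α atTop (𝓝 0) := hα.tendsto_atTop_zero
  have hy_tendsto : Tendsto y atTop (𝓝 x) := by
    have h1 : Tendsto (fun n => x + α n) atTop (𝓝 (x + 0)) := tendsto_const_nhds.add hαt
    rw [add_zero] at h1
    refine tendsto_of_tendsto_of_tendsto_of_le_of_le' tendsto_const_nhds h1 ?_ ?_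
    · filter_upwards [eventually_ge_atTop 1] with n hn
      exact (hxy n hn).le
    · filter_upwards [eventually_ge_atTop 1] with n hn
      linarith [hhle n hn]
  have hQ0 : Tendsto (fun n => slope T x (y n)) atTop (𝓝 c) := by
    apply hslope.comp
    rw [tendsto_nhdsWithin_iff]
    refine ⟨hy_tendsto, ?_⟩
    filter_upwards [eventually_ge_atTop 1] with n hn
    exact ⟨⟨(hxy n hn).le, (hDsub n (hyD n hn)).2⟩, fun h => by
      simp only [Set.mem_singleton_iff] at h
      exact absurd h (hxy n hn).ne'⟩
  have hQc : Tendsto Q atTop (𝓝 c) := by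
    refine hQ0.congr' ?_
    filter_upwards [eventually_ge_atTop 1] with n hn
    rw [slope_def_field, hTy n hn, hTx, sub_zero, Finset.sum_div]
    exact Finset.sum_congr rfl fun k _ => (mul_div_assoc _ _ _)
  -- decomposition
  have hdecomp : ∀ n, 1 ≤ n →
      Q (n + 1) - Q n
        = w n * r (n + 1) n + ∑ k ∈ Finset.Ico 1 n, w k * (r (n + 1) k - r n k) := by
    intro n hn
    simp only [hQdef]
    rw [Finset.sum_Ico_succ_top hn]
    simp only [mul_sub]
    rw [Finset.sum_sub_distrib]
    ring
  have hnear : ∀ k n, 1 ≤ k → k < n → (y n - x ≤ y k - y n) → r (n + 1) k - r n k = 0 := by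
    intro k n hk hkn hle
    have hn1 : 1 ≤ n := by omega
    have h1 : r n k = 1 := by
      simp only [hrdef]
      rw [min_eq_left hle, div_self (hpos n hn1).ne']
    have hdn := hydec n hn1
    have h2 : r (n + 1) k = 1 := by
      simp only [hrdef]
      rw [min_eq_left (by linarith), div_self (hpos (n + 1) (by omega)).ne']
    rw [h1, h2, sub_self]
  have hfar2 : ∀ k' k n, 1 ≤ k' → k' < k → k < n → y n - x ≤ y k' - y n := by
    intro k' k n hk' hk'k hkn
    have hk1 : 1 ≤ k := by omega
    have hn1 : 1 ≤ n := by omega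
    have h1 : ρ * α k ≤ y k' - y k :=
      hgapL k (y k) (hyD k hk1) (y k') (hmono hk'k.le (hyD k' hk')) (hyy k' k hk' hk'k)
    have h2 : ρ * α n ≤ y k - y n := hsep k n hk1 hkn
    have h3 : (2 * ρ) ^ (n - k) * α n ≤ α k := hchain k n hk1 hkn.le
    have h4 : (2 * ρ) ^ 1 ≤ (2 * ρ) ^ (n - k) := pow_le_pow_right₀ (by linarith) (by omega)
    have h5 : 2 * ρ * α n ≤ (2 * ρ) ^ (n - k) * α n := by
      have := hαpos n hn1
      nlinarith
    have h6 : 2 * ρ * α n ≤ α k := le_trans h5 h3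
    have h7 : ρ * (2 * ρ * α n) ≤ ρ * α k := mul_le_mul_of_nonneg_left h6 hρ0.le
    have h8 := hhle n hn1
    have h9 : (0:ℝ) ≤ (2 * ρ ^ 2 + ρ - 1) * α n := by
      have ha := hαpos n hn1
      nlinarith [mul_nonneg (mul_nonneg (by linarith : (0:ℝ) ≤ 2 * ρ - 1)
        (by linarith : (0:ℝ) ≤ ρ + 1)) ha.le]
    nlinarith
  -- the window constant
  obtain ⟨M, hM1, hMp⟩ : ∃ M, 1 ≤ M ∧ 2 / ρ < (2 * ρ) ^ M := by
    obtain ⟨M, hM⟩ := pow_unbounded_of_one_lt (2 / ρ) (by linarith : (1:ℝ) < 2 * ρ)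
    exact ⟨M + 1, by omega, lt_of_lt_of_le hM (pow_le_pow_right₀ (by linarith) (by omega))⟩
  have hwindow : ∀ k n, 1 ≤ k → k < n → (y k - y n < y n - x) → n ≤ k + M := by
    intro k n hk hkn hfar
    by_contra hcon
    push_neg at hcon
    have hn1 : 1 ≤ n := by omega
    have h1 : (2 * ρ) ^ M ≤ (2 * ρ) ^ (n - k) := pow_le_pow_right₀ (by linarith) (by omega)
    have h2 : (2 * ρ) ^ (n - k) * α n ≤ α k := hchain k n hk hkn.le
    have h3 : ρ * α k ≤ y k - x := hhge k hk
    have h4 : y k - x < 2 * (y n - x) := by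
      have : y k - x = (y k - y n) + (y n - x) := by ring
      linarith
    have h5 := hhle n hn1
    have h6 := hαpos n hn1
    have hA : 2 / ρ * α n < (2 * ρ) ^ M * α n := mul_lt_mul_of_pos_right hMp h6
    have hB : (2 * ρ) ^ M * α n ≤ (2 * ρ) ^ (n - k) * α n :=
      mul_le_mul_of_nonneg_right h1 h6.le
    have hC : 2 / ρ * α n < α k := lt_of_lt_of_le hA (le_trans hB h2)
    have hF : ρ * (2 / ρ * α n) < ρ * α k := by
      exact mul_lt_mul_of_pos_left hC hρ0
    have hEq : ρ * (2 / ρ * α n) = 2 * α n := by field_simp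
    rw [hEq] at hF
    linarith
  -- the key step inequality
  have hstep : ∀ n, 2 ≤ n → ∃ k, 1 ≤ k ∧ k < n ∧ n ≤ k + M ∧
      ρ * |w n| ≤ |Q (n + 1) - Q n| + (1 - ρ) * |w k| := by
    intro n hn2
    have hn1 : 1 ≤ n := by omega
    have hrn : ρ ≤ r (n + 1) n := hrlb n (n + 1) hn1 (by omega)
    have habs : ρ * |w n| ≤ |w n * r (n + 1) n| := by
      rw [abs_mul, abs_of_nonneg (le_trans hρ0.le hrn)]
      calc ρ * |w n| = |w n| * ρ := mul_comm _ _
        _ ≤ |w n| * r (n + 1) n := mul_le_mul_of_nonneg_left hrn (abs_nonneg _)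
    by_cases hfar : ∃ k, 1 ≤ k ∧ k < n ∧ y k - y n < y n - x
    · obtain ⟨k₀, hk₀1, hk₀n, hk₀f⟩ := hfar
      refine ⟨k₀, hk₀1, hk₀n, hwindow _ _ hk₀1 hk₀n hk₀f, ?_⟩
      have hsum : ∑ k ∈ Finset.Ico 1 n, w k * (r (n + 1) k - r n k)
          = w k₀ * (r (n + 1) k₀ - r n k₀) := by
        refine Finset.sum_eq_single_of_mem k₀ (Finset.mem_Ico.2 ⟨hk₀1, hk₀n⟩) ?_
        intro k hk hne
        rw [Finset.mem_Ico] at hk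
        rcases le_or_gt (y n - x) (y k - y n) with hle | hlt
        · rw [hnear k n hk.1 hk.2 hle, mul_zero]
        · exfalso
          rcases lt_trichotomy k k₀ with h | h | h
          · exact absurd hlt (not_lt.2 (hfar2 k k₀ n hk.1 h hk₀n))
          · exact hne h
          · exact absurd hk₀f (not_lt.2 (hfar2 k₀ k n hk₀1 h hk.2))
      have h2 : |r (n + 1) k₀ - r n k₀| ≤ 1 - ρ := by
        rw [abs_le]
        constructor
        · linarith [hrlb k₀ (n + 1) hk₀1 (by omega), hrub k₀ n hn1]
        · linarith [hrlb k₀ n hk₀1 hk₀n, hrub k₀ (n + 1) (by omega)]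
      have hd := hdecomp n hn1
      have h3 : |w n * r (n + 1) n| ≤ |Q (n + 1) - Q n| + |w k₀ * (r (n + 1) k₀ - r n k₀)| := by
        have : w n * r (n + 1) n = (Q (n + 1) - Q n) - w k₀ * (r (n + 1) k₀ - r n k₀) := by
          rw [hd, hsum]; ring
        rw [this]
        exact abs_sub _ _
      have h4 : |w k₀ * (r (n + 1) k₀ - r n k₀)| ≤ (1 - ρ) * |w k₀| := by
        rw [abs_mul, mul_comm]
        exact mul_le_mul_of_nonneg_right h2 (abs_nonneg _)
      linarith
    · push_neg at hfar
      refine ⟨n - 1, by omega, by omega, by omega, ?_⟩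
      have hsum : ∑ k ∈ Finset.Ico 1 n, w k * (r (n + 1) k - r n k) = 0 := by
        refine Finset.sum_eq_zero fun k hk => ?_
        rw [Finset.mem_Ico] at hk
        rw [hnear k n hk.1 hk.2 (hfar k hk.1 hk.2), mul_zero]
      have hd := hdecomp n hn1
      have h3 : w n * r (n + 1) n = Q (n + 1) - Q n := by rw [hd, hsum]; ring
      have h5 : (0:ℝ) ≤ (1 - ρ) * |w (n - 1)| :=
        mul_nonneg (by linarith) (abs_nonneg _)
      calc ρ * |w n| ≤ |w n * r (n + 1) n| := habs
        _ = |Q (n + 1) - Q n| := by rw [h3]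
        _ ≤ _ := by linarith
  -- final recursion
  have hΔ : Tendsto (fun n => Q (n + 1) - Q n) atTop (𝓝 0) := by
    have h1 : Tendsto (fun n => Q (n + 1)) atTop (𝓝 c) :=
      hQc.comp (tendsto_add_atTop_nat 1)
    simpa using h1.sub hQc
  apply hwc0
  rw [Metric.tendsto_atTop]
  intro ε' hε'
  set l : ℝ := (1 - ρ) / ρ with hldef
  have hl0 : 0 ≤ l := div_nonneg (by linarith) hρ0.le
  have hl1 : l < 1 := by
    rw [hldef, div_lt_one hρ0]
    linarith
  set ε : ℝ := (2 * ρ - 1) * ε' / 4 with hεdef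
  have hεpos : 0 < ε := by
    have : 0 < 2 * ρ - 1 := by linarith
    positivity
  obtain ⟨N₀', hN₀'⟩ := (Metric.tendsto_atTop.1 hΔ) (ρ * ε) (by positivity)
  set N₀ : ℕ := max N₀' 2 with hN₀def
  have hkey : ∀ n, N₀ ≤ n → ∃ k, 1 ≤ k ∧ k < n ∧ n ≤ k + M ∧ |w n| ≤ ε + l * |w k| := by
    intro n hn
    obtain ⟨k, h1, h2, h3, h4⟩ := hstep n (le_trans (le_max_right _ _) hn)
    refine ⟨k, h1, h2, h3, ?_⟩
    have hΔn : |Q (n + 1) - Q n| < ρ * ε := by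
      have := hN₀' n (le_trans (le_max_left _ _) hn)
      rwa [Real.dist_eq, sub_zero] at this
    have hlρ : l * ρ = 1 - ρ := by
      rw [hldef]
      field_simp
    have hmul : ρ * (ε + l * |w k|) = ρ * ε + (1 - ρ) * |w k| := by
      linear_combination |w k| * hlρ
    have : ρ * |w n| ≤ ρ * (ε + l * |w k|) := by rw [hmul]; linarith
    exact le_of_mul_le_mul_left this hρ0
  set E : ℝ := ρ * ε / (2 * ρ - 1) with hEdef
  have hEpos : 0 < E := by
    have h : 0 < 2 * ρ - 1 := by linarith
    positivity
  have hE : ε + l * E = E := by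
    have h1 : (2 * ρ - 1) ≠ 0 := by linarith
    have h2 : ρ ≠ 0 := hρ0.ne'
    rw [hEdef, hldef]
    have hE1 : ρ * ε / (2 * ρ - 1) * (2 * ρ - 1) = ρ * ε := div_mul_cancel₀ _ h1
    have hl1 : (1 - ρ) / ρ * ρ = 1 - ρ := div_mul_cancel₀ _ h2
    apply mul_left_cancel₀ h2
    linear_combination (ρ * ε / (2 * ρ - 1)) * hl1 - hE1
  have hMne : (Finset.Ico N₀ (N₀ + M)).Nonempty := by
    rw [Finset.nonempty_Ico]
    omega
  set C₀ : ℝ := max ((Finset.Ico N₀ (N₀ + M)).sup' hMne fun k => |w k|) E with hC₀def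
  have hC0E : E ≤ C₀ := le_max_right _ _
  have hclaim1 : ∀ n, N₀ ≤ n → |w n| ≤ C₀ := by
    intro n
    induction n using Nat.strong_induction_on with
    | _ n ih =>
      intro hn
      rcases lt_or_ge n (N₀ + M) with hlt | hge
      · exact le_trans (Finset.le_sup' (fun k => |w k|) (Finset.mem_Ico.2 ⟨hn, hlt⟩))
          (le_max_left _ _)
      · obtain ⟨k, hk1, hk2, hk3, hk4⟩ := hkey n hn
        have hkN : N₀ ≤ k := by omega
        have hik := ih k hk2 hkN
        have h1 : l * |w k| ≤ l * C₀ := mul_le_mul_of_nonneg_left hik hl0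
        have h2 : ε + l * C₀ ≤ C₀ := by
          have h3 : ε + l * E = E := hE
          have h4 : (1 - l) * E ≤ (1 - l) * C₀ :=
            mul_le_mul_of_nonneg_left hC0E (by linarith)
          nlinarith
        linarith
  have hclaim2 : ∀ m n, N₀ + m * M ≤ n → |w n| ≤ l ^ m * C₀ + E := by
    intro m
    induction m with
    | zero =>
      intro n hn
      simp only [Nat.zero_mul, add_zero] at hn
      have := hclaim1 n hn
      simp only [pow_zero, one_mul]
      linarith
    | succ m ih =>
      intro n hn
      have hmM : N₀ + m * M + M ≤ n := by
        have : (m + 1) * M = m * M + M := by ring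
        omega
      have hnN : N₀ ≤ n := by omega
      obtain ⟨k, hk1, hk2, hk3, hk4⟩ := hkey n hnN
      have hkm : N₀ + m * M ≤ k := by omega
      have hik := ih k hkm
      have h1 : l * |w k| ≤ l * (l ^ m * C₀ + E) := mul_le_mul_of_nonneg_left hik hl0
      calc |w n| ≤ ε + l * (l ^ m * C₀ + E) := by linarith
        _ = l ^ (m + 1) * C₀ + (ε + l * E) := by ring
        _ = l ^ (m + 1) * C₀ + E := by rw [hE]
  have hpow : Tendsto (fun m => l ^ m * C₀) atTop (𝓝 0) := by
    have := (tendsto_pow_atTop_nhds_zero_of_lt_one hl0 hl1).mul_const C₀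
    simpa using this
  obtain ⟨m, hm⟩ := (hpow.eventually_lt_const (by linarith : (0:ℝ) < ε' / 2)).exists
  refine ⟨N₀ + m * M, fun n hn => ?_⟩
  rw [Real.dist_eq, sub_zero]
  have h1 := hclaim2 m n hn
  have hE2 : E = ρ * ε' / 4 := by
    have h : (2 * ρ - 1) ≠ 0 := by linarith
    rw [hEdef, hεdef]
    rw [div_eq_iff h]
    field_simp
  have hE' : E ≤ ε' / 4 := by
    rw [hE2]
    nlinarith
  linarith
end

section
/- Assume α_{n+1} ≤ ρ αₙ for every n and (wₙ) does not tend to 0. Let x ∈ D₁ with w₀ = 0, and suppose the sequence yₙ = min{y ∈ Dₙ : y > x} is strictly decreasing. Then T_w has no finite right derivative at x. -/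
open Filter Topology

set_option maxHeartbeats 1600000

private lemma contraction_tendsto_zero {a b : ℕ → ℝ} {L : ℝ} (hL0 : 0 ≤ L) (hL1 : L < 1)
    (ha : ∀ k, 0 ≤ a k) (hb : Tendsto b atTop (𝓝 0))
    (hrec : ∀ k, a (k + 1) ≤ L * a k + b k) :
    Tendsto a atTop (𝓝 0) := by
  rw [Metric.tendsto_atTop]
  intro ε hε
  have h1L : 0 < 1 - L := by linarith
  have hη : 0 < ε * (1 - L) / 3 := by positivity
  obtain ⟨N, hN⟩ := (Metric.tendsto_atTop.mp hb) _ hη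
  have key : ∀ k, N ≤ k → a k ≤ L ^ (k - N) * a N + ε / 3 := by
    intro k hk
    induction k, hk using Nat.le_induction with
    | base => simp; linarith [ha N]
    | succ k hk ih =>
      have hb' : b k ≤ ε * (1 - L) / 3 := by
        have := hN k hk
        rw [Real.dist_eq, sub_zero] at this
        exact (le_abs_self _).trans this.le
      have h1 : a (k + 1) ≤ L * a k + b k := hrec k
      have h2 : L * a k ≤ L * (L ^ (k - N) * a N + ε / 3) :=
        mul_le_mul_of_nonneg_left ih hL0
      have h3 : k + 1 - N = (k - N) + 1 := by omega
      rw [h3, pow_succ]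
      nlinarith
  have hpow : Tendsto (fun n => L ^ n * a N) atTop (𝓝 0) := by
    simpa using (tendsto_pow_atTop_nhds_zero_of_lt_one hL0 hL1).mul_const (a N)
  obtain ⟨J, hJ⟩ := (Metric.tendsto_atTop.mp hpow) (ε / 3) (by linarith)
  refine ⟨N + J, fun k hk => ?_⟩
  have h1 : a k ≤ L ^ (k - N) * a N + ε / 3 := key k (by omega)
  have h2 : L ^ (k - N) * a N ≤ L ^ J * a N :=
    mul_le_mul_of_nonneg_right (pow_le_pow_of_le_one hL0 hL1.le (by omega)) (ha N)
  have h3 : L ^ J * a N < ε / 3 := by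
    have := hJ J le_rfl
    rw [Real.dist_eq, sub_zero] at this
    exact (le_abs_self _).trans_lt this
  rw [Real.dist_eq, sub_zero, abs_of_nonneg (ha k)]
  linarith

theorem stmt15
(D : ℕ → Set ℝ) (α : ℕ → ℝ) (ρ : ℝ) (w : ℕ → ℝ)
    (hD0 : (0 : ℝ) ∈ D 0) (hD1 : (1 : ℝ) ∈ D 0)
    (hDsub : ∀ n, D n ⊆ Set.Icc 0 1)
    (hDfin : ∀ n, (D n).Finite)
    (hDmono : ∀ n, D n ⊆ D (n + 1))
    (hρ : ρ ∈ Set.Ioc (0 : ℝ) 1)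
    (hα : Summable α)
    (hgapU : ∀ n, ∀ a ∈ D n, ∀ b ∈ D n, a < b → Set.Ioo a b ∩ D n = ∅ → b - a ≤ α n)
    (hgapL : ∀ n, ∀ a ∈ D n, ∀ b ∈ D n, a < b → ρ * α n ≤ b - a)
    (hwα : Summable (fun n => |w n * α n|))
    (hα2 : ∀ n, α (n + 1) ≤ ρ * α n) (hwc0 : ¬ Tendsto w atTop (𝓝 0)) (hw0 : w 0 = 0)
    (x : ℝ) (hx : x ∈ D 1) (hx01 : x ∈ Set.Ioo (0 : ℝ) 1)
    (y : ℕ → ℝ)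
    (hy : ∀ n, 1 ≤ n → y n ∈ D n ∧ x < y n ∧ Set.Ioo x (y n) ∩ D n = ∅)
    (hydec : ∀ n, 1 ≤ n → y (n + 1) < y n) :
    ¬ DifferentiableWithinAt ℝ (fun z => ∑' n : ℕ, w n * Metric.infDist z (D n))
        (Set.Icc x 1) x := by
  intro hdiff
  set T : ℝ → ℝ := fun z => ∑' n : ℕ, w n * Metric.infDist z (D n) with hTdef
  have hρ0 : 0 < ρ := hρ.1
  have hρ1 : ρ ≤ 1 := hρ.2
  have hDle : ∀ i j : ℕ, i ≤ j → D i ⊆ D j := fun i j h => monotone_nat_of_le_succ hDmono h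
  have hxD : ∀ n, 1 ≤ n → x ∈ D n := fun n hn => hDle 1 n hn hx
  have hyD : ∀ n, 1 ≤ n → y n ∈ D n := fun n hn => (hy n hn).1
  have hxy : ∀ n, 1 ≤ n → x < y n := fun n hn => (hy n hn).2.1
  have hIoo : ∀ n, 1 ≤ n → Set.Ioo x (y n) ∩ D n = ∅ := fun n hn => (hy n hn).2.2
  have hy1 : ∀ n, 1 ≤ n → y n ≤ 1 := fun n hn => (hDsub n (hyD n hn)).2
  have hδα : ∀ n, 1 ≤ n → y n - x ≤ α n := by
    intro n hn
    have := hgapU n x (hxD n hn) (y n) (hyD n hn) (hxy n hn) (hIoo n hn)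
    linarith
  have hραδ : ∀ n, 1 ≤ n → ρ * α n ≤ y n - x := fun n hn =>
    hgapL n x (hxD n hn) (y n) (hyD n hn) (hxy n hn)
  have hδpos : ∀ n, 1 ≤ n → 0 < y n - x := fun n hn => sub_pos.2 (hxy n hn)
  have hαpos : ∀ n, 1 ≤ n → 0 < α n := fun n hn => lt_of_lt_of_le (hδpos n hn) (hδα n hn)
  have hyanti : ∀ m k, 1 ≤ m → m ≤ k → y k ≤ y m := by
    intro m k hm hmk
    induction k, hmk using Nat.le_induction with
    | base => exact le_rfl
    | succ k hk ih => exact le_trans (hydec k (le_trans hm hk)).le ih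
  have hystrict : ∀ m k, 1 ≤ m → m < k → y k < y m := by
    intro m k hm hmk
    exact lt_of_le_of_lt (hyanti (m + 1) k (by omega) (by omega)) (hydec m hm)
  have hgapyy : ∀ n, 1 ≤ n → ρ * α (n + 1) ≤ y n - y (n + 1) := fun n hn =>
    hgapL (n + 1) (y (n + 1)) (hyD (n + 1) (by omega)) (y n)
      (hDle n (n + 1) (by omega) (hyD n hn)) (hydec n hn)
  have hαmono : ∀ i j, 1 ≤ i → i ≤ j → α j ≤ α i := by
    intro i j hi hij
    induction j, hij using Nat.le_induction with
    | base => exact le_rfl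
    | succ j hj ih =>
      have h1 : α (j + 1) ≤ ρ * α j := hα2 j
      nlinarith [hαpos j (le_trans hi hj)]
  -- two-scale separation : for 1 ≤ m, m + 2 ≤ k, δ_m ≥ 2 δ_k
  have h2δ : ∀ m k, 1 ≤ m → m + 2 ≤ k → 2 * (y k - x) ≤ y m - x := by
    intro m k hm hmk
    obtain ⟨j, rfl⟩ : ∃ j, k = j + 1 := ⟨k - 1, by omega⟩
    rcases le_or_gt ρ (1 / 2) with hhalf | hhalf
    · have t1 := hραδ m hm
      have t2 := hα2 m
      have t3 := hαmono (m + 1) j (by omega) (by omega)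
      have t4 := hα2 j
      have t5 := hδα (j + 1) (by omega)
      have t6 := hαpos j (by omega)
      have t7 := hδpos (j + 1) (by omega)
      nlinarith
    · have h1ρ : (0 : ℝ) < 1 + ρ := by linarith
      have s1 : (1 + ρ) * (y (j + 1) - x) ≤ y j - x := by
        have g1 := hgapyy j (by omega)
        have g2 := hδα (j + 1) (by omega)
        nlinarith
      have s2 : (1 + ρ) * (y (m + 1) - x) ≤ y m - x := by
        have g1 := hgapyy m hm
        have g2 := hδα (m + 1) (by omega)
        nlinarith
      have s3 : y j - x ≤ y (m + 1) - x := by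
        have := hyanti (m + 1) j (by omega) (by omega)
        linarith
      have t7 := hδpos (j + 1) (by omega)
      have u3 : (2 : ℝ) ≤ (1 + ρ) * (1 + ρ) := by nlinarith
      have v1 : 2 * (y (j + 1) - x) ≤ (1 + ρ) * (1 + ρ) * (y (j + 1) - x) :=
        mul_le_mul_of_nonneg_right u3 t7.le
      have u1 : (1 + ρ) * ((1 + ρ) * (y (j + 1) - x)) ≤ (1 + ρ) * (y j - x) :=
        mul_le_mul_of_nonneg_left s1 h1ρ.le
      have u2 : (1 + ρ) * (y j - x) ≤ (1 + ρ) * (y (m + 1) - x) :=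
        mul_le_mul_of_nonneg_left s3 h1ρ.le
      have v2 : (1 + ρ) * (1 + ρ) * (y (j + 1) - x) = (1 + ρ) * ((1 + ρ) * (y (j + 1) - x)) := by
        ring
      linarith
  -- infDist formula at grid points
  have hinf : ∀ m k, 1 ≤ m → m < k →
      Metric.infDist (y k) (D m) = min (y k - x) (y m - y k) := by
    intro m k hm hmk
    have hk1 : 1 ≤ k := by omega
    have hyky : y k < y m := hystrict m k hm hmk
    have hxyk : x < y k := hxy k hk1
    apply le_antisymm
    · apply le_min
      · have h := Metric.infDist_le_dist_of_mem (x := y k) (hxD m hm)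
        rwa [Real.dist_eq, abs_of_pos (by linarith : (0 : ℝ) < y k - x)] at h
      · have h := Metric.infDist_le_dist_of_mem (x := y k) (hyD m hm)
        rw [Real.dist_eq, abs_of_neg (by linarith : y k - y m < 0), neg_sub] at h
        exact h
    · by_contra hlt
      push_neg at hlt
      obtain ⟨p, hp, hd⟩ := (Metric.infDist_lt_iff ⟨x, hxD m hm⟩).1 hlt
      have hnot : p ∉ Set.Ioo x (y m) := by
        intro hmem
        have : p ∈ Set.Ioo x (y m) ∩ D m := ⟨hmem, hp⟩
        rw [hIoo m hm] at this
        exact this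
      rw [Set.mem_Ioo] at hnot
      push_neg at hnot
      rw [Real.dist_eq] at hd
      rcases le_or_gt p x with hpx | hxp
      · have h1 : min (y k - x) (y m - y k) ≤ y k - x := min_le_left _ _
        have h2 : y k - x ≤ y k - p := by linarith
        have h3 : y k - p ≤ |y k - p| := le_abs_self _
        linarith
      · have hpy : y m ≤ p := hnot hxp
        have h1 : min (y k - x) (y m - y k) ≤ y m - y k := min_le_right _ _
        have h2 : y m - y k ≤ p - y k := by linarith
        have h3 : p - y k ≤ |y k - p| := by rw [abs_sub_comm]; exact le_abs_self _
        linarith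
  -- T x = 0
  have hT0 : T x = 0 := by
    have hz : ∀ n : ℕ, w n * Metric.infDist x (D n) = 0 := by
      intro n
      rcases Nat.eq_zero_or_pos n with rfl | hn
      · rw [hw0, zero_mul]
      · rw [Metric.infDist_zero_of_mem (hxD n hn), mul_zero]
    calc T x = ∑' n : ℕ, w n * Metric.infDist x (D n) := rfl
      _ = ∑' _ : ℕ, (0 : ℝ) := tsum_congr hz
      _ = 0 := tsum_zero
  -- T at grid points
  have hTy : ∀ k, 1 ≤ k → T (y k) = ∑ m ∈ Finset.range k, w m * min (y k - x) (y m - y k) := by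
    intro k hk
    have hzero : ∀ m : ℕ, m ∉ Finset.range k → w m * Metric.infDist (y k) (D m) = 0 := by
      intro m hm
      rw [Finset.mem_range, not_lt] at hm
      rw [Metric.infDist_zero_of_mem (hDle k m hm (hyD k hk)), mul_zero]
    calc T (y k) = ∑ m ∈ Finset.range k, w m * Metric.infDist (y k) (D m) := tsum_eq_sum hzero
      _ = ∑ m ∈ Finset.range k, w m * min (y k - x) (y m - y k) := by
          apply Finset.sum_congr rfl
          intro m hm
          rcases Nat.eq_zero_or_pos m with rfl | hm1
          · rw [hw0]; ring
          · rw [hinf m k hm1 (Finset.mem_range.mp hm)]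
  have hTy2 : ∀ n : ℕ, T (y (n + 2)) = (∑ m ∈ Finset.range (n + 1), w m) * (y (n + 2) - x)
      + w (n + 1) * min (y (n + 2) - x) (y (n + 1) - y (n + 2)) := by
    intro n
    rw [hTy (n + 2) (by omega), Finset.sum_range_succ]
    congr 1
    rw [Finset.sum_mul]
    apply Finset.sum_congr rfl
    intro m hm
    rcases Nat.eq_zero_or_pos m with rfl | hm1
    · rw [hw0]; ring
    · have h2 := h2δ m (n + 2) hm1 (by have := Finset.mem_range.mp hm; omega)
      have hmin : y (n + 2) - x ≤ y m - y (n + 2) := by linarith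
      rw [min_eq_left hmin]
  -- derivative data
  set c := derivWithin T (Set.Icc x 1) x with hcdef
  have hderiv : HasDerivWithinAt T c (Set.Icc x 1) x := hdiff.hasDerivWithinAt
  have hslope := hasDerivWithinAt_iff_tendsto_slope.mp hderiv
  have hytend : Tendsto y atTop (𝓝[Set.Icc x 1 \ {x}] x) := by
    rw [tendsto_nhdsWithin_iff]
    constructor
    · have hub : ∀ᶠ n in atTop, y n ≤ x + α n := by
        filter_upwards [eventually_ge_atTop 1] with n hn
        linarith [hδα n hn]
      have hlb : ∀ᶠ n in atTop, x ≤ y n := by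
        filter_upwards [eventually_ge_atTop 1] with n hn
        linarith [hxy n hn]
      have hαt : Tendsto (fun n => x + α n) atTop (𝓝 (x + 0)) :=
        tendsto_const_nhds.add hα.tendsto_atTop_zero
      rw [add_zero] at hαt
      exact tendsto_of_tendsto_of_tendsto_of_le_of_le' tendsto_const_nhds hαt hlb hub
    · filter_upwards [eventually_ge_atTop 1] with n hn
      exact ⟨⟨(hxy n hn).le, hy1 n hn⟩, by simp [(hxy n hn).ne']⟩
  have hQslope : Tendsto (fun k => slope T x (y k)) atTop (𝓝 c) := hslope.comp hytend
  set Q : ℕ → ℝ := fun k => T (y k) / (y k - x) with hQdef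
  have hQtend : Tendsto Q atTop (𝓝 c) := by
    apply hQslope.congr'
    filter_upwards [eventually_ge_atTop 1] with k hk
    rw [slope_def_field, hT0, sub_zero]
  -- Q formula
  have hQf : ∀ n : ℕ, Q (n + 2) = (∑ m ∈ Finset.range (n + 1), w m)
      + w (n + 1) * (min (y (n + 2) - x) (y (n + 1) - y (n + 2)) / (y (n + 2) - x)) := by
    intro n
    have hd := hδpos (n + 2) (by omega)
    have : Q (n + 2) = T (y (n + 2)) / (y (n + 2) - x) := rfl
    rw [this, hTy2 n, add_div, mul_div_cancel_right₀ _ (ne_of_gt hd), mul_div_assoc]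
  -- contraction constant
  set lam : ℝ := max (1 - ρ) (1 / (1 + ρ)) with hlamdef
  have h1ρ : (0 : ℝ) < 1 + ρ := by linarith
  have hlam0 : 0 ≤ lam := le_trans (by positivity) (le_max_right _ _)
  have hlam1 : lam < 1 := by
    apply max_lt (by linarith)
    rw [div_lt_one h1ρ]; linarith
  have hlamρ1 : 1 ≤ (1 + ρ) * lam := by
    have h := le_max_right (1 - ρ) (1 / (1 + ρ))
    have : (1 + ρ) * (1 / (1 + ρ)) = 1 := by field_simp
    nlinarith
  have hlam1ρ : 1 - ρ ≤ lam := le_max_left _ _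
  -- gap lower bound for the "next" min
  have hM2ρ : ∀ n : ℕ, ρ * (y (n + 3) - x) ≤ min (y (n + 3) - x) (y (n + 2) - y (n + 3)) := by
    intro n
    have hd3 := hδpos (n + 3) (by omega)
    apply le_min
    · nlinarith
    · have g1 : ρ * (y (n + 3) - x) ≤ ρ * α (n + 3) :=
        mul_le_mul_of_nonneg_left (hδα (n + 3) (by omega)) hρ0.le
      have g2 := hgapyy (n + 2) (by omega)
      linarith
  -- the key inequality
  have hKI : ∀ n : ℕ,
      (y (n + 2) - x - min (y (n + 2) - x) (y (n + 1) - y (n + 2))) * (y (n + 3) - x)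
        ≤ lam * min (y (n + 3) - x) (y (n + 2) - y (n + 3)) * (y (n + 2) - x) := by
    intro n
    have hd1 : 0 < y (n + 2) - x := hδpos (n + 2) (by omega)
    have hd2 : 0 < y (n + 3) - x := hδpos (n + 3) (by omega)
    have hA1 : ρ * α (n + 2) ≤ y (n + 2) - x := hραδ (n + 2) (by omega)
    have hA2 : y (n + 2) - x ≤ α (n + 2) := hδα (n + 2) (by omega)
    have hA3 : y (n + 3) - x ≤ α (n + 3) := hδα (n + 3) (by omega)
    have hA4 : α (n + 3) ≤ ρ * α (n + 2) := hα2 (n + 2)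
    have hA5 : ρ * α (n + 2) ≤ y (n + 1) - y (n + 2) := hgapyy (n + 1) (by omega)
    have hM1A : ρ * α (n + 2) ≤ min (y (n + 2) - x) (y (n + 1) - y (n + 2)) := le_min hA1 hA5
    have hM2 := hM2ρ n
    have hM2nn : 0 ≤ min (y (n + 3) - x) (y (n + 2) - y (n + 3)) := by nlinarith
    rcases le_or_gt (y (n + 2) - x) ((1 + ρ) * (ρ * α (n + 2))) with hcase | hcase
    · -- Case 1 : u ≥ 1/(1+ρ)
      have e3a : (1 + ρ) * (y (n + 2) - x - ρ * α (n + 2)) ≤ ρ * (y (n + 2) - x) := by nlinarith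
      have key : (1 + ρ) *
          ((y (n + 2) - x - min (y (n + 2) - x) (y (n + 1) - y (n + 2))) * (y (n + 3) - x))
          ≤ (1 + ρ) *
          (lam * min (y (n + 3) - x) (y (n + 2) - y (n + 3)) * (y (n + 2) - x)) := by
        have e2 : (y (n + 2) - x - min (y (n + 2) - x) (y (n + 1) - y (n + 2))) * (y (n + 3) - x)
            ≤ (y (n + 2) - x - ρ * α (n + 2)) * (y (n + 3) - x) :=
          mul_le_mul_of_nonneg_right (by linarith) hd2.le
        have e3 : (1 + ρ) * ((y (n + 2) - x - ρ * α (n + 2)) * (y (n + 3) - x))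
            ≤ (ρ * (y (n + 2) - x)) * (y (n + 3) - x) := by
          have := mul_le_mul_of_nonneg_right e3a hd2.le
          nlinarith
        have e5 : (y (n + 2) - x) * (ρ * (y (n + 3) - x))
            ≤ (y (n + 2) - x) * min (y (n + 3) - x) (y (n + 2) - y (n + 3)) :=
          mul_le_mul_of_nonneg_left hM2 hd1.le
        nlinarith [mul_le_mul_of_nonneg_left e2 h1ρ.le,
          mul_nonneg hM2nn hd1.le]
      exact le_of_mul_le_mul_left key h1ρ
    · -- Case 2 : u < 1/(1+ρ)
      have hd2A : y (n + 3) - x ≤ ρ * α (n + 2) := le_trans hA3 hA4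
      rcases le_total (y (n + 3) - x) (y (n + 2) - y (n + 3)) with hmm | hmm
      · -- M2 = d2
        rw [min_eq_left hmm]
        have q0 : ρ * (y (n + 2) - x) ≤ ρ * α (n + 2) :=
          mul_le_mul_of_nonneg_left hA2 hρ0.le
        have q1 : y (n + 2) - x - min (y (n + 2) - x) (y (n + 1) - y (n + 2))
            ≤ (1 - ρ) * (y (n + 2) - x) := by linarith
        have q2 : (1 - ρ) * (y (n + 2) - x) ≤ lam * (y (n + 2) - x) :=
          mul_le_mul_of_nonneg_right hlam1ρ hd1.le
        have q3 := mul_le_mul_of_nonneg_right (q1.trans q2) hd2.le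
        have q4 : lam * (y (n + 2) - x) * (y (n + 3) - x)
            = lam * (y (n + 3) - x) * (y (n + 2) - x) := by ring
        linarith
      · -- M2 = gap = d1 - d2
        rw [min_eq_right hmm]
        have hgap_eq : y (n + 2) - y (n + 3) = (y (n + 2) - x) - (y (n + 3) - x) := by ring
        have g1 : y (n + 2) - x - min (y (n + 2) - x) (y (n + 1) - y (n + 2))
            ≤ (y (n + 2) - x) - (y (n + 3) - x) := by
          have : y (n + 3) - x ≤ min (y (n + 2) - x) (y (n + 1) - y (n + 2)) := by
            exact le_trans hd2A hM1A
          linarith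
        have g2 : y (n + 3) - x ≤ lam * (y (n + 2) - x) := by
          have h1 : (1 + ρ) * (y (n + 3) - x) ≤ (1 + ρ) * (ρ * α (n + 2)) :=
            mul_le_mul_of_nonneg_left hd2A h1ρ.le
          have h2 : (1 + ρ) * (ρ * α (n + 2)) ≤ y (n + 2) - x := hcase.le
          have h3 : y (n + 2) - x ≤ ((1 + ρ) * lam) * (y (n + 2) - x) := by nlinarith
          nlinarith
        have g3 : 0 ≤ (y (n + 2) - x) - (y (n + 3) - x) := by nlinarith
        have := mul_le_mul g1 g2 hd2.le g3
        nlinarith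
  -- the contraction recursion
  have hrec : ∀ n : ℕ, |w (n + 2)| ≤ lam * |w (n + 1)| + |Q (n + 3) - Q (n + 2)| / ρ := by
    intro n
    have hd2 : 0 < y (n + 2) - x := hδpos (n + 2) (by omega)
    have hd3 : 0 < y (n + 3) - x := hδpos (n + 3) (by omega)
    set θ1 : ℝ := min (y (n + 2) - x) (y (n + 1) - y (n + 2)) / (y (n + 2) - x) with hθ1
    set θ2 : ℝ := min (y (n + 3) - x) (y (n + 2) - y (n + 3)) / (y (n + 3) - x) with hθ2
    have hQ2 := hQf n
    have hQ3 := hQf (n + 1)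
    simp only [show n + 1 + 2 = n + 3 by omega, show n + 1 + 1 = n + 2 by omega] at hQ3
    rw [← hθ1] at hQ2
    rw [← hθ2] at hQ3
    have hS : ∑ m ∈ Finset.range (n + 2), w m = (∑ m ∈ Finset.range (n + 1), w m) + w (n + 1) :=
      Finset.sum_range_succ _ _
    have hkey : w (n + 2) * θ2 = (Q (n + 3) - Q (n + 2)) - w (n + 1) * (1 - θ1) := by
      rw [hQ3, hQ2, hS]
      ring
    have hθ2ρ : ρ ≤ θ2 := by
      rw [hθ2, le_div_iff₀ hd3]
      exact hM2ρ n
    have hθ2pos : 0 < θ2 := lt_of_lt_of_le hρ0 hθ2ρ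
    have hθ1le : θ1 ≤ 1 := by
      rw [hθ1, div_le_one hd2]
      exact min_le_left _ _
    have hθKI : 1 - θ1 ≤ lam * θ2 := by
      have e1 : 1 - θ1 = (y (n + 2) - x - min (y (n + 2) - x) (y (n + 1) - y (n + 2)))
          / (y (n + 2) - x) := by
        rw [hθ1]
        field_simp
      have e2 : lam * θ2 = lam * min (y (n + 3) - x) (y (n + 2) - y (n + 3)) / (y (n + 3) - x) := by
        rw [hθ2, mul_div_assoc]
      rw [e1, e2, div_le_div_iff₀ hd2 hd3]
      exact hKI n
    have habs : |w (n + 2)| * θ2 ≤ |Q (n + 3) - Q (n + 2)| + |w (n + 1)| * (1 - θ1) := by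
      have h1 : |w (n + 2)| * θ2 = |w (n + 2) * θ2| := by
        rw [abs_mul, abs_of_pos hθ2pos]
      rw [h1, hkey]
      have h2 : |(Q (n + 3) - Q (n + 2)) - w (n + 1) * (1 - θ1)|
          ≤ |Q (n + 3) - Q (n + 2)| + |w (n + 1) * (1 - θ1)| := abs_sub _ _
      have h3 : |w (n + 1) * (1 - θ1)| = |w (n + 1)| * (1 - θ1) := by
        rw [abs_mul, abs_of_nonneg (by linarith : (0:ℝ) ≤ 1 - θ1)]
      linarith
    have hfin : |w (n + 2)| * θ2 ≤ (lam * |w (n + 1)| + |Q (n + 3) - Q (n + 2)| / ρ) * θ2 := by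
      have t1 : |w (n + 1)| * (1 - θ1) ≤ |w (n + 1)| * (lam * θ2) :=
        mul_le_mul_of_nonneg_left hθKI (abs_nonneg _)
      have t2 : |Q (n + 3) - Q (n + 2)| ≤ |Q (n + 3) - Q (n + 2)| / ρ * θ2 := by
        rw [div_mul_eq_mul_div, le_div_iff₀ hρ0]
        exact mul_le_mul_of_nonneg_left hθ2ρ (abs_nonneg _)
      calc |w (n + 2)| * θ2 ≤ |Q (n + 3) - Q (n + 2)| + |w (n + 1)| * (1 - θ1) := habs
        _ ≤ |Q (n + 3) - Q (n + 2)| / ρ * θ2 + |w (n + 1)| * (lam * θ2) := add_le_add t2 t1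
        _ = (lam * |w (n + 1)| + |Q (n + 3) - Q (n + 2)| / ρ) * θ2 := by ring
    exact le_of_mul_le_mul_right hfin hθ2pos
  -- assemble
  have hbt : Tendsto (fun n => |Q (n + 3) - Q (n + 2)| / ρ) atTop (𝓝 0) := by
    have h3 : Tendsto (fun n : ℕ => Q (n + 3)) atTop (𝓝 c) := hQtend.comp (tendsto_add_atTop_nat 3)
    have h2 : Tendsto (fun n : ℕ => Q (n + 2)) atTop (𝓝 c) := hQtend.comp (tendsto_add_atTop_nat 2)
    have hsub := h3.sub h2
    rw [sub_self] at hsub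
    have habs := hsub.abs
    rw [abs_zero] at habs
    have hdiv := habs.div_const ρ
    rwa [zero_div] at hdiv
  have haux : Tendsto (fun k => |w (k + 1)|) atTop (𝓝 0) := by
    apply contraction_tendsto_zero hlam0 hlam1 (fun k => abs_nonneg _) hbt
    intro k
    exact hrec k
  have hw1 : Tendsto (fun k => w (k + 1)) atTop (𝓝 0) := by
    have hneg : Tendsto (fun k => -|w (k + 1)|) atTop (𝓝 0) := by
      have := haux.neg
      rwa [neg_zero] at this
    exact tendsto_of_tendsto_of_tendsto_of_le_of_le' hneg haux
      (Eventually.of_forall fun k => neg_abs_le _)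
      (Eventually.of_forall fun k => le_abs_self _)
  exact hwc0 ((tendsto_add_atTop_iff_nat 1).mp hw1)
end

section
/- Under the hypotheses w₀ = 0, α_{n+1} ≤ ρ αₙ/(1−ρ) for all n, x ∈ D₁, and yₙ = min{y ∈ Dₙ : y > x} strictly decreasing, the difference quotient Δₙ = (T_w(yₙ) − T_w(x))/(yₙ − x) equals ∑_{k=1}^{n−2} w_k + δ_{n−1} w_{n−1} for some δ_{n−1} ∈ [ρ, 1]. -/
open Filter Topology

private lemma le_infDist_aux {s : Set ℝ} (hne : s.Nonempty) {x c : ℝ}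
    (h : ∀ p ∈ s, c ≤ dist x p) : c ≤ Metric.infDist x s := by
  have : Nonempty s := hne.to_subtype
  rw [Metric.infDist_eq_iInf]
  exact le_ciInf fun p => h p p.2

theorem stmt16
(D : ℕ → Set ℝ) (α : ℕ → ℝ) (ρ : ℝ) (w : ℕ → ℝ)
    (hD0 : (0 : ℝ) ∈ D 0) (hD1 : (1 : ℝ) ∈ D 0)
    (hDsub : ∀ n, D n ⊆ Set.Icc 0 1)
    (hDfin : ∀ n, (D n).Finite)
    (hDmono : ∀ n, D n ⊆ D (n + 1))
    (hρ : ρ ∈ Set.Ioc (0 : ℝ) 1)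
    (hα : Summable α)
    (hgapU : ∀ n, ∀ a ∈ D n, ∀ b ∈ D n, a < b → Set.Ioo a b ∩ D n = ∅ → b - a ≤ α n)
    (hgapL : ∀ n, ∀ a ∈ D n, ∀ b ∈ D n, a < b → ρ * α n ≤ b - a)
    (hwα : Summable (fun n => |w n * α n|))
    (hρlt : ρ < 1) (hw0 : w 0 = 0)
    (hα2 : ∀ n, α (n + 1) ≤ ρ / (1 - ρ) * α n)
    (x : ℝ) (hx : x ∈ D 1) (hx01 : x ∈ Set.Ioo (0 : ℝ) 1)
    (y : ℕ → ℝ)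
    (hy : ∀ n, 1 ≤ n → y n ∈ D n ∧ x < y n ∧ Set.Ioo x (y n) ∩ D n = ∅)
    (hydec : ∀ n, 1 ≤ n → y (n + 1) < y n) :
    ∀ n, 1 ≤ n → ∃ δ ∈ Set.Icc ρ 1,
      ((∑' k : ℕ, w k * Metric.infDist (y n) (D k)) -
          ∑' k : ℕ, w k * Metric.infDist x (D k)) / (y n - x) =
        (∑ k ∈ Finset.Icc 1 (n - 2), w k) + δ * w (n - 1) := by
  -- monotonicity of D
  have hDmono' : ∀ m n : ℕ, m ≤ n → D m ⊆ D n := by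
    intro m n h
    induction n with
    | zero => interval_cases m; exact fun a ha => ha
    | succ n ih =>
      rcases Nat.lt_succ_iff_lt_or_eq.mp (Nat.lt_succ_of_le h) with h' | h'
      · exact fun a ha => hDmono n (ih (Nat.lt_succ_iff.mp h') ha)
      · subst h'; exact fun a ha => ha
  -- antitonicity of y on [1, ∞)
  have hyanti : ∀ a b : ℕ, 1 ≤ a → a ≤ b → y b ≤ y a := by
    intro a b ha hab
    induction b with
    | zero => omega
    | succ b ih =>
      rcases Nat.lt_succ_iff_lt_or_eq.mp (Nat.lt_succ_of_le hab) with h' | h'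
      · have hb : a ≤ b := Nat.lt_succ_iff.mp h'
        exact le_trans (le_of_lt (hydec b (le_trans ha hb))) (ih hb)
      · subst h'; rfl
  -- x ∈ D k for all k ≥ 1
  have hxDk : ∀ k : ℕ, 1 ≤ k → x ∈ D k := fun k hk => hDmono' 1 k hk hx
  -- second tsum is 0
  have htsum2 : (∑' k : ℕ, w k * Metric.infDist x (D k)) = 0 := by
    have h0 : ∀ k : ℕ, w k * Metric.infDist x (D k) = 0 := by
      intro k
      rcases Nat.eq_zero_or_pos k with hk | hk
      · subst hk; rw [hw0, zero_mul]
      · rw [Metric.infDist_zero_of_mem (hxDk k hk), mul_zero]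
    exact (tsum_congr h0).trans tsum_zero
  intro n hn
  obtain ⟨hynD, hxy, hempty⟩ := hy n hn
  have hxDn : x ∈ D n := hxDk n hn
  have hpos : 0 < y n - x := sub_pos.mpr hxy
  have hle_an : y n - x ≤ α n := hgapU n x hxDn (y n) hynD hxy hempty
  -- first tsum is a finite sum over Icc 1 (n-1)
  have htsum1 : (∑' k : ℕ, w k * Metric.infDist (y n) (D k)) =
      ∑ k ∈ Finset.Icc 1 (n - 1), w k * Metric.infDist (y n) (D k) := by
    apply tsum_eq_sum
    intro k hk
    simp only [Finset.mem_Icc, not_and, not_le] at hk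
    rcases Nat.eq_zero_or_pos k with hk0 | hk0
    · subst hk0; rw [hw0, zero_mul]
    · have : n - 1 < k := hk hk0
      have hkn : n ≤ k := by omega
      rw [Metric.infDist_zero_of_mem (hDmono' n k hkn hynD), mul_zero]
  rcases Nat.lt_or_ge n 2 with hn2 | hn2
  · -- n = 1
    have hn1 : n = 1 := by omega
    subst hn1
    refine ⟨ρ, ⟨le_refl ρ, le_of_lt hρlt⟩, ?_⟩
    simp [htsum1, htsum2, hw0]
  · -- n ≥ 2
    obtain ⟨m, rfl⟩ : ∃ m, n = m + 2 := ⟨n - 2, by omega⟩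
    set c := y (m + 2) - x with hc
    -- the middle distances: for 1 ≤ k ≤ m, infDist (y (m+2)) (D k) = c
    have hdk : ∀ k, 1 ≤ k → k ≤ m → Metric.infDist (y (m + 2)) (D k) = c := by
      intro k hk1 hkm
      have hm1 : 1 ≤ m := le_trans hk1 hkm
      obtain ⟨hykD, hxyk, hemptyk⟩ := hy k hk1
      -- key chain: y k - y (m+2) ≥ α (m+2) ≥ c
      have h1 : ρ * α (m + 1) ≤ y m - y (m + 1) :=
        hgapL (m + 1) (y (m + 1)) (hy (m + 1) (by omega)).1 (y m)
          (hDmono m (hy m hm1).1) (hydec m hm1)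
      have h2 : ρ * α (m + 2) ≤ y (m + 1) - y (m + 2) :=
        hgapL (m + 2) (y (m + 2)) hynD (y (m + 1))
          (hDmono (m + 1) (hy (m + 1) (by omega)).1) (hydec (m + 1) (by omega))
      have h3 : (1 - ρ) * α (m + 2) ≤ ρ * α (m + 1) := by
        have h4 := hα2 (m + 1)
        have h5 : (0 : ℝ) < 1 - ρ := by linarith
        have := mul_le_mul_of_nonneg_left h4 (le_of_lt h5)
        calc (1 - ρ) * α (m + 2) ≤ (1 - ρ) * (ρ / (1 - ρ) * α (m + 1)) := this
          _ = ρ * α (m + 1) := by field_simp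
      have hykm : y m ≤ y k := hyanti k m hk1 hkm
      have hchain : c ≤ y k - y (m + 2) := by
        have : α (m + 2) ≤ y m - y (m + 2) := by linarith
        linarith [hle_an]
      apply le_antisymm
      · have h6 := Metric.infDist_le_dist_of_mem (x := y (m + 2)) (hxDk k hk1)
        rwa [Real.dist_eq, abs_of_pos hpos] at h6
      · apply le_infDist_aux ⟨x, hxDk k hk1⟩
        intro p hp
        rw [Real.dist_eq]
        rcases le_or_gt p x with hpx | hpx
        · rw [abs_of_pos (by linarith)]; linarith
        · have hpk : p ∉ Set.Ioo x (y k) := by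
            intro hmem
            have : p ∈ Set.Ioo x (y k) ∩ D k := ⟨hmem, hp⟩
            rw [hemptyk] at this; exact this
          have hpyk : y k ≤ p := by
            by_contra hlt
            exact hpk ⟨hpx, lt_of_not_ge hlt⟩
          rw [abs_of_nonpos (by linarith [hchain])]
          linarith [hchain]
    -- the top distance
    set d := Metric.infDist (y (m + 2)) (D (m + 1)) with hd
    have hdle : d ≤ c := by
      have := Metric.infDist_le_dist_of_mem (x := y (m + 2)) (hxDk (m + 1) (by omega))
      rwa [Real.dist_eq, abs_of_pos hpos] at this
    have hdge : ρ * c ≤ d := by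
      apply le_infDist_aux ⟨x, hxDk (m + 1) (by omega)⟩
      intro p hp
      rw [Real.dist_eq]
      rcases le_or_gt p x with hpx | hpx
      · rw [abs_of_pos (by linarith)]
        nlinarith [hρ.1, hρlt]
      · have hpDn : p ∈ D (m + 2) := hDmono (m + 1) hp
        have hpnotin : p ∉ Set.Ioo x (y (m + 2)) := by
          intro hmem
          have : p ∈ Set.Ioo x (y (m + 2)) ∩ D (m + 2) := ⟨hmem, hpDn⟩
          rw [hempty] at this; exact this
        have hpge : y (m + 2) ≤ p := by
          by_contra hlt
          exact hpnotin ⟨hpx, lt_of_not_ge hlt⟩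
        have hpne : p ≠ y (m + 2) := by
          intro heq
          obtain ⟨hy1D, hy1x, hy1e⟩ := hy (m + 1) (by omega)
          have : y (m + 2) ∈ Set.Ioo x (y (m + 1)) ∩ D (m + 1) :=
            ⟨⟨hxy, hydec (m + 1) (by omega)⟩, heq ▸ hp⟩
          rw [hy1e] at this; exact this
        have hplt : y (m + 2) < p := lt_of_le_of_ne hpge (Ne.symm hpne)
        have := hgapL (m + 2) (y (m + 2)) hynD p hpDn hplt
        rw [abs_of_nonpos (by linarith)]
        nlinarith [hρ.1]
    refine ⟨d / c, ⟨?_, ?_⟩, ?_⟩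
    · rw [le_div_iff₀ hpos]; exact hdge
    · rw [div_le_one hpos]; exact hdle
    · rw [htsum1, htsum2, sub_zero]
      have hsplit : (m + 2 : ℕ) - 1 = (m : ℕ) + 1 := by omega
      have hsplit2 : (m + 2 : ℕ) - 2 = m := by omega
      rw [hsplit, hsplit2]
      rw [Finset.sum_Icc_succ_top (by omega : 1 ≤ m + 1)]
      have hsum : ∑ k ∈ Finset.Icc 1 m, w k * Metric.infDist (y (m + 2)) (D k) =
          (∑ k ∈ Finset.Icc 1 m, w k) * c := by
        rw [Finset.sum_mul]
        apply Finset.sum_congr rfl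
        intro k hk
        rw [Finset.mem_Icc] at hk
        rw [hdk k hk.1 hk.2]
      rw [hsum]
      rw [div_eq_iff (ne_of_gt hpos)]
      field_simp
      ring
end

section
/- Let (rₙ) be a strictly increasing sequence of positive integers with r₁ = 1 and rₙ dividing r_{n+1} for every n, and let (wₙ) be a sequence of reals with ∑ |wₙ|/rₙ < ∞ that does not tend to 0. Then the function f(x) = ∑ₙ (wₙ/rₙ) φ(rₙ x) is nowhere differentiable on [0,1]. -/
open Filter Topology

noncomputable def nearestIntDist (t : ℝ) : ℝ := |t - round t|

lemma phi_eq_min (t : ℝ) : nearestIntDist t = min (Int.fract t) (1 - Int.fract t) :=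
  abs_sub_round_eq_min t

lemma phi_int_add (D : ℤ) (t : ℝ) : nearestIntDist (D + t) = nearestIntDist t := by
  rw [phi_eq_min, phi_eq_min, Int.fract_intCast_add]

lemma phi_eval {t : ℝ} (h0 : 0 ≤ t) (h1 : t ≤ 1) : nearestIntDist t = min t (1 - t) := by
  rcases eq_or_lt_of_le h1 with h | h
  · subst h; simp [phi_eq_min, Int.fract_one]
  · rw [phi_eq_min, Int.fract_eq_self.mpr ⟨h0, h⟩]

def cI (q ρ : ℕ) : ℤ := if 2*ρ+1 < q then 1 else if q < 2*ρ+1 then -1 else 0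
def pI (q ρ : ℕ) : ℤ := if 2*ρ+1 = q then 1 else 0

lemma keyB (q ρ : ℕ) (hq : 2 ≤ q) (hρ : ρ < q) (D : ℤ) :
    nearestIntDist (D + ((ρ:ℝ)+1)/q) - nearestIntDist (D + (ρ:ℝ)/q) = (cI q ρ : ℝ)/q := by
  have hq0 : (0:ℝ) < q := by exact_mod_cast Nat.lt_of_lt_of_le Nat.zero_lt_two hq
  have hρq : (ρ:ℝ) + 1 ≤ q := by exact_mod_cast hρ
  rw [phi_int_add, phi_int_add,
    phi_eval (by positivity) (by rw [div_le_one hq0]; linarith),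
    phi_eval (by positivity) (by rw [div_le_one hq0]; linarith)]
  rcases lt_trichotomy (2*ρ+1) q with h | h | h
  · have hc : cI q ρ = 1 := by rw [cI, if_pos h]
    have h' : (2*(ρ:ℝ)+2) ≤ q := by exact_mod_cast Nat.succ_le_of_lt h
    have h1 : ((ρ:ℝ)+1)/q ≤ 1/2 := by rw [div_le_div_iff₀ hq0 two_pos]; linarith
    have h2 : (ρ:ℝ)/q ≤ 1/2 := by rw [div_le_div_iff₀ hq0 two_pos]; linarith
    rw [hc, min_eq_left (by linarith), min_eq_left (by linarith)]
    field_simp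
    push_cast; ring
  · have hc : cI q ρ = 0 := by rw [cI, if_neg (by omega), if_neg (by omega)]
    have h' : (2*(ρ:ℝ)+1) = q := by exact_mod_cast h
    have h1 : 1/2 ≤ ((ρ:ℝ)+1)/q := by rw [div_le_div_iff₀ two_pos hq0]; linarith
    have h2 : (ρ:ℝ)/q ≤ 1/2 := by rw [div_le_div_iff₀ hq0 two_pos]; linarith
    rw [hc, min_eq_right (by linarith), min_eq_left (by linarith)]
    field_simp; push_cast; linarith
  · have hc : cI q ρ = -1 := by rw [cI, if_neg (by omega), if_pos h]
    have h'' : (q:ℝ) ≤ 2*ρ := by exact_mod_cast (by omega : q ≤ 2*ρ)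
    have h1 : 1/2 ≤ ((ρ:ℝ)+1)/q := by rw [div_le_div_iff₀ two_pos hq0]; linarith
    have h2 : 1/2 ≤ (ρ:ℝ)/q := by rw [div_le_div_iff₀ two_pos hq0]; linarith
    rw [hc, min_eq_right (by linarith), min_eq_right (by linarith)]
    push_cast
    field_simp
    ring

lemma keyM (q ρ : ℕ) (hq : 2 ≤ q) (hρ : ρ < q) (D : ℤ) :
    nearestIntDist (D + (2*(ρ:ℝ)+1)/(2*q)) - nearestIntDist (D + (ρ:ℝ)/q)
      = ((cI q ρ : ℝ) + (pI q ρ : ℝ))/(2*q) := by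
  have hq0 : (0:ℝ) < q := by exact_mod_cast Nat.lt_of_lt_of_le Nat.zero_lt_two hq
  have h2q0 : (0:ℝ) < 2*q := by linarith
  have hρq : (ρ:ℝ) + 1 ≤ q := by exact_mod_cast hρ
  rw [phi_int_add, phi_int_add,
    phi_eval (by positivity) (by rw [div_le_one h2q0]; linarith),
    phi_eval (by positivity) (by rw [div_le_one hq0]; linarith)]
  rcases lt_trichotomy (2*ρ+1) q with h | h | h
  · have hc : cI q ρ = 1 := by rw [cI, if_pos h]
    have hp : pI q ρ = 0 := by rw [pI, if_neg (by omega)]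
    have h' : (2*(ρ:ℝ)+2) ≤ q := by exact_mod_cast Nat.succ_le_of_lt h
    have h1 : (2*(ρ:ℝ)+1)/(2*q) ≤ 1/2 := by rw [div_le_div_iff₀ h2q0 two_pos]; linarith
    have h2 : (ρ:ℝ)/q ≤ 1/2 := by rw [div_le_div_iff₀ hq0 two_pos]; linarith
    rw [hc, hp, min_eq_left (by linarith), min_eq_left (by linarith)]
    field_simp; ring
  · have hc : cI q ρ = 0 := by rw [cI, if_neg (by omega), if_neg (by omega)]
    have hp : pI q ρ = 1 := by rw [pI, if_pos h]
    have h' : (2*(ρ:ℝ)+1) = q := by exact_mod_cast h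
    have h1 : (2*(ρ:ℝ)+1)/(2*q) ≤ 1/2 := by rw [div_le_div_iff₀ h2q0 two_pos]; linarith
    have h2 : (ρ:ℝ)/q ≤ 1/2 := by rw [div_le_div_iff₀ hq0 two_pos]; linarith
    rw [hc, hp, min_eq_left (by linarith), min_eq_left (by linarith)]
    field_simp; push_cast; linarith
  · have hc : cI q ρ = -1 := by rw [cI, if_neg (by omega), if_pos h]
    have hp : pI q ρ = 0 := by rw [pI, if_neg (by omega)]
    have h'' : (q:ℝ) ≤ 2*ρ := by exact_mod_cast (by omega : q ≤ 2*ρ)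
    have h1 : 1/2 ≤ (2*(ρ:ℝ)+1)/(2*q) := by rw [div_le_div_iff₀ two_pos h2q0]; linarith
    have h2 : 1/2 ≤ (ρ:ℝ)/q := by rw [div_le_div_iff₀ two_pos hq0]; linarith
    rw [hc, hp, min_eq_right (by linarith), min_eq_right (by linarith)]
    push_cast
    field_simp; ring


lemma cI_eq_lt {q ρ : ℕ} (h : 2*ρ+1 < q) : cI q ρ = 1 := by rw [cI, if_pos h]
lemma cI_eq_eq {q ρ : ℕ} (h : 2*ρ+1 = q) : cI q ρ = 0 := by
  rw [cI, if_neg (by omega), if_neg (by omega)]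
lemma cI_eq_gt {q ρ : ℕ} (h : q < 2*ρ+1) : cI q ρ = -1 := by
  rw [cI, if_neg (by omega), if_pos h]
lemma pI_eq_eq {q ρ : ℕ} (h : 2*ρ+1 = q) : pI q ρ = 1 := by rw [pI, if_pos h]
lemma pI_eq_ne {q ρ : ℕ} (h : 2*ρ+1 ≠ q) : pI q ρ = 0 := by rw [pI, if_neg h]

lemma transition (q qn ρ u : ℕ) (hq : 2 ≤ q) (hqn : 2 ≤ qn) (hρ : ρ < q) (hu : u < qn) :
    cI (q*qn) (qn*ρ+u) = cI q ρ + cI qn u * pI q ρ ∧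
    pI (q*qn) (qn*ρ+u) = pI q ρ * pI qn u := by
  rcases lt_trichotomy (2*ρ+1) q with h | h | h
  · have hlt : 2*(qn*ρ+u)+1 < q*qn := by nlinarith
    rw [cI_eq_lt hlt, cI_eq_lt h, pI_eq_ne (show 2*ρ+1 ≠ q by omega), pI_eq_ne (Nat.ne_of_lt hlt)]
    norm_num
  · have key : q*qn = 2*(qn*ρ)+qn := by rw [← h]; ring
    rw [pI_eq_eq h, cI_eq_eq h]
    rcases lt_trichotomy (2*u+1) qn with h2 | h2 | h2
    · have hlt : 2*(qn*ρ+u)+1 < q*qn := by rw [key]; omega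
      rw [cI_eq_lt hlt, cI_eq_lt h2, pI_eq_ne (show 2*u+1 ≠ qn by omega), pI_eq_ne (Nat.ne_of_lt hlt)]
      norm_num
    · have heq : 2*(qn*ρ+u)+1 = q*qn := by rw [key]; omega
      rw [cI_eq_eq heq, cI_eq_eq h2, pI_eq_eq h2, pI_eq_eq heq]
      norm_num
    · have hgt : q*qn < 2*(qn*ρ+u)+1 := by rw [key]; omega
      rw [cI_eq_gt hgt, cI_eq_gt h2, pI_eq_ne (show 2*u+1 ≠ qn by omega), pI_eq_ne (Nat.ne_of_gt hgt)]
      norm_num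
  · have hgt : q*qn < 2*(qn*ρ+u)+1 := by nlinarith
    rw [cI_eq_gt hgt, cI_eq_gt h, pI_eq_ne (show 2*ρ+1 ≠ q by omega), pI_eq_ne (Nat.ne_of_gt hgt)]
    norm_num


lemma straddle {f : ℝ → ℝ} {s : Set ℝ} {x d : ℝ}
    (hf : HasDerivWithinAt f d s x) {a b : ℕ → ℝ}
    (ha : ∀ n, a n ∈ s) (hb : ∀ n, b n ∈ s)
    (hax : ∀ n, a n ≤ x) (hxb : ∀ n, x ≤ b n) (hab : ∀ n, a n < b n)
    (h0 : Tendsto (fun n => b n - a n) atTop (𝓝 0)) :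
    Tendsto (fun n => (f (b n) - f (a n)) / (b n - a n)) atTop (𝓝 d) := by
  have hta' : Tendsto a atTop (𝓝 x) := by
    have h1 : Tendsto (fun n => x - (b n - a n)) atTop (𝓝 x) := by
      simpa using tendsto_const_nhds.sub h0
    refine tendsto_of_tendsto_of_tendsto_of_le_of_le h1 tendsto_const_nhds
      (fun n => by have := hxb n; linarith) (fun n => hax n)
  have htb' : Tendsto b atTop (𝓝 x) := by
    have h1 : Tendsto (fun n => x + (b n - a n)) atTop (𝓝 x) := by
      simpa using tendsto_const_nhds.add h0
    refine tendsto_of_tendsto_of_tendsto_of_le_of_le tendsto_const_nhds h1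
      (fun n => hxb n) (fun n => by have := hax n; linarith)
  have hta : Tendsto a atTop (𝓝[s] x) :=
    tendsto_nhdsWithin_iff.mpr ⟨hta', Eventually.of_forall ha⟩
  have htb : Tendsto b atTop (𝓝[s] x) :=
    tendsto_nhdsWithin_iff.mpr ⟨htb', Eventually.of_forall hb⟩
  have ho := hasDerivWithinAt_iff_isLittleO.mp hf
  rw [Metric.tendsto_atTop]
  intro ε hε
  have hε3 : 0 < ε/3 := by linarith
  have hev := (htb.eventually (ho.def hε3)).and (hta.eventually (ho.def hε3))
  rw [eventually_atTop] at hev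
  obtain ⟨N, hN⟩ := hev
  refine ⟨N, fun n hn => ?_⟩
  obtain ⟨h1, h2⟩ := hN n hn
  have hd : 0 < b n - a n := by have := hab n; linarith
  rw [Real.dist_eq]
  have e1 : (f (b n) - f (a n)) / (b n - a n) - d
      = ((f (b n) - f x - (b n - x) • d) - (f (a n) - f x - (a n - x) • d)) / (b n - a n) := by
    field_simp
    ring
  rw [e1, abs_div, abs_of_pos hd, div_lt_iff₀ hd]
  have hb1 : ‖b n - x‖ ≤ b n - a n := by
    rw [Real.norm_eq_abs, abs_of_nonneg (by have := hxb n; linarith)]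
    have := hax n; linarith
  have ha1 : ‖a n - x‖ ≤ b n - a n := by
    rw [Real.norm_eq_abs, abs_of_nonpos (by have := hax n; linarith)]
    have := hxb n; linarith
  calc |f (b n) - f x - (b n - x) • d - (f (a n) - f x - (a n - x) • d)|
      ≤ ‖f (b n) - f x - (b n - x) • d‖ + ‖f (a n) - f x - (a n - x) • d‖ := abs_sub _ _
    _ ≤ ε/3 * ‖b n - x‖ + ε/3 * ‖a n - x‖ := add_le_add h1 h2
    _ ≤ ε/3 * (b n - a n) + ε/3 * (b n - a n) := by
        gcongr
    _ < ε * (b n - a n) := by nlinarith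


lemma phi_natCast (n : ℕ) : nearestIntDist (n : ℝ) = 0 := by
  rw [phi_eq_min, Int.fract_natCast]; simp

lemma phi_nonneg (t : ℝ) : 0 ≤ nearestIntDist t := abs_nonneg _
lemma phi_le_half (t : ℝ) : nearestIntDist t ≤ 1/2 := abs_sub_round t

lemma phi_half_odd (M : ℕ) : nearestIntDist ((2*(M:ℝ)+1)/2) = 1/2 := by
  have h : (2*(M:ℝ)+1)/2 = (M:ℤ) + 1/2 := by push_cast; ring
  rw [h, phi_eq_min, Int.fract_intCast_add,
    Int.fract_eq_self.mpr (by norm_num : (0:ℝ) ≤ 1/2 ∧ (1/2:ℝ) < 1)]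
  norm_num

noncomputable def Fs (r : ℕ → ℕ) (w : ℕ → ℝ) (y : ℝ) : ℝ :=
  ∑' n, w n / r n * nearestIntDist (r n * y)

noncomputable def Tail (r : ℕ → ℕ) (w : ℕ → ℝ) (N : ℕ) (y : ℝ) : ℝ :=
  ∑' i, w (i+N) / r (i+N) * nearestIntDist (r (i+N) * y)

noncomputable def Bt (r : ℕ → ℕ) (w : ℕ → ℝ) (N : ℕ) : ℝ :=
  ∑' i, w (i+N) * ((r N : ℝ) / r (i+N)) * (if 2 ∣ r (i+N) / r N then 0 else 1)

section series
variable {r : ℕ → ℕ} {w : ℕ → ℝ}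

lemma summable_main (hw : Summable (fun n => |w n| / (r n : ℝ))) (y : ℝ) :
    Summable (fun n => w n / r n * nearestIntDist (r n * y)) := by
  refine Summable.of_norm_bounded (hw.mul_right (1/2)) (fun n => ?_)
  rw [norm_mul, norm_div]
  simp only [Real.norm_eq_abs, Nat.abs_cast]
  refine mul_le_mul (le_refl _) ?_ (abs_nonneg _) (by positivity)
  rw [abs_of_nonneg (phi_nonneg _)]; exact phi_le_half _

lemma summable_tail (hw : Summable (fun n => |w n| / (r n : ℝ))) (N : ℕ) (y : ℝ) :
    Summable (fun i => w (i+N) / r (i+N) * nearestIntDist (r (i+N) * y)) :=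
  (summable_nat_add_iff N).mpr (summable_main hw y)

lemma summable_B (hw : Summable (fun n => |w n| / (r n : ℝ))) (N : ℕ) :
    Summable (fun i => w (i+N) * ((r N : ℝ) / r (i+N)) * (if 2 ∣ r (i+N) / r N then 0 else 1)) := by
  refine Summable.of_norm_bounded (((summable_nat_add_iff N).mpr hw).mul_left (r N : ℝ)) (fun i => ?_)
  rw [norm_mul, norm_mul]
  simp only [Real.norm_eq_abs, Nat.abs_cast]
  have h1 : |if 2 ∣ r (i+N) / r N then (0:ℝ) else 1| ≤ 1 := by split <;> norm_num
  have h2 : |(r N : ℝ) / r (i+N)| ≤ (r N : ℝ) / r (i+N) := le_of_eq (abs_of_nonneg (by positivity))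
  calc |w (i+N)| * |(r N:ℝ)/ r (i+N)| * |if 2 ∣ r (i+N) / r N then (0:ℝ) else 1|
      ≤ |w (i+N)| * ((r N:ℝ)/ r (i+N)) * 1 := by
        refine mul_le_mul (mul_le_mul (le_refl _) h2 (abs_nonneg _) (abs_nonneg _)) h1 (abs_nonneg _) ?_
        positivity
    _ = (r N : ℝ) * (|w (i+N)| / r (i+N)) := by ring

lemma Fs_decomp (hw : Summable (fun n => |w n| / (r n : ℝ))) (N : ℕ) (y : ℝ) :
    Fs r w y = (∑ m ∈ Finset.range N, w m / r m * nearestIntDist (r m * y)) + Tail r w N y :=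
  (Summable.sum_add_tsum_nat_add N (summable_main hw y)).symm

lemma tail_grid (hr0 : ∀ i, 0 < r i) (N j : ℕ) (hd : ∀ i, r N ∣ r (i+N)) :
    Tail r w N ((j : ℝ) / r N) = 0 := by
  rw [Tail]
  convert tsum_zero with i
  obtain ⟨c, hc⟩ := hd i
  have hrN : (r N : ℝ) ≠ 0 := by exact_mod_cast (hr0 N).ne'
  have : (r (i+N) : ℝ) * ((j:ℝ)/ r N) = ((c * j : ℕ) : ℝ) := by
    rw [hc]; push_cast; field_simp
  rw [this, phi_natCast, mul_zero]

lemma tail_mid (hr0 : ∀ i, 0 < r i) (N j : ℕ) (hd : ∀ i, r N ∣ r (i+N)) :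
    2 * (r N : ℝ) * Tail r w N ((2*(j:ℝ)+1) / (2 * r N)) = Bt r w N := by
  rw [Tail, Bt, ← tsum_mul_left]
  apply tsum_congr
  intro i
  obtain ⟨c, hc⟩ := hd i
  have hrN : (r N : ℝ) ≠ 0 := by exact_mod_cast (hr0 N).ne'
  have hrc : (0:ℕ) < c := by
    rcases Nat.eq_zero_or_pos c with h | h
    · exfalso; rw [h, mul_zero] at hc; exact (hr0 (i+N)).ne' hc
    · exact h
  have hq : r (i+N) / r N = c := by rw [hc, Nat.mul_div_cancel_left _ (hr0 N)]
  rcases Nat.even_or_odd c with ⟨c', hce⟩ | ⟨c', hco⟩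
  · have hind : (if 2 ∣ r (i+N) / r N then (0:ℝ) else 1) = 0 := by
      rw [if_pos]; rw [hq, hce]; exact ⟨c', by ring⟩
    have harg : (r (i+N) : ℝ) * ((2*(j:ℝ)+1)/(2 * r N)) = ((c' * (2*j+1) : ℕ) : ℝ) := by
      rw [hc, hce]; push_cast; field_simp; ring
    rw [harg, phi_natCast, hind]
    ring
  · have hind : (if 2 ∣ r (i+N) / r N then (0:ℝ) else 1) = 1 := by
      rw [if_neg]; rw [hq, hco]; omega
    have harg : (r (i+N) : ℝ) * ((2*(j:ℝ)+1)/(2 * r N)) = (2*((2*c'*j + c' + j : ℕ):ℝ)+1)/2 := by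
      rw [hc, hco]; push_cast; field_simp; ring
    rw [harg, phi_half_odd, hind]
    have hrc' : (r (i+N) : ℝ) ≠ 0 := by exact_mod_cast (hr0 (i+N)).ne'
    field_simp

lemma div_chain {A B C : ℕ} (hC : 0 < C) (hB : 0 < B) (hCB : C ∣ B) (hBA : B ∣ A) :
    A / C = (A / B) * (B / C) := by
  obtain ⟨s, hs⟩ := hCB
  obtain ⟨t, ht⟩ := hBA
  subst hs ht
  have h1 : C*s*t/(C*s) = t := Nat.mul_div_cancel_left t hB
  have h2 : C*s/C = s := Nat.mul_div_cancel_left s hC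
  have h3 : C*s*t/C = s*t := by rw [mul_assoc]; exact Nat.mul_div_cancel_left _ hC
  rw [h1, h2, h3, mul_comm]

lemma B_rec (hw : Summable (fun n => |w n| / (r n : ℝ))) (hr0 : ∀ i, 0 < r i) (N : ℕ)
    (hd1 : r N ∣ r (N+1)) (hdall : ∀ i, r (N+1) ∣ r (i+(N+1))) :
    Bt r w N = w N + (if 2 ∣ r (N+1) / r N then 0 else Bt r w (N+1) / (r (N+1) / r N : ℕ)) := by
  have hsum := summable_B hw N
  rw [Bt, Summable.tsum_eq_zero_add hsum]
  congr 1
  · simp [Nat.div_self (hr0 N), (by norm_num : ¬ (2 ∣ 1))]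
    rw [div_self (by exact_mod_cast (hr0 N).ne' : (r N : ℝ) ≠ 0)]
    ring
  · set q := r (N+1) / r N with hqdef
    have hq0 : 0 < q := Nat.div_pos (Nat.le_of_dvd (hr0 (N+1)) hd1) (hr0 N)
    have hqmul : r N * q = r (N+1) := Nat.mul_div_cancel' hd1
    have hchain : ∀ i, r (i+1+N) / r N = (r (i+1+N) / r (N+1)) * q := by
      intro i
      have : i+1+N = i+(N+1) := by omega
      rw [this]
      exact div_chain (hr0 N) (hr0 (N+1)) hd1 (hdall i)
    rcases Nat.even_or_odd q with hqe | hqo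
    · have hq2 : q % 2 = 0 := Nat.even_iff.mp hqe
      rw [if_pos (by omega : 2 ∣ q)]
      convert tsum_zero with i
      rw [if_pos, mul_zero]
      rw [hchain i]
      exact Dvd.dvd.mul_left (by omega : 2 ∣ q) _
    · have hq1 : q % 2 = 1 := Nat.odd_iff.mp hqo
      rw [if_neg (by omega : ¬ 2 ∣ q)]
      rw [Bt, ← tsum_div_const]
      apply tsum_congr
      intro i
      have hidx : i+1+N = i+(N+1) := by omega
      have hind : (if 2 ∣ r (i+1+N) / r N then (0:ℝ) else 1)
          = (if 2 ∣ r (i+(N+1)) / r (N+1) then (0:ℝ) else 1) := by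
        rw [hchain i, hidx]
        congr 1
        simp only [eq_iff_iff]
        constructor
        · intro h
          rcases (Nat.Prime.dvd_mul Nat.prime_two).mp h with h' | h'
          · exact h'
          · exfalso; omega
        · intro h; exact Dvd.dvd.mul_right h _
      rw [hind, hidx]
      have hr1 : (r (i+(N+1)) : ℝ) ≠ 0 := by exact_mod_cast (hr0 _).ne'
      have hqR : (q : ℝ) ≠ 0 := by exact_mod_cast hq0.ne'
      have hrr : (r N : ℝ) = (r (N+1) : ℝ) / q := by
        rw [eq_div_iff hqR]; exact_mod_cast hqmul
      rw [hrr]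
      field_simp


section identities
variable {r : ℕ → ℕ} {w : ℕ → ℝ}

lemma delta_id (hw : Summable (fun n => |w n| / (r n : ℝ))) (hr0 : ∀ i, 0 < r i)
    (hdvd : ∀ m i, r m ∣ r (i + m)) (hq2 : ∀ m n, m < n → 2 ≤ r n / r m)
    (n k : ℕ) :
    (r n : ℝ) * (Fs r w (((k:ℝ)+1)/r n) - Fs r w ((k:ℝ)/r n))
      = ∑ m ∈ Finset.range n, w m * (cI (r n / r m) (k % (r n / r m)) : ℝ) := by
  have hb : ((k:ℝ)+1)/r n = ((k+1 : ℕ) : ℝ)/ r n := by push_cast; ring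
  rw [Fs_decomp hw n, Fs_decomp hw n, hb, tail_grid hr0 n (k+1) (hdvd n), ← hb,
    tail_grid hr0 n k (hdvd n), add_zero, add_zero, ← Finset.sum_sub_distrib, Finset.mul_sum]
  apply Finset.sum_congr rfl
  intro m hm
  have hmn : m < n := Finset.mem_range.mp hm
  set q := r n / r m with hqdef
  set ρ := k % q with hρdef
  set D := k / q with hDdef
  have hq : 2 ≤ q := hq2 m n hmn
  have hqn0 : 0 < q := by omega
  have hρ : ρ < q := Nat.mod_lt _ hqn0
  have hrm : (r m : ℝ) * q = r n := by
    exact_mod_cast congrArg (Nat.cast : ℕ → ℝ) (Nat.mul_div_cancel' (by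
      have := hdvd m (n - m)
      rwa [Nat.sub_add_cancel hmn.le] at this))
  have hq0R : (q:ℝ) ≠ 0 := by positivity
  have hrm0 : (r m:ℝ) ≠ 0 := by exact_mod_cast (hr0 m).ne'
  have hrn0 : (r n:ℝ) ≠ 0 := by exact_mod_cast (hr0 n).ne'
  have hkeq : (k:ℝ) = q * D + ρ := by
    exact_mod_cast congrArg (Nat.cast : ℕ → ℝ) (Nat.div_add_mod k q).symm
  have harga : (r m:ℝ) * ((k:ℝ)/r n) = ((D:ℤ):ℝ) + (ρ:ℝ)/q := by
    rw [← hrm, hkeq]; push_cast; field_simp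
  have hargb : (r m:ℝ) * (((k:ℝ)+1)/r n) = ((D:ℤ):ℝ) + ((ρ:ℝ)+1)/q := by
    rw [← hrm, hkeq]; push_cast; field_simp; ring
  have hv : nearestIntDist ((r m:ℝ) * (((k:ℝ)+1)/r n)) - nearestIntDist ((r m:ℝ) * ((k:ℝ)/r n))
      = (cI q ρ : ℝ)/q := by
    rw [harga, hargb]; exact keyB q ρ hq hρ D
  rw [← mul_sub, hv, ← hrm]
  field_simp
  try ring

lemma L_id (hw : Summable (fun n => |w n| / (r n : ℝ))) (hr0 : ∀ i, 0 < r i)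
    (hdvd : ∀ m i, r m ∣ r (i + m)) (hq2 : ∀ m n, m < n → 2 ≤ r n / r m)
    (n k : ℕ) :
    2 * (r n : ℝ) * (Fs r w ((2*(k:ℝ)+1)/(2*r n)) - Fs r w ((k:ℝ)/r n))
      = (∑ m ∈ Finset.range n, w m * ((cI (r n / r m) (k % (r n / r m)) : ℝ)
          + (pI (r n / r m) (k % (r n / r m)) : ℝ))) + Bt r w n := by
  rw [Fs_decomp hw n, Fs_decomp hw n, tail_grid hr0 n k (hdvd n), add_zero]
  have e1 : ∀ S T A : ℝ, 2 * (r n:ℝ) * (S + T - A) = 2 * (r n:ℝ) * (S - A) + 2 * (r n:ℝ) * T := by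
    intros; ring
  rw [e1, tail_mid hr0 n k (hdvd n)]
  congr 1
  rw [← Finset.sum_sub_distrib, Finset.mul_sum]
  apply Finset.sum_congr rfl
  intro m hm
  have hmn : m < n := Finset.mem_range.mp hm
  set q := r n / r m with hqdef
  set ρ := k % q with hρdef
  set D := k / q with hDdef
  have hq : 2 ≤ q := hq2 m n hmn
  have hqn0 : 0 < q := by omega
  have hρ : ρ < q := Nat.mod_lt _ hqn0
  have hrm : (r m : ℝ) * q = r n := by
    exact_mod_cast congrArg (Nat.cast : ℕ → ℝ) (Nat.mul_div_cancel' (by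
      have := hdvd m (n - m)
      rwa [Nat.sub_add_cancel hmn.le] at this))
  have hq0R : (q:ℝ) ≠ 0 := by positivity
  have hrm0 : (r m:ℝ) ≠ 0 := by exact_mod_cast (hr0 m).ne'
  have hrn0 : (r n:ℝ) ≠ 0 := by exact_mod_cast (hr0 n).ne'
  have hkeq : (k:ℝ) = q * D + ρ := by
    exact_mod_cast congrArg (Nat.cast : ℕ → ℝ) (Nat.div_add_mod k q).symm
  have harga : (r m:ℝ) * ((k:ℝ)/r n) = ((D:ℤ):ℝ) + (ρ:ℝ)/q := by
    rw [← hrm, hkeq]; push_cast; field_simp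
  have hargm : (r m:ℝ) * ((2*(k:ℝ)+1)/(2*r n)) = ((D:ℤ):ℝ) + (2*(ρ:ℝ)+1)/(2*q) := by
    rw [← hrm, hkeq]; push_cast; field_simp; ring
  have hv : nearestIntDist ((r m:ℝ) * ((2*(k:ℝ)+1)/(2*r n))) - nearestIntDist ((r m:ℝ) * ((k:ℝ)/r n))
      = ((cI q ρ : ℝ) + (pI q ρ : ℝ))/(2*q) := by
    rw [harga, hargm]; exact keyM q ρ hq hρ D
  rw [← mul_sub, hv, ← hrm]
  field_simp
  try ring
end identities
lemma my_div_one_div (a b : ℝ) : a / (1 / b) = a * b := by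
  rcases eq_or_ne b 0 with h | h
  · simp [h]
  · field_simp

set_option maxHeartbeats 2000000 in
theorem stmt17 (r : ℕ → ℕ) (hrmono : StrictMono r) (hr0 : r 0 = 1)
    (hrdvd : ∀ n, r n ∣ r (n + 1)) (w : ℕ → ℝ)
    (hw : Summable (fun n => |w n| / (r n : ℝ)))
    (hwc0 : ¬ Tendsto w atTop (𝓝 0)) :
    ∀ x ∈ Set.Icc (0 : ℝ) 1,
      ¬ DifferentiableWithinAt ℝ
        (fun y => ∑' n : ℕ, w n / (r n : ℝ) * nearestIntDist ((r n : ℝ) * y))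
        (Set.Icc 0 1) x := by
  intro x hx hdiff
  obtain ⟨hx0, hx1⟩ := hx
  have hrpos : ∀ i, 0 < r i := by
    intro i
    have h1 : r 0 ≤ r i := hrmono.monotone (Nat.zero_le i)
    omega
  have hrposR : ∀ i, (0:ℝ) < r i := fun i => by exact_mod_cast hrpos i
  have hdvdall : ∀ m i, r m ∣ r (i + m) := by
    intro m i
    induction i with
    | zero => simp
    | succ j ih =>
        refine dvd_trans ih ?_
        have := hrdvd (j + m)
        rwa [show j + m + 1 = j + 1 + m by omega] at this
  have hle : ∀ m n, m ≤ n → r m ∣ r n := by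
    intro m n h
    have := hdvdall m (n - m)
    rwa [Nat.sub_add_cancel h] at this
  have hq2 : ∀ m n, m < n → 2 ≤ r n / r m := by
    intro m n h
    obtain ⟨cc, hc⟩ := hle m n h.le
    have h1 : r m < r n := hrmono h
    rw [hc, Nat.mul_div_cancel_left _ (hrpos m)]
    by_contra hcon
    push_neg at hcon
    have h2 : r m * cc ≤ r m * 1 := Nat.mul_le_mul_left _ (by omega)
    omega
  -- grid index
  set k : ℕ → ℕ := fun n => min (⌊(r n : ℝ) * x⌋.toNat) (r n - 1) with hkdef
  have hk_lt : ∀ n, k n < r n := by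
    intro n
    have := hrpos n
    have : min (⌊(r n : ℝ) * x⌋.toNat) (r n - 1) ≤ r n - 1 := min_le_right _ _
    simp only [hkdef]
    omega
  have hfl_nonneg : ∀ n, 0 ≤ ⌊(r n : ℝ) * x⌋ := fun n => Int.floor_nonneg.mpr (by positivity)
  have hkx : ∀ n, (k n : ℝ) ≤ (r n : ℝ) * x := by
    intro n
    have h1 : (k n : ℕ) ≤ ⌊(r n : ℝ) * x⌋.toNat := min_le_left _ _
    have h2 : ((⌊(r n : ℝ) * x⌋.toNat : ℕ) : ℝ) = (⌊(r n : ℝ) * x⌋ : ℝ) := by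
      exact_mod_cast congrArg (Int.cast : ℤ → ℝ) (Int.toNat_of_nonneg (hfl_nonneg n))
    calc (k n : ℝ) ≤ (⌊(r n : ℝ) * x⌋.toNat : ℝ) := by exact_mod_cast h1
      _ = (⌊(r n : ℝ) * x⌋ : ℝ) := h2
      _ ≤ (r n : ℝ) * x := Int.floor_le _
  have hkx' : ∀ n, (r n : ℝ) * x ≤ (k n : ℝ) + 1 := by
    intro n
    rcases lt_or_eq_of_le hx1 with h1 | h1
    · -- x < 1 : k n = toNat floor
      have hflt : ⌊(r n : ℝ) * x⌋ < (r n : ℤ) := by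
        apply Int.floor_lt.mpr
        push_cast
        nlinarith [hrposR n]
      have hkeq : (k n : ℕ) = ⌊(r n : ℝ) * x⌋.toNat := by
        simp only [hkdef]
        have := hrpos n
        omega
      have h2 : ((⌊(r n : ℝ) * x⌋.toNat : ℕ) : ℝ) = (⌊(r n : ℝ) * x⌋ : ℝ) := by
        exact_mod_cast congrArg (Int.cast : ℤ → ℝ) (Int.toNat_of_nonneg (hfl_nonneg n))
      rw [hkeq, h2]
      have := Int.lt_floor_add_one ((r n : ℝ) * x)
      linarith
    · -- x = 1
      subst h1
      have hkeq : (k n : ℕ) = r n - 1 := by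
        have h4 : ⌊(r n : ℝ) * 1⌋.toNat = r n := by
          rw [mul_one]
          norm_num
        simp only [hkdef, h4]
        have := hrpos n
        omega
      rw [hkeq, mul_one]
      have h5 := hrpos n
      have h6 : ((r n - 1 : ℕ) : ℝ) = (r n : ℝ) - 1 := by
        have h3 : (1:ℕ) ≤ r n := h5
        push_cast [h3]
        ring
      rw [h6]
      linarith

  -- straddle points
  set a : ℕ → ℝ := fun n => (k n : ℝ) / r n with hadef
  set b : ℕ → ℝ := fun n => ((k n : ℝ) + 1) / r n with hbdef
  set mid : ℕ → ℝ := fun n => (2*(k n : ℝ) + 1) / (2 * r n) with hmdef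
  have hax : ∀ n, a n ≤ x := by
    intro n
    rw [hadef, div_le_iff₀ (hrposR n)]
    have := hkx n; linarith
  have hxb : ∀ n, x ≤ b n := by
    intro n
    rw [hbdef, le_div_iff₀ (hrposR n)]
    have := hkx' n; linarith
  have hamem : ∀ n, a n ∈ Set.Icc (0:ℝ) 1 := by
    intro n
    constructor
    · rw [hadef]; positivity
    · rw [hadef, div_le_one (hrposR n)]
      have : (k n : ℝ) + 1 ≤ r n := by exact_mod_cast hk_lt n
      linarith
  have hbmem : ∀ n, b n ∈ Set.Icc (0:ℝ) 1 := by
    intro n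
    constructor
    · rw [hbdef]; positivity
    · rw [hbdef, div_le_one (hrposR n)]
      exact_mod_cast hk_lt n
  have hab : ∀ n, a n < b n := by
    intro n
    rw [hadef, hbdef, div_lt_div_iff₀ (hrposR n) (hrposR n)]
    nlinarith [hrposR n]
  have hamid : ∀ n, a n < mid n := by
    intro n
    rw [hadef, hmdef, div_lt_div_iff₀ (hrposR n) (by have := hrposR n; linarith)]
    nlinarith [hrposR n]
  have hmidb : ∀ n, mid n < b n := by
    intro n
    rw [hbdef, hmdef, div_lt_div_iff₀ (by have := hrposR n; linarith) (hrposR n)]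
    nlinarith [hrposR n]
  have hmmem : ∀ n, mid n ∈ Set.Icc (0:ℝ) 1 :=
    fun n => ⟨le_trans (hamem n).1 (hamid n).le, le_trans (hmidb n).le (hbmem n).2⟩
  -- nesting
  have hnest : ∀ n, (r (n+1)/r n) * k n ≤ k (n+1) ∧ k (n+1) + 1 ≤ (r (n+1)/r n) * (k n + 1) := by
    intro n
    set q := r (n+1) / r n with hqd
    have hq2' : 2 ≤ q := hq2 n (n+1) (Nat.lt_succ_self n)
    have hqm : r n * q = r (n+1) := Nat.mul_div_cancel' (hrdvd n)
    constructor
    · -- q * k n ≤ k (n+1) : via reals, a n ≤ a (n+1) essentially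
      have h1 : ((q * k n : ℕ) : ℝ) ≤ (r (n+1) : ℝ) * x := by
        push_cast
        have h2 : (r n : ℝ) * q = r (n+1) := by exact_mod_cast hqm
        have := hkx n
        calc (q:ℝ) * k n ≤ (q:ℝ) * ((r n : ℝ) * x) := by
              apply mul_le_mul_of_nonneg_left (hkx n) (by positivity)
          _ = (r (n+1) : ℝ) * x := by rw [← h2]; ring
      -- k (n+1) ≥ any nat below r(n+1) x, need: q*k n ≤ k (n+1)
      -- q * k n ≤ floor, and q * k n ≤ r(n+1) - 1
      have h3 : (q * k n : ℕ) ≤ ⌊(r (n+1) : ℝ) * x⌋.toNat := by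
        have h4 : ((q * k n : ℕ) : ℤ) ≤ ⌊(r (n+1) : ℝ) * x⌋ := Int.le_floor.mpr (by exact_mod_cast h1)
        omega
      have h5 : q * k n ≤ r (n+1) - 1 := by
        have h6 : q * (k n + 1) ≤ q * (r n) := Nat.mul_le_mul_left _ (hk_lt n)
        have h6' : q * k n + q ≤ q * r n := by
          calc q * k n + q = q * (k n + 1) := by ring
            _ ≤ q * r n := h6
        have h7 : q * r n = r (n+1) := by rw [mul_comm]; exact hqm
        omega
      exact le_min h3 h5
    · -- k(n+1) + 1 ≤ q (k n + 1)
      rcases lt_or_eq_of_le hx1 with hxlt | hxeq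
      · have hkeq : (k (n+1) : ℕ) = ⌊(r (n+1) : ℝ) * x⌋.toNat := by
          have hflt : ⌊(r (n+1) : ℝ) * x⌋ < (r (n+1) : ℤ) := by
            apply Int.floor_lt.mpr
            push_cast
            nlinarith [hrposR (n+1)]
          simp only [hkdef]
          have := hrpos (n+1)
          omega
        -- floor(r(n+1) x) < q (k n + 1)
        have hstrict : (r n : ℝ) * x < (k n : ℝ) + 1 := by
          -- strict since x < 1
          have hflt : ⌊(r n : ℝ) * x⌋ < (r n : ℤ) := by
            apply Int.floor_lt.mpr
            push_cast
            nlinarith [hrposR n]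
          have hkeqn : (k n : ℕ) = ⌊(r n : ℝ) * x⌋.toNat := by
            simp only [hkdef]
            have := hrpos n
            omega
          have h2 : ((⌊(r n : ℝ) * x⌋.toNat : ℕ) : ℝ) = (⌊(r n : ℝ) * x⌋ : ℝ) := by
            exact_mod_cast congrArg (Int.cast : ℤ → ℝ) (Int.toNat_of_nonneg (hfl_nonneg n))
          rw [hkeqn, h2]
          exact Int.lt_floor_add_one _
        have h8 : (r (n+1) : ℝ) * x < ((q * (k n + 1) : ℕ) : ℝ) := by
          have h2 : (r n : ℝ) * q = r (n+1) := by exact_mod_cast hqm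
          have hq0R : (0:ℝ) < q := by exact_mod_cast (by omega : 0 < q)
          have hc : ((q * (k n + 1) : ℕ) : ℝ) = (q:ℝ) * ((k n : ℝ) + 1) := by push_cast; ring
          rw [hc]
          calc (r (n+1) : ℝ) * x = (q:ℝ) * ((r n:ℝ) * x) := by rw [← h2]; ring
            _ < (q:ℝ) * ((k n : ℝ) + 1) := by
                exact mul_lt_mul_of_pos_left hstrict hq0R
        have h9 : ⌊(r (n+1) : ℝ) * x⌋ < ((q * (k n + 1) : ℕ) : ℤ) := by
          apply Int.floor_lt.mpr
          exact_mod_cast h8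
        have htn : ((k (n+1)):ℤ) = ⌊(r (n+1):ℝ)*x⌋ := by
          rw [hkeq]; exact Int.toNat_of_nonneg (hfl_nonneg (n+1))
        have h10 : ((k (n+1)):ℤ) < ((q*(k n+1):ℕ):ℤ) := htn ▸ h9
        exact Nat.succ_le_of_lt (by exact_mod_cast h10)
      · subst hxeq
        have hkeq : ∀ j, (k j : ℕ) = r j - 1 := by
          intro j
          have h4 : ⌊(r j : ℝ) * 1⌋.toNat = r j := by rw [mul_one]; norm_num
          simp only [hkdef, h4]
          have := hrpos j
          omega
        rw [hkeq, hkeq]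
        have h6 := hrpos n
        have h7 := hrpos (n+1)
        have h8 : q * r n = r (n+1) := by rw [mul_comm]; exact hqm
        have h9 : r n - 1 + 1 = r n := by omega
        rw [h9, h8]
        omega

  -- level quantities
  set Δ : ℕ → ℝ := fun n => (r n : ℝ) * (Fs r w (b n) - Fs r w (a n)) with hΔdef
  set Lh : ℕ → ℝ := fun n => 2 * (r n : ℝ) * (Fs r w (mid n) - Fs r w (a n)) with hLdef
  set cc : ℕ → ℕ → ℝ := fun m n => (cI (r n / r m) (k n % (r n / r m)) : ℝ) with hccdef
  set pp : ℕ → ℕ → ℝ := fun m n => (pI (r n / r m) (k n % (r n / r m)) : ℝ) with hppdef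
  set P : ℕ → ℝ := fun n => ∑ m ∈ Finset.range n, w m * pp m n with hPdef
  have hΔid : ∀ n, Δ n = ∑ m ∈ Finset.range n, w m * cc m n := by
    intro n
    simp only [hΔdef, hbdef, hadef, hccdef]
    exact delta_id hw hrpos hdvdall hq2 n (k n)
  have hLid : ∀ n, Lh n = (∑ m ∈ Finset.range n, w m * (cc m n + pp m n)) + Bt r w n := by
    intro n
    simp only [hLdef, hmdef, hadef, hccdef, hppdef]
    exact L_id hw hrpos hdvdall hq2 n (k n)
  -- transition facts
  have hmod : ∀ n, ∀ m, m < n → r (n+1) / r m = (r n / r m) * (r (n+1) / r n) ∧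
      k (n+1) % ((r n / r m) * (r (n+1) / r n))
        = (r (n+1) / r n) * (k n % (r n / r m)) + k (n+1) % (r (n+1) / r n) := by
    intro n m hmn
    set q := r n / r m with hqd2
    set qn := r (n+1) / r n with hqnd2
    have hqf : 2 ≤ q := hq2 m n hmn
    have hqnf : 2 ≤ qn := hq2 n (n+1) (Nat.lt_succ_self n)
    have hchain : r (n+1) / r m = qn * q :=
      div_chain (hrpos m) (hrpos n) (hle m n hmn.le) (hrdvd n)
    constructor
    · rw [hchain]; ring
    · set ρ := k n % q with hρd2
      set u := k (n+1) % qn with hud2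
      have hρf : ρ < q := Nat.mod_lt _ (by omega)
      have huf : u < qn := Nat.mod_lt _ (by omega)
      have hlow := (hnest n).1
      have hup := (hnest n).2
      rw [← hqnd2] at hlow hup
      have hueq : qn * k n + (k (n+1) - qn * k n) = k (n+1) := Nat.add_sub_cancel' hlow
      have hu2 : k (n+1) - qn * k n = u := by
        have hq1 : qn * (k n + 1) = qn * k n + qn := by ring
        have hdlt : k (n+1) - qn * k n < qn := by omega
        have h1 : u = (qn * k n + (k (n+1) - qn * k n)) % qn := by rw [hueq]
        rw [h1, Nat.mul_add_mod, Nat.mod_eq_of_lt hdlt]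
      have hD : q * (k n / q) + ρ = k n := Nat.div_add_mod (k n) q
      have hk1 : k (n+1) = (q*qn) * (k n / q) + (qn * ρ + u) := by
        calc k (n+1) = qn * k n + u := by rw [← hu2]; exact hueq.symm
          _ = qn * (q * (k n / q) + ρ) + u := by rw [hD]
          _ = (q*qn) * (k n / q) + (qn * ρ + u) := by ring
      have hvlt : qn * ρ + u < q * qn := by
        have h1 : qn * (ρ + 1) ≤ qn * q := Nat.mul_le_mul_left _ hρf
        have h2 : qn * ρ + qn = qn * (ρ+1) := by ring
        have h3 : qn * q = q * qn := by ring
        omega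
      rw [hk1, Nat.mul_add_mod, Nat.mod_eq_of_lt hvlt]
  have htrans : ∀ n, ∀ m, m < n → cc m (n+1) = cc m n + cc n (n+1) * pp m n ∧
      pp m (n+1) = pp m n * pp n (n+1) := by
    intro n m hmn
    obtain ⟨hchain, hmodeq⟩ := hmod n m hmn
    have hqf : 2 ≤ r n / r m := hq2 m n hmn
    have hqnf : 2 ≤ r (n+1) / r n := hq2 n (n+1) (Nat.lt_succ_self n)
    have hρf : k n % (r n / r m) < r n / r m := Nat.mod_lt _ (by omega)
    have huf : k (n+1) % (r (n+1) / r n) < r (n+1) / r n := Nat.mod_lt _ (by omega)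
    have htr := transition (r n / r m) (r (n+1)/r n) (k n % (r n / r m))
      (k (n+1) % (r (n+1)/r n)) hqf hqnf hρf huf
    have hcm : r (n+1) / r m = (r n / r m) * (r (n+1) / r n) := hchain.trans (by ring)
    constructor
    · simp only [hccdef, hppdef]
      rw [hcm, hmodeq]
      exact_mod_cast congrArg (Int.cast : ℤ → ℝ) htr.1
    · simp only [hccdef, hppdef]
      rw [hcm, hmodeq]
      exact_mod_cast congrArg (Int.cast : ℤ → ℝ) htr.2
  have hΔrec : ∀ n, Δ (n+1) = Δ n + cc n (n+1) * (P n + w n) := by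
    intro n
    rw [hΔid (n+1), hΔid n, Finset.sum_range_succ]
    have hsum : ∑ m ∈ Finset.range n, w m * cc m (n+1)
        = ∑ m ∈ Finset.range n, (w m * cc m n + cc n (n+1) * (w m * pp m n)) := by
      apply Finset.sum_congr rfl
      intro m hm
      rw [(htrans n m (Finset.mem_range.mp hm)).1]; ring
    rw [hsum, Finset.sum_add_distrib, ← Finset.mul_sum]
    simp only [hPdef]
    ring
  have hPrec : ∀ n, P (n+1) = pp n (n+1) * (P n + w n) := by
    intro n
    simp only [hPdef]
    rw [Finset.sum_range_succ]
    have hsum : ∑ m ∈ Finset.range n, w m * pp m (n+1)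
        = ∑ m ∈ Finset.range n, pp n (n+1) * (w m * pp m n) := by
      apply Finset.sum_congr rfl
      intro m hm
      rw [(htrans n m (Finset.mem_range.mp hm)).2]; ring
    rw [hsum, ← Finset.mul_sum]
    ring
  have hBrec : ∀ n, Bt r w n = w n + (if 2 ∣ r (n+1) / r n then 0
      else Bt r w (n+1) / (r (n+1) / r n : ℕ)) :=
    fun n => B_rec hw hrpos n (hrdvd n) (fun i => hdvdall (n+1) i)

  -- derivative limits
  change DifferentiableWithinAt ℝ (Fs r w) (Set.Icc 0 1) x at hdiff
  have hder : HasDerivWithinAt (Fs r w) (derivWithin (Fs r w) (Set.Icc 0 1) x) (Set.Icc 0 1) x :=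
    hdiff.hasDerivWithinAt
  set d := derivWithin (Fs r w) (Set.Icc 0 1) x with hddef
  have hxmem : x ∈ Set.Icc (0:ℝ) 1 := ⟨hx0, hx1⟩
  have hrn_ge : ∀ n : ℕ, n + 1 ≤ r n := by
    intro n
    induction n with
    | zero => omega
    | succ j ih => have h2 : r j < r (j+1) := hrmono (by omega : j < j+1); omega
  have hba : ∀ n, b n - a n = 1 / (r n : ℝ) := by
    intro n
    simp only [hbdef, hadef]
    have := hrposR n
    field_simp
    ring
  have hbnd : ∀ n : ℕ, 1 / (r n : ℝ) ≤ 1 / ((n:ℝ) + 1) := by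
    intro n
    apply one_div_le_one_div_of_le (by positivity)
    exact_mod_cast hrn_ge n
  have hinv0 : Tendsto (fun n : ℕ => 1 / (r n : ℝ)) atTop (𝓝 0) := by
    refine squeeze_zero (fun n => by positivity) hbnd ?_
    exact tendsto_one_div_add_atTop_nhds_zero_nat
  have hba0 : Tendsto (fun n => b n - a n) atTop (𝓝 0) := by
    have he : (fun n => b n - a n) = fun n : ℕ => 1 / (r n : ℝ) := funext hba
    rw [he]; exact hinv0
  have hΔd : Tendsto Δ atTop (𝓝 d) := by
    have hst := straddle hder hamem hbmem hax hxb hab hba0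
    refine Tendsto.congr (fun n => ?_) hst
    rw [hba n, my_div_one_div]
    simp only [hΔdef]
    ring
  -- half-interval straddle
  set A : ℕ → ℝ := fun n => if x ≤ mid n then a n else mid n with hAdef
  set B : ℕ → ℝ := fun n => if x ≤ mid n then mid n else b n with hBdef
  have hAmem : ∀ n, A n ∈ Set.Icc (0:ℝ) 1 := by
    intro n; simp only [hAdef]; split
    · exact hamem n
    · exact hmmem n
  have hBmem : ∀ n, B n ∈ Set.Icc (0:ℝ) 1 := by
    intro n; simp only [hBdef]; split
    · exact hmmem n
    · exact hbmem n
  have hAx : ∀ n, A n ≤ x := by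
    intro n; simp only [hAdef]; split
    · exact hax n
    · next h => exact (not_le.mp h).le
  have hxB : ∀ n, x ≤ B n := by
    intro n; simp only [hBdef]; split
    · next h => exact h
    · exact hxb n
  have hAB : ∀ n, A n < B n := by
    intro n; simp only [hAdef, hBdef]; split
    · exact hamid n
    · exact hmidb n
  have hBA : ∀ n, B n - A n = 1 / (2 * (r n : ℝ)) := by
    intro n
    have := hrposR n
    simp only [hAdef, hBdef]
    split <;> (simp only [hmdef, hadef, hbdef]; field_simp; ring)
  have hBA0 : Tendsto (fun n => B n - A n) atTop (𝓝 0) := by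
    have he : (fun n => B n - A n) = fun n : ℕ => 1 / (2 * (r n : ℝ)) := funext hBA
    rw [he]
    refine squeeze_zero (fun n => by have := hrposR n; positivity) (fun n => ?_)
      tendsto_one_div_add_atTop_nhds_zero_nat
    refine le_trans ?_ (hbnd n)
    have := hrposR n
    apply one_div_le_one_div_of_le (by positivity)
    linarith
  have hQd := straddle hder hAmem hBmem hAx hxB hAB hBA0
  -- G = P + B tends to 0
  set G : ℕ → ℝ := fun n => P n + Bt r w n with hGdef
  have hGid : ∀ n, Lh n - Δ n = G n := by
    intro n
    rw [hLid n, hΔid n]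
    simp only [hGdef, hPdef]
    rw [Finset.sum_congr rfl (fun m _ => mul_add (w m) (cc m n) (pp m n)),
      Finset.sum_add_distrib]
    ring
  have hGabs : ∀ n, |G n| = |(Fs r w (B n) - Fs r w (A n))/(B n - A n) - Δ n| := by
    intro n
    rw [hBA n, my_div_one_div]
    simp only [hAdef, hBdef]
    split
    · have he : (Fs r w (mid n) - Fs r w (a n)) * (2 * (r n : ℝ)) = Lh n := by
        simp only [hLdef]; ring
      rw [he, ← hGid n]
    · have he : (Fs r w (b n) - Fs r w (mid n)) * (2 * (r n : ℝ)) = 2 * Δ n - Lh n := by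
        simp only [hLdef, hΔdef]; ring
      rw [he]
      have h2 : 2 * Δ n - Lh n - Δ n = -(G n) := by rw [← hGid n]; ring
      rw [h2, abs_neg]
  have hG0 : Tendsto G atTop (𝓝 0) := by
    have hg : Tendsto (fun n => |(Fs r w (B n) - Fs r w (A n))/(B n - A n) - Δ n|) atTop (𝓝 0) := by
      have h1 := hQd.sub hΔd
      rw [sub_self] at h1
      simpa using h1.abs
    exact squeeze_zero_norm (fun n => (hGabs n).le) hg
  -- bound |Bt (n+1)|
  have hBbd : ∀ n, |Bt r w (n+1)| ≤ 2*|G (n+1)| + 2*|G n| + |Δ (n+1) - Δ n| := by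
    intro n
    have hqnf : 2 ≤ r (n+1) / r n := hq2 n (n+1) (Nat.lt_succ_self n)
    have huf : k (n+1) % (r (n+1) / r n) < r (n+1) / r n := Nat.mod_lt _ (by omega)
    rcases eq_or_ne (2 * (k (n+1) % (r (n+1) / r n)) + 1) (r (n+1) / r n) with he | hne
    · have hpp1 : pp n (n+1) = 1 := by
        simp only [hppdef]; rw [pI_eq_eq he]; norm_num
      have hcc0 : cc n (n+1) = 0 := by
        simp only [hccdef]; rw [cI_eq_eq he]; norm_num
      have hodd : ¬ 2 ∣ r (n+1) / r n := by omega
      have hrec := hBrec n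
      rw [if_neg hodd] at hrec
      have hΔ2 : Δ (n+1) - Δ n = 0 := by rw [hΔrec n, hcc0]; ring
      have hP1 : P (n+1) = P n + w n := by rw [hPrec n, hpp1]; ring
      have hqnR : (2:ℝ) ≤ ((r (n+1) / r n : ℕ) : ℝ) := by exact_mod_cast hqnf
      have hkey : G (n+1) - G n = Bt r w (n+1) * (1 - 1/((r (n+1) / r n : ℕ) : ℝ)) := by
        simp only [hGdef]
        rw [hP1, hrec]
        field_simp
        ring
      have h12 : (1:ℝ)/2 ≤ 1 - 1/((r (n+1) / r n : ℕ) : ℝ) := by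
        have h3 : 1/((r (n+1) / r n : ℕ) : ℝ) ≤ 1/2 := by
          apply one_div_le_one_div_of_le <;> linarith
        linarith
      have habs : |Bt r w (n+1)| * (1/2) ≤ |G (n+1) - G n| := by
        rw [hkey, abs_mul, abs_of_nonneg (by linarith : (0:ℝ) ≤ 1 - 1/((r (n+1) / r n : ℕ) : ℝ))]
        exact mul_le_mul_of_nonneg_left h12 (abs_nonneg _)
      have htri : |G (n+1) - G n| ≤ |G (n+1)| + |G n| := abs_sub _ _
      have h0 : (0:ℝ) ≤ |Δ (n+1) - Δ n| := abs_nonneg _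
      linarith
    · have hpp0 : pp n (n+1) = 0 := by
        simp only [hppdef]; rw [pI_eq_ne hne]; norm_num
      have hP0 : P (n+1) = 0 := by rw [hPrec n, hpp0]; ring
      have hBG : Bt r w (n+1) = G (n+1) := by simp only [hGdef]; rw [hP0]; ring
      rw [hBG]
      have h1 := abs_nonneg (G n)
      have h2 := abs_nonneg (Δ (n+1) - Δ n)
      have h3 := abs_nonneg (G (n+1))
      linarith
  have hDD : Tendsto (fun n => Δ (n+1) - Δ n) atTop (𝓝 0) := by
    have h1 : Tendsto (fun n => Δ (n+1)) atTop (𝓝 d) := hΔd.comp (tendsto_add_atTop_nat 1)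
    simpa using h1.sub hΔd
  have hG1 : Tendsto (fun n => G (n+1)) atTop (𝓝 0) := hG0.comp (tendsto_add_atTop_nat 1)
  have hBs : Tendsto (fun n => Bt r w (n+1)) atTop (𝓝 0) := by
    refine squeeze_zero_norm hBbd ?_
    have h1 : Tendsto (fun n => 2*|G (n+1)| + 2*|G n| + |Δ (n+1) - Δ n|) atTop
        (𝓝 (2*|(0:ℝ)| + 2*|(0:ℝ)| + |(0:ℝ)|)) :=
      ((hG1.abs.const_mul 2).add (hG0.abs.const_mul 2)).add hDD.abs
    simpa using h1
  have hBt0 : Tendsto (Bt r w) atTop (𝓝 0) := (tendsto_add_atTop_iff_nat 1).mp hBs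
  have hwb : ∀ n, ‖w n‖ ≤ |Bt r w n| + |Bt r w (n+1)| := by
    intro n
    have h1 : w n = Bt r w n - (if 2 ∣ r (n+1)/r n then 0
        else Bt r w (n+1) / (r (n+1)/r n : ℕ)) := by
      rw [hBrec n]; ring
    rw [Real.norm_eq_abs, h1]
    refine le_trans (abs_sub _ _) ?_
    refine add_le_add le_rfl ?_
    split
    · rw [abs_zero]; exact abs_nonneg _
    · rw [abs_div]
      have hqnf : 2 ≤ r (n+1) / r n := hq2 n (n+1) (Nat.lt_succ_self n)
      have h2 : (1:ℝ) ≤ |((r (n+1) / r n : ℕ) : ℝ)| := by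
        rw [Nat.abs_cast]; exact_mod_cast by omega
      calc |Bt r w (n+1)| / |((r (n+1) / r n : ℕ) : ℝ)| ≤ |Bt r w (n+1)| / 1 := by
            apply div_le_div_of_nonneg_left ?_ ?_ h2
            · exact abs_nonneg _
            · linarith
        _ = |Bt r w (n+1)| := by ring
  have hw0 : Tendsto w atTop (𝓝 0) := by
    refine squeeze_zero_norm hwb ?_
    have h1 := hBt0.abs.add hBs.abs
    simpa using h1
  exact hwc0 hw0
end series
end
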